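/- arXiv:1708.01512 — 10 statements merged into one kernel-verified Lean document; each statement's English description precedes it below -/
import Mathlib

section
/- Let f and g be real analytic functions on [-1,1] and consider the Abel equation x'(t) = f(t)x(t)^3 + g(t)x(t)^2 on [-1,1]. If this equation has a center at x = 0, then the moments m_k = ∫_{-1}^1 f(t) (G(t))^k dt vanish for k = 0, 1, 2, where G(t) = ∫_{-1}^t g(s) ds. -/
/-!
Along a positive solution `x`, the function `u = 1/x + G` satisfies `u' = -f x`, hence
`(u²)' = -2 f (1 + G x)`. Let `x` be the solution with `x(-1) = ε`; the center condition gives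
`x(1) = ε`. Then `G(1) = u(1) - u(-1) = O(ε)`, so `G(1) = 0`, and now `u(1) = u(-1)` yields
`∫ f (1 + G x) = 0`. Since `x = ε + ε² G + O(ε³)` uniformly on `[-1, 1]` (the expansion of
`ε / (1 - ε G)`, which solves the equation when `f = 0`), this integral equals
`m₀ + m₁ ε + m₂ ε² + O(ε³)`, and a polynomial of degree `< 3` which is `O(ε³)` as `ε → 0⁺`
vanishes identically.
-/

open MeasureTheory intervalIntegral

/-- The Abel equation `x' = f(t) x^3 + g(t) x^2` has a center at `x = 0` on `[a, b]`:
every solution defined on all of `[a, b]` with `|x(a)|` small enough satisfies `x(a) = x(b)`. -/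
def HasCenter (f g : ℝ → ℝ) (a b : ℝ) : Prop :=
  ∃ δ > 0, ∀ x : ℝ → ℝ,
    (∀ t ∈ Set.Icc a b, HasDerivWithinAt x (f t * x t ^ 3 + g t * x t ^ 2) (Set.Icc a b) t) →
    |x a| < δ → x a = x b

open Set Filter Topology Metric Finset

theorem IsPicardLindelof.exists_eq_forall_mem_Icc_mem_closedBall_hasDerivWithinAt₀
    {E : Type*} [NormedAddCommGroup E] [NormedSpace ℝ E] [CompleteSpace E]
    {v : ℝ → E → E} {tmin tmax : ℝ} {t₀ : Icc tmin tmax} {x₀ : E} {a L K : NNReal}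
    (hv : IsPicardLindelof v t₀ x₀ a 0 L K) :
    ∃ α : ℝ → E, α t₀ = x₀ ∧ (∀ t ∈ Icc tmin tmax, α t ∈ closedBall x₀ a) ∧
      ∀ t ∈ Icc tmin tmax, HasDerivWithinAt α (v t (α t)) (Icc tmin tmax) t := by
  obtain ⟨α, hα⟩ := ODE.FunSpace.exists_isFixedPt_next hv (mem_closedBall_self le_rfl)
  refine ⟨α.compProj, by rw [ODE.FunSpace.compProj_val, ← hα, ODE.FunSpace.next_apply₀],
    fun t _ ↦ α.compProj_mem_closedBall hv.mul_max_le, fun t ht ↦ ?_⟩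
  refine ODE.hasDerivWithinAt_picard_Icc t₀.2 hv.continuousOn_uncurry
    α.continuous_compProj.continuousOn (fun _ _ ↦ α.compProj_mem_closedBall hv.mul_max_le)
    x₀ ht |>.congr_of_mem (fun t' ht' ↦ ?_) ht
  nth_rw 1 [← hα]
  rw [ODE.FunSpace.compProj_of_mem ht', ODE.FunSpace.next_apply]

theorem AnalyticOnNhd.hasDerivAt_integral {g : ℝ → ℝ} {s : Set ℝ} {a t : ℝ}
    (hg : AnalyticOnNhd ℝ g s) (hs : uIcc a t ⊆ s) :
    HasDerivAt (fun u ↦ ∫ x in a..u, g x) (g t) t := by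
  have hU : IsOpen {x | AnalyticAt ℝ g x} := isOpen_analyticAt ℝ g
  have hcont : ContinuousOn g {x | AnalyticAt ℝ g x} := fun x hx ↦
    hx.continuousAt.continuousWithinAt
  have ht : AnalyticAt ℝ g t := hg t (hs right_mem_uIcc)
  exact integral_hasDerivAt_right ((hcont.mono fun x hx ↦ hg x (hs hx)).intervalIntegrable)
    (hcont.stronglyMeasurableAtFilter hU t ht) ht.continuousAt

theorem abs_sub_le_of_hasDerivWithinAt {φ φ' : ℝ → ℝ} {a b C : ℝ}
    (hφ : ∀ t ∈ Icc a b, HasDerivWithinAt φ (φ' t) (Icc a b) t)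
    (hC : ∀ t ∈ Icc a b, |φ' t| ≤ C) : ∀ t ∈ Icc a b, |φ t - φ a| ≤ C * (b - a) := fun t ht ↦
  calc |φ t - φ a| ≤ C * (t - a) := norm_image_sub_le_of_norm_deriv_le_segment' hφ
        (fun s hs ↦ hC s (Ico_subset_Icc_self hs)) t ht
    _ ≤ C * (b - a) := by
        gcongr
        · exact (abs_nonneg _).trans (hC t ht)
        · exact ht.2

theorem sum_integral_mul_pow_mul_pow {f G : ℝ → ℝ} {a b : ℝ} (hf : ContinuousOn f (uIcc a b))
    (hG : ContinuousOn G (uIcc a b)) (n : ℕ) (ε : ℝ) :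
    ∑ k ∈ range n, (∫ t in a..b, f t * G t ^ k) * ε ^ k =
      ∫ t in a..b, f t * ∑ k ∈ range n, (ε * G t) ^ k := by
  simp_rw [mul_sum]
  rw [integral_finsetSum (f := fun k t ↦ f t * (ε * G t) ^ k) fun k _ ↦
    (hf.mul ((continuousOn_const.mul hG).pow k)).intervalIntegrable]
  refine sum_congr rfl fun k _ ↦ ?_
  rw [← intervalIntegral.integral_mul_const]
  congr 1 with t
  ring

theorem eq_zero_of_eventually_abs_sum_mul_pow_le {n : ℕ} {c : ℕ → ℝ} {C : ℝ}
    (h : ∀ᶠ ε in 𝓝[>] 0, |∑ k ∈ range n, c k * ε ^ k| ≤ C * ε ^ n) : ∀ k < n, c k = 0 := by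
  induction n generalizing c with
  | zero => intro k hk; omega
  | succ n ih =>
    set q : ℝ → ℝ := fun ε ↦ ∑ k ∈ range n, c (k + 1) * ε ^ k
    have hsplit : ∀ ε : ℝ, ∑ k ∈ range (n + 1), c k * ε ^ k = ε * q ε + c 0 := fun ε ↦ by
      simp only [sum_range_succ', q, mul_sum, pow_succ]
      congr 1
      · exact sum_congr rfl fun k _ ↦ by ring
      · simp
    have hc0 : c 0 = 0 := by
      have hlim : Tendsto (fun ε : ℝ ↦ ε * |q ε| + C * ε ^ (n + 1)) (𝓝[>] 0) (𝓝 0) := by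
        have : Continuous fun ε : ℝ ↦ ε * |q ε| + C * ε ^ (n + 1) := by fun_prop
        simpa using (this.tendsto 0).mono_left nhdsWithin_le_nhds
      refine abs_nonpos_iff.mp (ge_of_tendsto hlim ?_)
      filter_upwards [h, self_mem_nhdsWithin] with ε hε (hpos : 0 < ε)
      rw [hsplit] at hε
      calc |c 0| = |(ε * q ε + c 0) - ε * q ε| := by ring_nf
        _ ≤ |ε * q ε + c 0| + |ε * q ε| := abs_sub _ _
        _ ≤ ε * |q ε| + C * ε ^ (n + 1) := by
          rw [abs_mul, abs_of_pos hpos]; linarith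
    have hq : ∀ᶠ ε in 𝓝[>] 0, |q ε| ≤ C * ε ^ n := by
      filter_upwards [h, self_mem_nhdsWithin] with ε hε (hpos : 0 < ε)
      rw [hsplit, hc0, add_zero, abs_mul, abs_of_pos hpos, pow_succ', mul_left_comm] at hε
      exact le_of_mul_le_mul_left hε hpos
    intro k hk
    cases k with
    | zero => exact hc0
    | succ k => exact ih hq k (by omega)

theorem abs_mul_pow_three_add_mul_sq_le {p q y r M : ℝ} (hp : |p| ≤ M) (hq : |q| ≤ M)
    (hy : |y| ≤ r) (hr : r ≤ 1) : |p * y ^ 3 + q * y ^ 2| ≤ 2 * M * r ^ 2 := by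
  have hy2 : |y| ^ 2 ≤ r ^ 2 := pow_le_pow_left₀ (abs_nonneg y) hy 2
  have hy3 : |y| ^ 3 ≤ |y| ^ 2 := pow_le_pow_of_le_one (abs_nonneg y) (hy.trans hr) (by norm_num)
  calc |p * y ^ 3 + q * y ^ 2| ≤ |p| * |y| ^ 3 + |q| * |y| ^ 2 := by
        rw [← abs_pow, ← abs_pow, ← abs_mul, ← abs_mul]
        exact abs_add_le _ _
    _ ≤ M * r ^ 2 + M * r ^ 2 := by
        have hM : 0 ≤ M := (abs_nonneg p).trans hp
        gcongr
        exact hy3.trans hy2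
    _ = 2 * M * r ^ 2 := by ring

theorem abs_mul_pow_three_add_mul_sq_sub_le {p q y z M : ℝ} (hp : |p| ≤ M) (hq : |q| ≤ M)
    (hy : |y| ≤ 1) (hz : |z| ≤ 1) :
    |p * y ^ 3 + q * y ^ 2 - (p * z ^ 3 + q * z ^ 2)| ≤ 5 * M * |y - z| := by
  have h3 : |y ^ 2 + y * z + z ^ 2| ≤ 3 := by
    obtain ⟨hy₁, hy₂⟩ := abs_le.mp hy
    obtain ⟨hz₁, hz₂⟩ := abs_le.mp hz
    rw [abs_le]; constructor <;> nlinarith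
  have h2 : |y + z| ≤ 2 := (abs_add_le y z).trans (by linarith)
  calc |p * y ^ 3 + q * y ^ 2 - (p * z ^ 3 + q * z ^ 2)|
      = |p * (y ^ 2 + y * z + z ^ 2) + q * (y + z)| * |y - z| := by
        rw [← abs_mul]; ring_nf
    _ ≤ (|p| * |y ^ 2 + y * z + z ^ 2| + |q| * |y + z|) * |y - z| := by
        gcongr
        rw [← abs_mul, ← abs_mul]
        exact abs_add_le _ _
    _ ≤ (M * 3 + M * 2) * |y - z| := by
        have hM : 0 ≤ M := (abs_nonneg p).trans hp
        gcongr
    _ = 5 * M * |y - z| := by ring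

section Abel

variable {f g G x : ℝ → ℝ} {s : Set ℝ} {t : ℝ}

theorem hasDerivWithinAt_inv_add_of_abel
    (hx : HasDerivWithinAt x (f t * x t ^ 3 + g t * x t ^ 2) s t)
    (hG : HasDerivWithinAt G (g t) s t) (hxt : x t ≠ 0) :
    HasDerivWithinAt (fun t ↦ (x t)⁻¹ + G t) (-(f t * x t)) s t := by
  have hderiv : -(f t * x t) = -(f t * x t ^ 3 + g t * x t ^ 2) / x t ^ 2 + g t := by
    field_simp
    ring
  rw [hderiv]
  exact (hx.inv hxt).add hG

theorem hasDerivWithinAt_inv_add_sq_of_abel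
    (hx : HasDerivWithinAt x (f t * x t ^ 3 + g t * x t ^ 2) s t)
    (hG : HasDerivWithinAt G (g t) s t) (hxt : x t ≠ 0) :
    HasDerivWithinAt (fun t ↦ ((x t)⁻¹ + G t) ^ 2) (-2 * (f t * (1 + G t * x t))) s t := by
  have hderiv :
      -2 * (f t * (1 + G t * x t)) = (2 : ℕ) * ((x t)⁻¹ + G t) ^ (2 - 1) * -(f t * x t) := by
    push_cast
    field_simp
  rw [hderiv]
  exact (hasDerivWithinAt_inv_add_of_abel hx hG hxt).pow 2

theorem exists_abel_solution {a b M ε : ℝ} (hab : a ≤ b) (hf : ContinuousOn f (Icc a b))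
    (hg : ContinuousOn g (Icc a b)) (hfM : ∀ t ∈ Icc a b, |f t| ≤ M)
    (hgM : ∀ t ∈ Icc a b, |g t| ≤ M) (hε : 0 < ε) (hε₁ : 2 * ε ≤ 1)
    (hεM : 16 * M * (b - a) * ε ≤ 1) :
    ∃ x : ℝ → ℝ, x a = ε ∧ (∀ t ∈ Icc a b, |x t - ε| ≤ ε / 2) ∧
      ∀ t ∈ Icc a b, HasDerivWithinAt x (f t * x t ^ 3 + g t * x t ^ 2) (Icc a b) t := by
  have hM : 0 ≤ M := (abs_nonneg _).trans (hfM a (left_mem_Icc.2 hab))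
  have hball : ∀ y ∈ closedBall ε (ε / 2), |y| ≤ 2 * ε := fun y hy ↦ by
    rw [mem_closedBall, Real.dist_eq] at hy
    linarith [abs_sub_abs_le_abs_sub y ε, abs_of_pos hε]
  have hpl : IsPicardLindelof (fun t y ↦ f t * y ^ 3 + g t * y ^ 2)
      (⟨a, left_mem_Icc.2 hab⟩ : Icc a b) ε ⟨ε / 2, by positivity⟩ 0
      ⟨8 * M * ε ^ 2, by positivity⟩ ⟨5 * M, by positivity⟩ :=
    { lipschitzOnWith := fun t ht ↦ LipschitzOnWith.of_dist_le_mul fun y hy z hz ↦ by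
        rw [Real.dist_eq, Real.dist_eq]
        exact abs_mul_pow_three_add_mul_sq_sub_le (hfM t ht) (hgM t ht)
          ((hball y hy).trans hε₁) ((hball z hz).trans hε₁)
      continuousOn := fun _ _ ↦ (hf.mul continuousOn_const).add (hg.mul continuousOn_const)
      norm_le := fun t ht y hy ↦
        (abs_mul_pow_three_add_mul_sq_le (hfM t ht) (hgM t ht) (hball y hy) hε₁).trans_eq
          (show 2 * M * (2 * ε) ^ 2 = 8 * M * ε ^ 2 by ring)
      mul_max_le := by
        show 8 * M * ε ^ 2 * max (b - a) (a - a) ≤ ε / 2 - 0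
        rw [sub_self, max_eq_left (sub_nonneg.2 hab)]
        nlinarith }
  obtain ⟨x, hx₀, hxball, hx⟩ :=
    hpl.exists_eq_forall_mem_Icc_mem_closedBall_hasDerivWithinAt₀
  exact ⟨x, hx₀, fun t ht ↦ by
    rw [← Real.dist_eq]; exact hxball t ht, hx⟩

end Abel

section AbelSolution

variable {f g G x : ℝ → ℝ} {a b M ε K : ℝ}
  (hx : ∀ t ∈ Icc a b, HasDerivWithinAt x (f t * x t ^ 3 + g t * x t ^ 2) (Icc a b) t)
  (hG : ∀ t ∈ Icc a b, HasDerivWithinAt G (g t) (Icc a b) t)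
include hx hG

theorem abs_sub_sub_mul_le_of_abel (hGa : G a = 0) (hfM : ∀ t ∈ Icc a b, |f t| ≤ M)
    (hgM : ∀ t ∈ Icc a b, |g t| ≤ M) (hxa : x a = ε) (hxε : ∀ t ∈ Icc a b, |x t - ε| ≤ ε / 2)
    (hε₁ : 2 * ε ≤ 1) :
    ∀ t ∈ Icc a b, |x t - ε - ε ^ 2 * G t| ≤ M * (8 + 24 * M * (b - a)) * ε ^ 3 * (b - a) := by
  intro t ht
  have hε : 0 ≤ ε := by linarith [abs_nonneg (x t - ε), hxε t ht]
  have hM : 0 ≤ M := (abs_nonneg _).trans (hfM t ht)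
  have hxb : ∀ s ∈ Icc a b, |x s| ≤ 2 * ε := fun s hs ↦ by
    linarith [abs_sub_abs_le_abs_sub (x s) ε, abs_of_nonneg hε, hxε s hs]
  have hx1 : ∀ s ∈ Icc a b, |x s - ε| ≤ 8 * M * ε ^ 2 * (b - a) := by
    have hbound : ∀ r ∈ Icc a b, |f r * x r ^ 3 + g r * x r ^ 2| ≤ 8 * M * ε ^ 2 := fun r hr ↦
      (abs_mul_pow_three_add_mul_sq_le (hfM r hr) (hgM r hr) (hxb r hr) hε₁).trans_eq (by ring)
    simpa only [hxa] using abs_sub_le_of_hasDerivWithinAt hx hbound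
  have hderiv : ∀ s ∈ Icc a b, HasDerivWithinAt (fun s ↦ x s - ε - ε ^ 2 * G s)
      (f s * x s ^ 3 + g s * x s ^ 2 - ε ^ 2 * g s) (Icc a b) s := fun s hs ↦
    ((hx s hs).sub_const ε).sub ((hG s hs).const_mul (ε ^ 2))
  have hbound : ∀ s ∈ Icc a b, |f s * x s ^ 3 + g s * x s ^ 2 - ε ^ 2 * g s| ≤
      M * (8 + 24 * M * (b - a)) * ε ^ 3 := by
    intro s hs
    have hx3 : |x s| ^ 3 ≤ 8 * ε ^ 3 := by
      calc |x s| ^ 3 ≤ (2 * ε) ^ 3 := pow_le_pow_left₀ (abs_nonneg _) (hxb s hs) 3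
        _ = 8 * ε ^ 3 := by ring
    have hxε' : |x s + ε| ≤ 3 * ε := by
      linarith [abs_add_le (x s) ε, abs_of_nonneg hε, hxb s hs]
    calc |f s * x s ^ 3 + g s * x s ^ 2 - ε ^ 2 * g s|
        = |f s * x s ^ 3 + g s * ((x s - ε) * (x s + ε))| := by ring_nf
      _ ≤ |f s| * |x s| ^ 3 + |g s| * (|x s - ε| * |x s + ε|) := by
        rw [← abs_pow, ← abs_mul, ← abs_mul, ← abs_mul]
        exact abs_add_le _ _
      _ ≤ M * (8 * ε ^ 3) + M * (8 * M * ε ^ 2 * (b - a) * (3 * ε)) := by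
        gcongr
        · exact hfM s hs
        · exact hgM s hs
        · exact (abs_nonneg _).trans (hx1 s hs)
        · exact hx1 s hs
      _ = M * (8 + 24 * M * (b - a)) * ε ^ 3 := by ring
  simpa only [hxa, hGa, sub_self, mul_zero, sub_zero] using
    abs_sub_le_of_hasDerivWithinAt hderiv hbound t ht

theorem abs_sub_le_of_abel_periodic (hab : a ≤ b) (hxne : ∀ t ∈ Icc a b, x t ≠ 0)
    (hper : x a = x b) (hK : ∀ t ∈ Icc a b, |f t * x t| ≤ K) : |G b - G a| ≤ K * (b - a) := by
  have := abs_sub_le_of_hasDerivWithinAt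
    (fun t ht ↦ hasDerivWithinAt_inv_add_of_abel (hx t ht) (hG t ht) (hxne t ht))
    (fun t ht ↦ (abs_neg (f t * x t)).trans_le (hK t ht)) b (right_mem_Icc.2 hab)
  rwa [hper, add_sub_add_left_eq_sub] at this

theorem integral_mul_one_add_mul_eq_zero_of_abel_periodic (hab : a ≤ b)
    (hf : ContinuousOn f (Icc a b)) (hxne : ∀ t ∈ Icc a b, x t ≠ 0) (hper : x a = x b)
    (hGper : G a = G b) : ∫ t in a..b, f t * (1 + G t * x t) = 0 := by
  have hu := fun t ht ↦ hasDerivWithinAt_inv_add_sq_of_abel (hx t ht) (hG t ht) (hxne t ht)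
  have hcont : ContinuousOn (fun t ↦ -2 * (f t * (1 + G t * x t))) (Icc a b) :=
    continuousOn_const.mul (hf.mul (continuousOn_const.add
      ((HasDerivWithinAt.continuousOn hG).mul (HasDerivWithinAt.continuousOn hx))))
  have hFTC := integral_eq_sub_of_hasDerivAt_of_le hab (HasDerivWithinAt.continuousOn hu)
    (fun t ht ↦ (hu t (Ioo_subset_Icc_self ht)).hasDerivAt (Icc_mem_nhds ht.1 ht.2))
    (hcont.mono (uIcc_of_le hab).subset).intervalIntegrable
  rw [intervalIntegral.integral_const_mul, hper, hGper, sub_self] at hFTC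
  simpa using hFTC

theorem abs_integral_mul_one_add_mul_sub_sum_le_of_abel (hab : a ≤ b)
    (hf : ContinuousOn f (Icc a b)) (hGa : G a = 0) (hfM : ∀ t ∈ Icc a b, |f t| ≤ M)
    (hgM : ∀ t ∈ Icc a b, |g t| ≤ M) (hxa : x a = ε) (hxε : ∀ t ∈ Icc a b, |x t - ε| ≤ ε / 2)
    (hε₁ : 2 * ε ≤ 1) :
    |(∫ t in a..b, f t * (1 + G t * x t)) - ∑ k ∈ range 3, (∫ t in a..b, f t * G t ^ k) * ε ^ k| ≤
      M ^ 3 * (8 + 24 * M * (b - a)) * (b - a) ^ 3 * ε ^ 3 := by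
  have hGc : ContinuousOn G (Icc a b) := HasDerivWithinAt.continuousOn hG
  have hGM : ∀ t ∈ Icc a b, |G t| ≤ M * (b - a) := fun t ht ↦ by
    simpa only [hGa, sub_zero] using abs_sub_le_of_hasDerivWithinAt hG hgM t ht
  have hexp := abs_sub_sub_mul_le_of_abel hx hG hGa hfM hgM hxa hxε hε₁
  have hint₁ : IntervalIntegrable (fun t ↦ f t * (1 + G t * x t)) volume a b :=
    ContinuousOn.intervalIntegrable_of_Icc hab
      (hf.mul (continuousOn_const.add (hGc.mul (HasDerivWithinAt.continuousOn hx))))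
  have hint₂ : IntervalIntegrable (fun t ↦ f t * ∑ k ∈ range 3, (ε * G t) ^ k) volume a b :=
    (hf.mul (continuousOn_finsetSum _ fun k _ ↦
      (continuousOn_const.mul hGc).pow k)).intervalIntegrable_of_Icc hab
  have hI : uIcc a b = Icc a b := uIcc_of_le hab
  rw [sum_integral_mul_pow_mul_pow (hI ▸ hf) (hI ▸ hGc),
    ← intervalIntegral.integral_sub hint₁ hint₂, ← Real.norm_eq_abs]
  calc ‖∫ t in a..b, (f t * (1 + G t * x t) - f t * ∑ k ∈ range 3, (ε * G t) ^ k)‖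
      ≤ M * (M * (b - a)) * (M * (8 + 24 * M * (b - a)) * ε ^ 3 * (b - a)) * |b - a| := by
        refine intervalIntegral.norm_integral_le_of_norm_le_const fun t ht ↦ ?_
        have ht' : t ∈ Icc a b := hI ▸ uIoc_subset_uIcc ht
        have hdiff : f t * (1 + G t * x t) - f t * ∑ k ∈ range 3, (ε * G t) ^ k =
            f t * G t * (x t - ε - ε ^ 2 * G t) := by
          simp only [sum_range_succ, sum_range_zero]
          ring
        have hfG : |f t| * |G t| ≤ M * (M * (b - a)) :=
          mul_le_mul (hfM t ht') (hGM t ht') (abs_nonneg _) ((abs_nonneg _).trans (hfM t ht'))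
        rw [hdiff, Real.norm_eq_abs, abs_mul, abs_mul]
        exact mul_le_mul hfG (hexp t ht') (abs_nonneg _)
          ((mul_nonneg (abs_nonneg _) (abs_nonneg _)).trans hfG)
    _ = M ^ 3 * (8 + 24 * M * (b - a)) * (b - a) ^ 3 * ε ^ 3 := by
        rw [abs_of_nonneg (sub_nonneg.2 hab)]
        ring

end AbelSolution

namespace HasCenter

variable {f g G : ℝ → ℝ} {a b M : ℝ} (hc : HasCenter f g a b) (hab : a ≤ b)
  (hf : ContinuousOn f (Icc a b)) (hg : ContinuousOn g (Icc a b))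
  (hfM : ∀ t ∈ Icc a b, |f t| ≤ M) (hgM : ∀ t ∈ Icc a b, |g t| ≤ M)
include hc hab hf hg hfM hgM

theorem eventually_exists_periodic_solution :
    ∀ᶠ ε in 𝓝[>] 0, ∃ x : ℝ → ℝ, x a = ε ∧ x b = ε ∧ (∀ t ∈ Icc a b, |x t - ε| ≤ ε / 2) ∧
      ∀ t ∈ Icc a b, HasDerivWithinAt x (f t * x t ^ 3 + g t * x t ^ 2) (Icc a b) t := by
  obtain ⟨δ, hδ, hcenter⟩ := hc
  have hM : 0 ≤ M := (abs_nonneg _).trans (hfM a (left_mem_Icc.2 hab))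
  have hpos : 0 < 16 * M * (b - a) + 1 := by nlinarith [sub_nonneg.2 hab]
  filter_upwards [Ioo_mem_nhdsGT hδ, Ioo_mem_nhdsGT one_half_pos,
    Ioo_mem_nhdsGT (one_div_pos.2 hpos)] with ε ⟨hε, hεδ⟩ ⟨_, hε₁⟩ ⟨_, hεM⟩
  rw [lt_div_iff₀ hpos] at hεM
  obtain ⟨x, hxa, hxε, hx⟩ :=
    exists_abel_solution hab hf hg hfM hgM hε (by linarith) (by nlinarith)
  exact ⟨x, hxa, (hcenter x hx (by rwa [hxa, abs_of_pos hε])).symm.trans hxa, hxε, hx⟩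

theorem primitive_eq (hG : ∀ t ∈ Icc a b, HasDerivWithinAt G (g t) (Icc a b) t) :
    G b = G a := by
  have hlim : Tendsto (fun ε ↦ 2 * M * ε * (b - a)) (𝓝[>] 0) (𝓝 0) := by
    have : Continuous fun ε : ℝ ↦ 2 * M * ε * (b - a) := by fun_prop
    simpa using (this.tendsto 0).mono_left nhdsWithin_le_nhds
  refine sub_eq_zero.1 (abs_nonpos_iff.1 (ge_of_tendsto hlim ?_))
  filter_upwards [hc.eventually_exists_periodic_solution hab hf hg hfM hgM, self_mem_nhdsWithin]
    with ε ⟨x, hxa, hxb, hxε, hx⟩ (hε : 0 < ε)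
  have hxpos : ∀ t ∈ Icc a b, 0 < x t := fun t ht ↦ by linarith [abs_le.1 (hxε t ht)]
  refine abs_sub_le_of_abel_periodic hx hG hab (fun t ht ↦ (hxpos t ht).ne')
    (hxa.trans hxb.symm) fun t ht ↦ ?_
  calc |f t * x t| = |f t| * x t := by rw [abs_mul, abs_of_pos (hxpos t ht)]
    _ ≤ M * (2 * ε) := mul_le_mul (hfM t ht) (by linarith [abs_le.1 (hxε t ht)])
        (hxpos t ht).le ((abs_nonneg _).trans (hfM t ht))
    _ = 2 * M * ε := by ring

theorem exists_eventually_abs_sum_moments_le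
    (hG : ∀ t ∈ Icc a b, HasDerivWithinAt G (g t) (Icc a b) t) (hGa : G a = 0) :
    ∃ C, ∀ᶠ ε in 𝓝[>] 0, |∑ k ∈ range 3, (∫ t in a..b, f t * G t ^ k) * ε ^ k| ≤ C * ε ^ 3 := by
  have hGb : G b = 0 := (hc.primitive_eq hab hf hg hfM hgM hG).trans hGa
  refine ⟨M ^ 3 * (8 + 24 * M * (b - a)) * (b - a) ^ 3, ?_⟩
  filter_upwards [hc.eventually_exists_periodic_solution hab hf hg hfM hgM,
    Ioo_mem_nhdsGT one_half_pos] with ε ⟨x, hxa, hxb, hxε, hx⟩ ⟨hε, hε₁⟩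
  have hxne : ∀ t ∈ Icc a b, x t ≠ 0 := fun t ht ↦ by linarith [abs_le.1 (hxε t ht)]
  have hzero := integral_mul_one_add_mul_eq_zero_of_abel_periodic hx hG hab hf hxne
    (hxa.trans hxb.symm) (hGa.trans hGb.symm)
  simpa only [hzero, zero_sub, abs_neg] using
    abs_integral_mul_one_add_mul_sub_sum_le_of_abel hx hG hab hf hGa hfM hgM hxa hxε (by linarith)

end HasCenter

/-- If `f, g` are real analytic on `[-1,1]` and the Abel equation
`x' = f(t) x^3 + g(t) x^2` has a center at `x = 0`, then the moments
`m_k = ∫_{-1}^1 f(t) G(t)^k dt` vanish for `k = 0, 1, 2`, where `G(t) = ∫_{-1}^t g(s) ds`. -/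
theorem moments_vanish_of_center
    (f g : ℝ → ℝ)
    (hf : AnalyticOnNhd ℝ f (Set.Icc (-1 : ℝ) 1))
    (hg : AnalyticOnNhd ℝ g (Set.Icc (-1 : ℝ) 1))
    (hcenter : HasCenter f g (-1) 1) :
    ∀ k : ℕ, k ≤ 2 →
      ∫ t in (-1 : ℝ)..1, f t * (∫ s in (-1 : ℝ)..t, g s) ^ k = 0 := by
  obtain ⟨Mf, hMf⟩ := isCompact_Icc.exists_bound_of_continuousOn hf.continuousOn
  obtain ⟨Mg, hMg⟩ := isCompact_Icc.exists_bound_of_continuousOn hg.continuousOn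
  have hG : ∀ t ∈ Icc (-1 : ℝ) 1,
      HasDerivWithinAt (fun t ↦ ∫ s in (-1 : ℝ)..t, g s) (g t) (Icc (-1) 1) t := fun t ht ↦
    (hg.hasDerivAt_integral (uIcc_subset_Icc (left_mem_Icc.2 (by norm_num)) ht)).hasDerivWithinAt
  obtain ⟨C, hC⟩ := hcenter.exists_eventually_abs_sum_moments_le (M := max Mf Mg) (by norm_num)
    hf.continuousOn hg.continuousOn (fun t ht ↦ (hMf t ht).trans (le_max_left _ _))
    (fun t ht ↦ (hMg t ht).trans (le_max_right _ _)) hG integral_same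
  intro k hk
  exact eq_zero_of_eventually_abs_sum_mul_pow_le hC k (by omega)
end

section
/- For f(θ) = sin θ − sin 2θ + sin 3θ and G(θ) = ∫_0^θ (cos s + 2 cos 2s) ds, the moments over [0, 2π] satisfy m_0 = ∫_0^{2π} f(θ) dθ = 0, m_1 = ∫_0^{2π} f(θ) G(θ) dθ = 0, m_2 = ∫_0^{2π} f(θ) G(θ)^2 dθ = 0, while m_3 = ∫_0^{2π} f(θ) G(θ)^3 dθ = π/2 ≠ 0. -/
/-!
Since `G θ = sin θ + sin 2θ` and `f` are both odd about `θ = π`, so is `f G^k` for even `k`,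
which gives `m₀ = m₂ = 0`. For odd `k`, product-to-sum formulas turn `f G` and `G²` into
cosine polynomials, `f G = (cos θ - cos 5θ)/2` and `G² = 1 + cos θ - cos 2θ/2 - cos 3θ - cos 4θ/2`;
by orthogonality of the cosines, `m₁` is `2π` times the constant term `0` of `f G`, and in
`m₃ = ∫ (f G) G²` only `cos θ · cos θ` survives, contributing `π/2`.
-/

open MeasureTheory intervalIntegral Real

theorem integral_eq_zero_of_apply_add_sub_eq_neg {f : ℝ → ℝ} {a b : ℝ}
    (h : ∀ x, f (a + b - x) = -f x) : ∫ x in a..b, f x = 0 := by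
  have hrefl := integral_comp_sub_left f (a + b) (a := a) (b := b)
  simp only [h, intervalIntegral.integral_neg, add_sub_cancel_right, add_sub_cancel_left] at hrefl
  linarith

theorem sin_nat_mul_two_pi_sub_mul (n : ℕ) (x : ℝ) : sin (n * (2 * π - x)) = -sin (n * x) := by
  rw [mul_sub, sin_nat_mul_two_pi_sub]

theorem integral_cos_int_mul_zero_two_pi (k : ℤ) :
    ∫ θ in (0 : ℝ)..2 * π, cos (k * θ) = if k = 0 then 2 * π else 0 := by
  split_ifs with hk
  · simp [hk]
  · have hk' : (k : ℝ) ≠ 0 := by exact_mod_cast hk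
    rw [integral_comp_mul_left (fun x => cos x) hk', integral_cos, mul_zero, sin_zero,
      show (k : ℝ) * (2 * π) = ((2 * k : ℤ) : ℝ) * π by push_cast; ring, sin_int_mul_pi]
    simp

theorem integral_cos_nat_mul_mul_cos_nat_mul (m n : ℕ) :
    ∫ θ in (0 : ℝ)..2 * π, cos (m * θ) * cos (n * θ) =
      if m = n then (if n = 0 then 2 * π else π) else 0 := by
  have hprod : ∀ θ : ℝ, cos (m * θ) * cos (n * θ) =
      (cos (((m - n : ℤ) : ℝ) * θ) + cos (((m + n : ℤ) : ℝ) * θ)) / 2 := by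
    intro θ
    push_cast
    rw [sub_mul, add_mul, ← two_mul_cos_mul_cos]
    ring
  simp only [hprod]
  rw [intervalIntegral.integral_div, intervalIntegral.integral_add
      ((by fun_prop : Continuous _).intervalIntegrable _ _)
      ((by fun_prop : Continuous _).intervalIntegrable _ _),
    integral_cos_int_mul_zero_two_pi, integral_cos_int_mul_zero_two_pi]
  by_cases hmn : m = n
  · subst hmn
    by_cases hm : m = 0 <;> simp [hm]
  · have hsub : (m : ℤ) - n ≠ 0 := by omega
    have hadd : (m : ℤ) + n ≠ 0 := by omega
    simp [hmn, hsub, hadd]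

noncomputable def cosPoly {N : ℕ} (a : Fin N → ℝ) (θ : ℝ) : ℝ := ∑ k, a k * cos (k * θ)

theorem cosPoly_six (a : Fin 6 → ℝ) (θ : ℝ) :
    cosPoly a θ = a 0 + a 1 * cos θ + a 2 * cos (2 * θ) + a 3 * cos (3 * θ) +
      a 4 * cos (4 * θ) + a 5 * cos (5 * θ) := by
  simp only [cosPoly, Fin.sum_univ_six]
  norm_num

theorem integral_cosPoly {N : ℕ} (a : Fin (N + 1) → ℝ) :
    ∫ θ in (0 : ℝ)..2 * π, cosPoly a θ = 2 * π * a 0 := by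
  unfold cosPoly
  rw [intervalIntegral.integral_finsetSum fun k _ =>
    (by fun_prop : Continuous _).intervalIntegrable _ _]
  have hcos := fun k : ℕ => integral_cos_int_mul_zero_two_pi k
  simp only [Int.cast_natCast, Nat.cast_eq_zero] at hcos
  simp only [intervalIntegral.integral_const_mul, hcos, Fin.val_eq_zero_iff, mul_ite, mul_zero,
    Finset.sum_ite_eq', Finset.mem_univ, if_true]
  ring

theorem integral_cosPoly_mul_cosPoly {N : ℕ} (a b : Fin N → ℝ) :
    ∫ θ in (0 : ℝ)..2 * π, cosPoly a θ * cosPoly b θ =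
      ∑ k, a k * b k * (if (k : ℕ) = 0 then 2 * π else π) := by
  unfold cosPoly
  simp only [Finset.sum_mul_sum]
  rw [intervalIntegral.integral_finsetSum fun j _ =>
    (by fun_prop : Continuous _).intervalIntegrable _ _]
  refine Finset.sum_congr rfl fun j _ => ?_
  rw [intervalIntegral.integral_finsetSum fun k _ =>
    (by fun_prop : Continuous _).intervalIntegrable _ _]
  simp only [mul_mul_mul_comm, intervalIntegral.integral_const_mul,
    integral_cos_nat_mul_mul_cos_nat_mul, Fin.val_inj]
  simp

theorem integral_cos_add_two_mul_cos_two_mul (t : ℝ) :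
    ∫ s in (0 : ℝ)..t, (cos s + 2 * cos (2 * s)) = sin t + sin (2 * t) := by
  rw [intervalIntegral.integral_add ((by fun_prop : Continuous _).intervalIntegrable _ _)
    ((by fun_prop : Continuous _).intervalIntegrable _ _)]
  simp

theorem mul_sin_add_sin_two_mul_eq_cosPoly (θ : ℝ) :
    (sin θ - sin (2 * θ) + sin (3 * θ)) * (sin θ + sin (2 * θ)) =
      cosPoly ![0, 1 / 2, 0, 0, 0, -1 / 2] θ := by
  have e11 := two_mul_sin_mul_sin θ θ
  have e22 := two_mul_sin_mul_sin (2 * θ) (2 * θ)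
  have e31 := two_mul_sin_mul_sin (3 * θ) θ
  have e32 := two_mul_sin_mul_sin (3 * θ) (2 * θ)
  simp only [cosPoly_six, Matrix.cons_val]
  ring_nf at e11 e22 e31 e32 ⊢
  simp only [cos_zero] at e11 e22
  linear_combination (e11 - e22 + e31 + e32) / 2

theorem sin_add_sin_two_mul_sq_eq_cosPoly (θ : ℝ) :
    (sin θ + sin (2 * θ)) ^ 2 = cosPoly ![1, 1, -1 / 2, -1, -1 / 2, 0] θ := by
  have e11 := two_mul_sin_mul_sin θ θ
  have e21 := two_mul_sin_mul_sin (2 * θ) θ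
  have e22 := two_mul_sin_mul_sin (2 * θ) (2 * θ)
  simp only [cosPoly_six, Matrix.cons_val]
  ring_nf at e11 e21 e22 ⊢
  simp only [cos_zero] at e11 e22
  linear_combination e11 / 2 + e21 + e22 / 2

/-- For `f(θ) = sin θ − sin 2θ + sin 3θ` and `G(θ) = ∫_0^θ (cos s + 2 cos 2s) ds`,
the moments over `[0, 2π]` satisfy `m_0 = m_1 = m_2 = 0` while `m_3 = π/2 ≠ 0`. -/
theorem moments_example_GGS :
    (∫ θ in (0 : ℝ)..(2 * π), (sin θ - sin (2 * θ) + sin (3 * θ))) = 0 ∧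
    (∫ θ in (0 : ℝ)..(2 * π), (sin θ - sin (2 * θ) + sin (3 * θ)) *
      (∫ s in (0 : ℝ)..θ, (cos s + 2 * cos (2 * s)))) = 0 ∧
    (∫ θ in (0 : ℝ)..(2 * π), (sin θ - sin (2 * θ) + sin (3 * θ)) *
      (∫ s in (0 : ℝ)..θ, (cos s + 2 * cos (2 * s))) ^ 2) = 0 ∧
    (∫ θ in (0 : ℝ)..(2 * π), (sin θ - sin (2 * θ) + sin (3 * θ)) *
      (∫ s in (0 : ℝ)..θ, (cos s + 2 * cos (2 * s))) ^ 3) = π / 2 ∧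
    (π / 2 : ℝ) ≠ 0 := by
  simp only [integral_cos_add_two_mul_cos_two_mul]
  have h1 := sin_nat_mul_two_pi_sub_mul 1
  have h2 := sin_nat_mul_two_pi_sub_mul 2
  have h3 := sin_nat_mul_two_pi_sub_mul 3
  push_cast at h1 h2 h3
  simp only [one_mul] at h1
  refine ⟨?_, ?_, ?_, ?_, by positivity⟩
  · exact integral_eq_zero_of_apply_add_sub_eq_neg fun θ => by rw [zero_add, h1, h2, h3]; ring
  · simp only [mul_sin_add_sin_two_mul_eq_cosPoly, integral_cosPoly]
    norm_num
  · exact integral_eq_zero_of_apply_add_sub_eq_neg fun θ => by rw [zero_add, h1, h2, h3]; ring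
  · simp only [pow_succ' _ 2, ← mul_assoc, mul_sin_add_sin_two_mul_eq_cosPoly,
      sin_add_sin_two_mul_sq_eq_cosPoly, integral_cosPoly_mul_cosPoly, Fin.sum_univ_six,
      Matrix.cons_val]
    norm_num
    ring
end

section
/- Let n be a positive even integer, g(t) = t^{n-1}, and let f(t) = Σ_{j=0}^d a_j t^j be a real polynomial written as f(t) = p(t^2) + t q(t^2) with p, q real polynomials, such that the even part t ↦ p(t^2) changes sign at most two times on [-1,1]. If the Abel equation x'(t) = f(t)x(t)^3 + g(t)x(t)^2 on [-1,1] has a center at x = 0, then m_k = ∫_{-1}^1 f(t)(G(t))^k dt = 0 for every integer k ≥ 0, where G(t) = ∫_{-1}^t g(s) ds = (t^n − 1)/n. -/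
/-!
Along a positive solution of `x' = f x³ + g x²` one has `(1/x + G)' = -f x` when `G' = g`.
If `G(-1) = G(1) = 0`, a solution with `x(-1) = x(1)` therefore satisfies `∫_{-1}^1 f x = 0`,
and for the solution with `x(-1) = ε` the same identity gives `x = ε + ε² G + O(ε³)`. Hence
`ε m₀ + ε² m₁ = O(ε³)`, so `m₀ = m₁ = 0`.

Folding `[-1, 1]` onto `[0, 1]`, the even part `P(t) = p(t²)` satisfies `∫₀¹ P = ∫₀¹ P G = 0`.
By evenness `P` changes sign at most once on `[0, 1]`, say at `r`, and `G` is increasing there,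
so `P` or `P · (G - G(r))` has constant sign; either way `P` vanishes, so `p = 0`. Then `f` is
odd while `G` is even, and every moment vanishes.
-/

open MeasureTheory intervalIntegral

/-- `h` does not change sign on the set `s`. -/
def NoSignChangeOn (h : ℝ → ℝ) (s : Set ℝ) : Prop :=
  (∀ t ∈ s, 0 ≤ h t) ∨ (∀ t ∈ s, h t ≤ 0)

/-- `h` changes sign at most two times on `[-1,1]`: the interval can be split into
at most three consecutive subintervals on each of which `h` does not change sign. -/
def ChangesSignAtMostTwiceOn (h : ℝ → ℝ) : Prop :=
  ∃ c d : ℝ, -1 ≤ c ∧ c ≤ d ∧ d ≤ 1 ∧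
    NoSignChangeOn h (Set.Icc (-1) c) ∧
    NoSignChangeOn h (Set.Icc c d) ∧
    NoSignChangeOn h (Set.Icc d 1)

open Set Metric Filter Topology
open scoped Interval NNReal

theorem IsPicardLindelof.exists_forall_mem_Icc_hasDerivWithinAt_mem_closedBall
    {v : ℝ → ℝ → ℝ} {tmin tmax : ℝ} {t₀ : Icc tmin tmax} {x₀ : ℝ} {a L K : ℝ≥0}
    (hv : IsPicardLindelof v t₀ x₀ a 0 L K) :
    ∃ α : ℝ → ℝ, α t₀ = x₀ ∧ ∀ t ∈ Icc tmin tmax,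
      HasDerivWithinAt α (v t (α t)) (Icc tmin tmax) t ∧ α t ∈ closedBall x₀ a := by
  -- Clamping the state into the ball gives a field bounded by `L` everywhere; by the mean value
  -- theorem its solution stays in the ball, where it also solves the original equation.
  have ha : x₀ - a ≤ x₀ + a := by linarith [a.2]
  set π : ℝ → ℝ := fun y => projIcc (x₀ - a) (x₀ + a) ha y
  have hπ_mem : ∀ y, π y ∈ closedBall x₀ a := fun y => by
    rw [Real.closedBall_eq_Icc]; exact (projIcc (x₀ - a) (x₀ + a) ha y).2
  have hπ_eq : ∀ y ∈ closedBall x₀ a, π y = y := fun y hy => by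
    rw [Real.closedBall_eq_Icc] at hy; simp [π, projIcc_of_mem ha hy]
  have hw : IsPicardLindelof (fun t y => v t (π y)) t₀ x₀ a 0 L K := by
    refine ⟨fun t ht => ?_, fun y hy => ?_, fun t ht y _ => hv.norm_le t ht _ (hπ_mem y),
      hv.mul_max_le⟩
    · have hπ := (LipschitzWith.subtype_val _).comp (LipschitzWith.projIcc ha)
      have := (hv.lipschitzOnWith t ht).comp (hπ.lipschitzOnWith (s := univ)) fun y _ => hπ_mem y
      simp only [mul_one, lipschitzOnWith_univ] at this
      exact this.lipschitzOnWith
    · simpa [hπ_eq y hy] using hv.continuousOn y hy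
  obtain ⟨α, hα₀, hα⟩ := hw.exists_eq_forall_mem_Icc_hasDerivWithinAt₀
  have hball : ∀ t ∈ Icc tmin tmax, α t ∈ closedBall x₀ a := by
    intro t ht
    have hlip := (convex_Icc tmin tmax).norm_image_sub_le_of_norm_hasDerivWithin_le hα
      (fun s hs => hv.norm_le s hs _ (hπ_mem _)) t₀.2 ht
    have hdist : |t - t₀| ≤ max (tmax - t₀) (t₀ - tmin) :=
      abs_sub_le_iff.2 ⟨le_max_of_le_left (by linarith [ht.2]),
        le_max_of_le_right (by linarith [ht.1])⟩
    rw [mem_closedBall, dist_eq_norm, ← hα₀]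
    calc ‖α t - α t₀‖ ≤ L * |t - t₀| := hlip
      _ ≤ L * max (tmax - t₀) (t₀ - tmin) := by gcongr
      _ ≤ a := by simpa using hv.mul_max_le
  exact ⟨α, hα₀, fun t ht => ⟨hπ_eq _ (hball t ht) ▸ hα t ht, hball t ht⟩⟩

theorem abs_sub_sub_mul_le_of_inv_add_eq {x ε G I K : ℝ} (hK : 1 ≤ K) (hε : 0 < ε)
    (hεK : 48 * K * ε ≤ 1) (hx : |x - ε| ≤ ε / 2) (hG : |G| ≤ K) (hI : |I| ≤ 3 * K * ε)
    (h : x⁻¹ + G = ε⁻¹ - I) : |x - ε - ε ^ 2 * G| ≤ 8 * K ^ 2 * ε ^ 3 := by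
  obtain ⟨hx₁, hx₂⟩ := abs_le.1 hx
  have hx₀ : 0 < x := by linarith
  have hxε : x - ε = x * ε * (G + I) := by
    field_simp at h
    linarith
  have hGI : |G + I| ≤ 4 * K / 3 := by
    have : 3 * K * ε ≤ K / 3 := by nlinarith
    linarith [abs_add_le G I]
  have hdiff : |x - ε| ≤ 2 * K * ε ^ 2 := by
    rw [hxε, abs_mul, abs_of_pos (by positivity : 0 < x * ε)]
    calc x * ε * |G + I| ≤ (3 * ε / 2) * ε * (4 * K / 3) := by gcongr; linarith
      _ = 2 * K * ε ^ 2 := by ring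
  have hKK : K ≤ K ^ 2 := by nlinarith
  calc |x - ε - ε ^ 2 * G| = |ε * G * (x - ε) + x * ε * I| := by
        rw [show ε * G * (x - ε) + x * ε * I = x - ε - ε ^ 2 * G by linear_combination -hxε]
    _ ≤ ε * K * (2 * K * ε ^ 2) + (3 * ε / 2) * ε * (3 * K * ε) := by
        refine (abs_add_le _ _).trans (add_le_add ?_ ?_) <;>
          simp only [abs_mul, abs_of_pos hε, abs_of_pos hx₀]
        · gcongr
        · gcongr; linarith
    _ ≤ 8 * K ^ 2 * ε ^ 3 := by nlinarith [pow_pos hε 3]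

theorem eq_zero_and_eq_zero_of_abs_le {a b C : ℝ}
    (h : ∀ᶠ ε in 𝓝[>] (0 : ℝ), |ε * a + ε ^ 2 * b| ≤ C * ε ^ 3) : a = 0 ∧ b = 0 := by
  have hlim : ∀ {u : ℝ → ℝ} {c : ℝ} (k : ℕ), Tendsto u (𝓝[>] 0) (𝓝 c) →
      (∀ᶠ ε in 𝓝[>] 0, |u ε| ≤ C * ε ^ (k + 1)) → c = 0 := fun k hu hb =>
    tendsto_nhds_unique hu <| squeeze_zero_norm' hb <|
      ((continuous_const.mul (continuous_pow _)).tendsto' 0 0 (by simp)).mono_left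
        nhdsWithin_le_nhds
  have ha : a = 0 := by
    refine hlim 1 (u := fun ε => a + ε * b)
      (((continuous_const.add (continuous_id.mul continuous_const)).tendsto' 0 a
        (by simp)).mono_left nhdsWithin_le_nhds) ?_
    filter_upwards [h, self_mem_nhdsWithin] with ε hε (hε₀ : 0 < ε)
    rw [show ε * a + ε ^ 2 * b = ε * (a + ε * b) by ring, abs_mul, abs_of_pos hε₀] at hε
    show |a + ε * b| ≤ C * ε ^ 2
    exact le_of_mul_le_mul_left (by linarith [show ε * (C * ε ^ 2) = C * ε ^ 3 by ring]) hε₀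
  refine ⟨ha, hlim 0 (u := fun _ => b) tendsto_const_nhds ?_⟩
  filter_upwards [h, self_mem_nhdsWithin] with ε hε (hε₀ : 0 < ε)
  rw [ha, mul_zero, zero_add, abs_mul, abs_of_pos (by positivity : 0 < ε ^ 2)] at hε
  show |b| ≤ C * ε ^ 1
  exact le_of_mul_le_mul_left (by linarith [show ε ^ 2 * (C * ε ^ 1) = C * ε ^ 3 by ring])
    (by positivity : 0 < ε ^ 2)

def IsAbelSolutionOn (f g x : ℝ → ℝ) (s : Set ℝ) : Prop :=
  ∀ t ∈ s, HasDerivWithinAt x (f t * x t ^ 3 + g t * x t ^ 2) s t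

section Abel

variable {f g G x : ℝ → ℝ} {K ε : ℝ}

theorem exists_isAbelSolutionOn (hf : ContinuousOn f (Icc (-1) 1))
    (hg : ContinuousOn g (Icc (-1) 1)) (hfK : ∀ t ∈ Icc (-1 : ℝ) 1, |f t| ≤ K)
    (hgK : ∀ t ∈ Icc (-1 : ℝ) 1, |g t| ≤ K) (hK : 1 ≤ K) (hε : 0 < ε) (hεK : 48 * K * ε ≤ 1) :
    ∃ x : ℝ → ℝ, x (-1) = ε ∧
      IsAbelSolutionOn f g x (Icc (-1) 1) ∧
      ∀ t ∈ Icc (-1 : ℝ) 1, |x t - ε| ≤ ε / 2 := by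
  have hε₁ : ε ≤ 1 / 48 := by nlinarith
  have hball : ∀ y ∈ closedBall ε (ε / 2).toNNReal, ε / 2 ≤ y ∧ y ≤ 3 * ε / 2 := by
    intro y hy
    rw [Real.closedBall_eq_Icc, Real.coe_toNNReal _ (by positivity)] at hy
    constructor <;> linarith [hy.1, hy.2]
  have hpl : IsPicardLindelof (fun t y => f t * y ^ 3 + g t * y ^ 2)
      (⟨-1, by norm_num⟩ : Icc (-1 : ℝ) 1) ε (ε / 2).toNNReal 0 (3 * K * ε ^ 2).toNNReal
      (5 * K).toNNReal := by
    refine ⟨fun t ht => LipschitzOnWith.of_dist_le_mul fun y hy z hz => ?_,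
      fun y _ => (hf.mul continuousOn_const).add (hg.mul continuousOn_const),
      fun t ht y hy => ?_, ?_⟩
    · obtain ⟨hy₁, hy₂⟩ := hball y hy
      obtain ⟨hz₁, hz₂⟩ := hball z hz
      have hf3 : |f t * (y ^ 2 + y * z + z ^ 2)| ≤ K * 3 := by
        rw [abs_mul, abs_of_pos (a := y ^ 2 + y * z + z ^ 2) (by nlinarith)]
        have hyz : y * z ≤ 1 := by nlinarith
        exact mul_le_mul (hfK t ht) (by nlinarith) (by nlinarith) (by linarith)
      have hg2 : |g t * (y + z)| ≤ K * 2 := by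
        rw [abs_mul, abs_of_pos (a := y + z) (by linarith)]
        exact mul_le_mul (hgK t ht) (by nlinarith) (by linarith) (by linarith)
      rw [Real.dist_eq, Real.dist_eq, Real.coe_toNNReal _ (by positivity),
        show f t * y ^ 3 + g t * y ^ 2 - (f t * z ^ 3 + g t * z ^ 2)
          = (f t * (y ^ 2 + y * z + z ^ 2) + g t * (y + z)) * (y - z) by ring, abs_mul]
      gcongr
      linarith [abs_add_le (f t * (y ^ 2 + y * z + z ^ 2)) (g t * (y + z))]
    · obtain ⟨hy₁, hy₂⟩ := hball y hy
      have hy₀ : 0 < y := by linarith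
      rw [Real.norm_eq_abs, Real.coe_toNNReal _ (by positivity)]
      have h3 : |f t * y ^ 3| ≤ K * y ^ 3 := by
        rw [abs_mul, abs_of_pos (pow_pos hy₀ 3)]
        exact mul_le_mul_of_nonneg_right (hfK t ht) (by positivity)
      have h2 : |g t * y ^ 2| ≤ K * y ^ 2 := by
        rw [abs_mul, abs_of_pos (pow_pos hy₀ 2)]
        exact mul_le_mul_of_nonneg_right (hgK t ht) (by positivity)
      have hy : K * y ^ 3 + K * y ^ 2 ≤ 3 * K * ε ^ 2 := by
        have hsq : y ^ 2 ≤ (3 * ε / 2) ^ 2 := pow_le_pow_left₀ hy₀.le hy₂ 2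
        calc K * y ^ 3 + K * y ^ 2 = K * y ^ 2 * (y + 1) := by ring
          _ ≤ K * (3 * ε / 2) ^ 2 * (5 / 4) := by gcongr; linarith
          _ ≤ 3 * K * ε ^ 2 := by nlinarith
      linarith [abs_add_le (f t * y ^ 3) (g t * y ^ 2)]
    · simp only [Real.coe_toNNReal _ (by positivity : 0 ≤ ε / 2),
        Real.coe_toNNReal _ (by positivity : 0 ≤ 3 * K * ε ^ 2), NNReal.coe_zero, sub_zero]
      norm_num
      nlinarith
  obtain ⟨x, hx₀, hx⟩ := hpl.exists_forall_mem_Icc_hasDerivWithinAt_mem_closedBall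
  refine ⟨x, hx₀, fun t ht => (hx t ht).1, fun t ht => ?_⟩
  have := (hx t ht).2
  rwa [mem_closedBall, Real.dist_eq, Real.coe_toNNReal _ (by positivity)] at this

theorem IsAbelSolutionOn.inv_add_eq_sub_integral {a b t : ℝ}
    (hx : IsAbelSolutionOn f g x (Icc a b)) (hx₀ : ∀ s ∈ Icc a b, x s ≠ 0)
    (hf : ContinuousOn f (Icc a b)) (hG : ∀ s ∈ Icc a b, HasDerivWithinAt G (g s) (Icc a b) s)
    (ht : t ∈ Icc a b) :
    (x t)⁻¹ + G t = (x a)⁻¹ + G a - ∫ s in a..t, f s * x s := by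
  have hsub : Icc a t ⊆ Icc a b := Icc_subset_Icc le_rfl ht.2
  have hxc : ContinuousOn x (Icc a b) := fun s hs => (hx s hs).continuousWithinAt
  have hGc : ContinuousOn G (Icc a b) := fun s hs => (hG s hs).continuousWithinAt
  have hderiv : ∀ s ∈ Ioo a t, HasDerivAt (fun s => (x s)⁻¹ + G s) (-(f s * x s)) s := by
    intro s hs
    have hs' : s ∈ Icc a b := hsub (Ioo_subset_Icc_self hs)
    have hnhds : Icc a b ∈ 𝓝 s := Icc_mem_nhds hs.1 (hs.2.trans_le ht.2)
    refine (((hx s hs').hasDerivAt hnhds).inv (hx₀ s hs')).add ((hG s hs').hasDerivAt hnhds)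
      |>.congr_deriv ?_
    field_simp [hx₀ s hs']
    ring
  have := intervalIntegral.integral_eq_sub_of_hasDerivAt_of_le ht.1
    ((hxc.inv₀ hx₀).add hGc |>.mono hsub) hderiv
    ((hf.mul hxc).neg.mono hsub |>.intervalIntegrable_of_Icc ht.1)
  simp only [intervalIntegral.integral_neg, Pi.add_apply, Pi.inv_apply] at this
  linarith

theorem IsAbelSolutionOn.abs_sub_sub_mul_le (hx : IsAbelSolutionOn f g x (Icc (-1) 1))
    (hx₀ : x (-1) = ε) (hxε : ∀ t ∈ Icc (-1 : ℝ) 1, |x t - ε| ≤ ε / 2)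
    (hf : ContinuousOn f (Icc (-1) 1))
    (hG : ∀ t ∈ Icc (-1 : ℝ) 1, HasDerivWithinAt G (g t) (Icc (-1) 1) t) (hG₀ : G (-1) = 0)
    (hfK : ∀ t ∈ Icc (-1 : ℝ) 1, |f t| ≤ K) (hGK : ∀ t ∈ Icc (-1 : ℝ) 1, |G t| ≤ K)
    (hK : 1 ≤ K) (hε : 0 < ε) (hεK : 48 * K * ε ≤ 1) {t : ℝ} (ht : t ∈ Icc (-1 : ℝ) 1) :
    |x t - ε - ε ^ 2 * G t| ≤ 8 * K ^ 2 * ε ^ 3 := by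
  have hxpos : ∀ s ∈ Icc (-1 : ℝ) 1, ε / 2 ≤ x s := fun s hs => by
    linarith [(abs_le.1 (hxε s hs)).1]
  have hI : |∫ s in (-1)..t, f s * x s| ≤ 3 * K * ε := by
    have hbound : ∀ s ∈ Ι (-1) t, ‖f s * x s‖ ≤ K * (3 * ε / 2) := by
      intro s hs
      rw [uIoc_of_le ht.1] at hs
      have hs' : s ∈ Icc (-1 : ℝ) 1 := ⟨hs.1.le, hs.2.trans ht.2⟩
      rw [Real.norm_eq_abs, abs_mul, abs_of_pos (a := x s) (by linarith [hxpos s hs'])]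
      exact mul_le_mul (hfK s hs') (by linarith [(abs_le.1 (hxε s hs')).2])
        (by linarith [hxpos s hs']) (by linarith)
    have := intervalIntegral.norm_integral_le_of_norm_le_const hbound
    rw [Real.norm_eq_abs, abs_of_nonneg (by linarith [ht.1] : 0 ≤ t - -1)] at this
    calc _ ≤ K * (3 * ε / 2) * (t - -1) := this
      _ ≤ K * (3 * ε / 2) * 2 := by gcongr; linarith [ht.2]
      _ = 3 * K * ε := by ring
  have hinv := hx.inv_add_eq_sub_integral
    (fun s hs => (by linarith [hxpos s hs] : 0 < x s).ne') hf hG ht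
  rw [hx₀, hG₀, add_zero] at hinv
  exact abs_sub_sub_mul_le_of_inv_add_eq hK hε hεK (hxε t ht) (hGK t ht) hI hinv

theorem IsAbelSolutionOn.abs_moments_le (hx : IsAbelSolutionOn f g x (Icc (-1) 1))
    (hx₀ : x (-1) = ε) (hx₁ : x 1 = ε) (hxε : ∀ t ∈ Icc (-1 : ℝ) 1, |x t - ε| ≤ ε / 2)
    (hf : ContinuousOn f (Icc (-1) 1))
    (hG : ∀ t ∈ Icc (-1 : ℝ) 1, HasDerivWithinAt G (g t) (Icc (-1) 1) t) (hG₀ : G (-1) = 0)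
    (hG₁ : G 1 = 0) (hfK : ∀ t ∈ Icc (-1 : ℝ) 1, |f t| ≤ K)
    (hGK : ∀ t ∈ Icc (-1 : ℝ) 1, |G t| ≤ K) (hK : 1 ≤ K) (hε : 0 < ε) (hεK : 48 * K * ε ≤ 1) :
    |ε * (∫ t in (-1)..1, f t) + ε ^ 2 * ∫ t in (-1)..1, f t * G t| ≤ 16 * K ^ 3 * ε ^ 3 := by
  have hle : (-1 : ℝ) ≤ 1 := by norm_num
  have hxc : ContinuousOn x (Icc (-1) 1) := fun s hs => (hx s hs).continuousWithinAt
  have hGc : ContinuousOn G (Icc (-1) 1) := fun s hs => (hG s hs).continuousWithinAt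
  have hfx : ∫ t in (-1)..1, f t * x t = 0 := by
    have := hx.inv_add_eq_sub_integral
      (fun s hs => (by linarith [(abs_le.1 (hxε s hs)).1] : 0 < x s).ne') hf hG
      (right_mem_Icc.2 hle)
    rw [hx₀, hx₁, hG₀, hG₁] at this
    linarith
  have hsplit : ε * (∫ t in (-1)..1, f t) + ε ^ 2 * ∫ t in (-1)..1, f t * G t
      = -∫ t in (-1)..1, f t * (x t - ε - ε ^ 2 * G t) := by
    have e : ∀ t, f t * (x t - ε - ε ^ 2 * G t) = f t * x t - (ε * f t + ε ^ 2 * (f t * G t)) :=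
      fun t => by ring
    have h₁ : IntervalIntegrable (fun t => f t * x t) volume (-1) 1 :=
      (hf.mul hxc).intervalIntegrable_of_Icc hle
    have h₂ : IntervalIntegrable (fun t => ε * f t) volume (-1) 1 :=
      (hf.intervalIntegrable_of_Icc hle).const_mul ε
    have h₃ : IntervalIntegrable (fun t => ε ^ 2 * (f t * G t)) volume (-1) 1 :=
      ((hf.mul hGc).intervalIntegrable_of_Icc hle).const_mul _
    simp_rw [e]
    rw [intervalIntegral.integral_sub h₁ (h₂.add h₃), intervalIntegral.integral_add h₂ h₃,
      intervalIntegral.integral_const_mul, intervalIntegral.integral_const_mul, hfx]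
    ring
  have hbound : ∀ t ∈ Ι (-1 : ℝ) 1,
      ‖f t * (x t - ε - ε ^ 2 * G t)‖ ≤ K * (8 * K ^ 2 * ε ^ 3) := by
    intro t ht
    have ht' : t ∈ Icc (-1 : ℝ) 1 := Ioc_subset_Icc_self (by rwa [uIoc_of_le hle] at ht)
    rw [Real.norm_eq_abs, abs_mul]
    exact mul_le_mul (hfK t ht')
      (hx.abs_sub_sub_mul_le hx₀ hxε hf hG hG₀ hfK hGK hK hε hεK ht')
      (abs_nonneg _) (by linarith)
  have := intervalIntegral.norm_integral_le_of_norm_le_const hbound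
  rw [Real.norm_eq_abs] at this
  rw [hsplit, abs_neg]
  linarith [show K * (8 * K ^ 2 * ε ^ 3) * |(1 : ℝ) - -1| = 16 * K ^ 3 * ε ^ 3 by norm_num; ring]

theorem HasCenter.integral_eq_zero_and_integral_mul_eq_zero (hc : HasCenter f g (-1) 1)
    (hf : ContinuousOn f (Icc (-1) 1)) (hg : ContinuousOn g (Icc (-1) 1))
    (hG : ∀ t ∈ Icc (-1 : ℝ) 1, HasDerivWithinAt G (g t) (Icc (-1) 1) t)
    (hG₀ : G (-1) = 0) (hG₁ : G 1 = 0) :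
    ∫ t in (-1)..1, f t = 0 ∧ ∫ t in (-1)..1, f t * G t = 0 := by
  obtain ⟨K, hK, hfK, hgK, hGK⟩ : ∃ K : ℝ, 1 ≤ K ∧ (∀ t ∈ Icc (-1 : ℝ) 1, |f t| ≤ K) ∧
      (∀ t ∈ Icc (-1 : ℝ) 1, |g t| ≤ K) ∧ ∀ t ∈ Icc (-1 : ℝ) 1, |G t| ≤ K := by
    obtain ⟨Cf, hCf⟩ := isCompact_Icc.exists_bound_of_continuousOn hf
    obtain ⟨Cg, hCg⟩ := isCompact_Icc.exists_bound_of_continuousOn hg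
    obtain ⟨CG, hCG⟩ := isCompact_Icc.exists_bound_of_continuousOn
      fun t ht => (hG t ht).continuousWithinAt
    refine ⟨max 1 (max Cf (max Cg CG)), le_max_left _ _, fun t ht => (hCf t ht).trans ?_,
      fun t ht => (hCg t ht).trans ?_, fun t ht => (hCG t ht).trans ?_⟩ <;> simp
  obtain ⟨δ, hδ, hcenter⟩ := hc
  refine eq_zero_and_eq_zero_of_abs_le (C := 16 * K ^ 3) ?_
  filter_upwards [Ioo_mem_nhdsGT (show (0 : ℝ) < min δ (1 / (48 * K)) by positivity)]
    with ε ⟨hε, hεmin⟩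
  have hεK : 48 * K * ε ≤ 1 := by
    have := (lt_min_iff.1 hεmin).2
    rw [lt_div_iff₀ (by positivity)] at this
    linarith
  obtain ⟨x, hx₀, hx, hxε⟩ := exists_isAbelSolutionOn hf hg hfK hgK hK hε hεK
  have hx₁ : x 1 = ε := by
    rw [← hcenter x hx (by rw [hx₀, abs_of_pos hε]; exact (lt_min_iff.1 hεmin).1), hx₀]
  exact hx.abs_moments_le hx₀ hx₁ hxε hf hG hG₀ hG₁ hfK hGK hK hε hεK

end Abel

namespace NoSignChangeOn

variable {φ : ℝ → ℝ} {s u : Set ℝ}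

theorem mono (h : NoSignChangeOn φ s) (hus : u ⊆ s) : NoSignChangeOn φ u :=
  h.imp (fun h t ht => h t (hus ht)) (fun h t ht => h t (hus ht))

theorem neg_of_even (heven : ∀ t, φ (-t) = φ t) (h : NoSignChangeOn φ s) :
    NoSignChangeOn φ (-s) :=
  h.imp (fun h t ht => heven t ▸ h (-t) ht) (fun h t ht => heven t ▸ h (-t) ht)

theorem eq_zero_of_integral_eq_zero {a b : ℝ} (hab : a < b) (hφ : ContinuousOn φ (Icc a b))
    (h : NoSignChangeOn φ (Icc a b)) (h0 : ∫ t in a..b, φ t = 0) :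
    ∀ t ∈ Icc a b, φ t = 0 := by
  have key : ∀ ψ : ℝ → ℝ, ContinuousOn ψ (Icc a b) → (∀ t ∈ Icc a b, 0 ≤ ψ t) →
      ∫ t in a..b, ψ t = 0 → ∀ t ∈ Icc a b, ψ t = 0 := by
    intro ψ hψ hnn h0 t ht
    by_contra hne
    have := intervalIntegral.integral_pos hab hψ (fun s hs => hnn s (Ioc_subset_Icc_self hs))
      ⟨t, ht, (hnn t ht).lt_of_ne' hne⟩
    linarith
  rcases h with h | h
  · exact key φ hφ h h0
  · intro t ht
    simpa using key (-φ) hφ.neg (fun s hs => neg_nonneg.2 (h s hs))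
      (by simp [intervalIntegral.integral_neg, h0]) t ht

theorem or_mul_sub {G : ℝ → ℝ} {a b r : ℝ} (hG : MonotoneOn G (Icc a b)) (hr : r ∈ Icc a b)
    (h₁ : NoSignChangeOn φ (Icc a r)) (h₂ : NoSignChangeOn φ (Icc r b)) :
    NoSignChangeOn φ (Icc a b) ∨ NoSignChangeOn (fun t => φ t * (G t - G r)) (Icc a b) := by
  have hle : ∀ t ∈ Icc a b, t ≤ r → G t - G r ≤ 0 := fun t ht htr =>
    sub_nonpos.2 (hG ht hr htr)
  have hge : ∀ t ∈ Icc a b, r ≤ t → 0 ≤ G t - G r := fun t ht hrt =>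
    sub_nonneg.2 (hG hr ht hrt)
  rcases h₁ with h₁ | h₁ <;> rcases h₂ with h₂ | h₂
  · refine Or.inl (Or.inl fun t ht => ?_)
    rcases le_total t r with htr | hrt
    exacts [h₁ t ⟨ht.1, htr⟩, h₂ t ⟨hrt, ht.2⟩]
  · refine Or.inr (Or.inr fun t ht => ?_)
    rcases le_total t r with htr | hrt
    exacts [mul_nonpos_of_nonneg_of_nonpos (h₁ t ⟨ht.1, htr⟩) (hle t ht htr),
      mul_nonpos_of_nonpos_of_nonneg (h₂ t ⟨hrt, ht.2⟩) (hge t ht hrt)]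
  · refine Or.inr (Or.inl fun t ht => ?_)
    rcases le_total t r with htr | hrt
    exacts [mul_nonneg_of_nonpos_of_nonpos (h₁ t ⟨ht.1, htr⟩) (hle t ht htr),
      mul_nonneg (h₂ t ⟨hrt, ht.2⟩) (hge t ht hrt)]
  · refine Or.inl (Or.inr fun t ht => ?_)
    rcases le_total t r with htr | hrt
    exacts [h₁ t ⟨ht.1, htr⟩, h₂ t ⟨hrt, ht.2⟩]

end NoSignChangeOn

theorem ChangesSignAtMostTwiceOn.exists_split_of_even {φ : ℝ → ℝ}
    (h : ChangesSignAtMostTwiceOn φ) (heven : ∀ t, φ (-t) = φ t) :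
    ∃ r ∈ Icc (0 : ℝ) 1, NoSignChangeOn φ (Icc 0 r) ∧ NoSignChangeOn φ (Icc r 1) := by
  obtain ⟨c, d, hc, hcd, hd, h₁, h₂, h₃⟩ := h
  rcases le_or_gt 0 c with hc0 | hc0
  · have h₁' := h₁.neg_of_even heven
    rw [neg_Icc, neg_neg] at h₁'
    exact ⟨c, ⟨hc0, hcd.trans hd⟩, h₁.mono (Icc_subset_Icc (by linarith) le_rfl),
      h₁'.mono (Icc_subset_Icc (by linarith) le_rfl)⟩
  rcases le_or_gt 0 d with hd0 | hd0
  · exact ⟨d, ⟨hd0, hd⟩, h₂.mono (Icc_subset_Icc hc0.le le_rfl), h₃⟩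
  · have h₃' := h₃.neg_of_even heven
    rw [neg_Icc] at h₃'
    exact ⟨-d, ⟨by linarith, by linarith⟩, h₃'.mono (Icc_subset_Icc (by linarith) le_rfl),
      h₃.mono (Icc_subset_Icc (by linarith) le_rfl)⟩

theorem eq_zero_of_integral_eq_zero_of_integral_mul_eq_zero {φ G : ℝ → ℝ} {a b r : ℝ}
    (hab : a < b) (hr : r ∈ Icc a b) (hφ : ContinuousOn φ (Icc a b))
    (hGc : ContinuousOn G (Icc a b)) (hG : StrictMonoOn G (Icc a b))
    (h₁ : NoSignChangeOn φ (Icc a r)) (h₂ : NoSignChangeOn φ (Icc r b))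
    (h0 : ∫ t in a..b, φ t = 0) (h1 : ∫ t in a..b, φ t * G t = 0) :
    ∀ t ∈ Icc a b, t ≠ r → φ t = 0 := by
  rcases NoSignChangeOn.or_mul_sub hG.monotoneOn hr h₁ h₂ with h | h
  · exact fun t ht _ => h.eq_zero_of_integral_eq_zero hab hφ h0 t ht
  intro t ht htr
  have hint : IntervalIntegrable φ volume a b := hφ.intervalIntegrable_of_Icc hab.le
  have hmul_int : IntervalIntegrable (fun t => φ t * G t) volume a b :=
    (hφ.mul hGc).intervalIntegrable_of_Icc hab.le
  have hmul : ∫ t in a..b, φ t * (G t - G r) = 0 := by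
    simp only [mul_sub, intervalIntegral.integral_sub hmul_int (hint.mul_const _),
      intervalIntegral.integral_mul_const, h0, h1, zero_mul, sub_zero]
  have := h.eq_zero_of_integral_eq_zero hab (hφ.mul (hGc.sub continuousOn_const)) hmul t ht
  exact (mul_eq_zero.1 this).resolve_right (sub_ne_zero.2 fun hGt => htr (hG.injOn ht hr hGt))

theorem Polynomial.eq_zero_of_eval_sq_eq_zero (p : Polynomial ℝ) {r : ℝ}
    (h : ∀ t ∈ Icc (0 : ℝ) 1, t ≠ r → p.eval (t ^ 2) = 0) : p = 0 := by
  refine p.eq_zero_of_infinite_isRoot (((Icc_infinite zero_lt_one).sdiff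
    (finite_singleton (r ^ 2))).mono ?_)
  rintro s ⟨hs, hsr⟩
  have hsqrt : √s ∈ Icc (0 : ℝ) 1 := ⟨Real.sqrt_nonneg s, Real.sqrt_le_one.2 hs.2⟩
  have := h √s hsqrt (by rintro rfl; exact hsr (Real.sq_sqrt hs.1).symm)
  rwa [Real.sq_sqrt hs.1] at this

theorem Polynomial.eq_zero_of_integral_eval_sq_eq_zero (p : Polynomial ℝ) {G : ℝ → ℝ}
    (hsign : ChangesSignAtMostTwiceOn fun t => p.eval (t ^ 2))
    (hGc : ContinuousOn G (Icc 0 1)) (hG : StrictMonoOn G (Icc 0 1))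
    (h0 : ∫ t in 0..1, p.eval (t ^ 2) = 0) (h1 : ∫ t in 0..1, p.eval (t ^ 2) * G t = 0) :
    p = 0 := by
  obtain ⟨r, hr, h₁, h₂⟩ := hsign.exists_split_of_even fun t => by simp only [neg_sq]
  exact p.eq_zero_of_eval_sq_eq_zero <| eq_zero_of_integral_eq_zero_of_integral_mul_eq_zero
    zero_lt_one hr (by fun_prop) hGc hG h₁ h₂ h0 h1

theorem integral_neg_self_eq_integral_add_comp_neg {F : ℝ → ℝ} {a : ℝ}
    (hF : IntervalIntegrable F volume (-a) a) :
    ∫ t in -a..a, F t = ∫ t in 0..a, (F t + F (-t)) := by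
  have h0 : (0 : ℝ) ∈ uIcc (-a) a := by
    rcases le_total 0 a with ha | ha <;> simp [ha]
  have h₁ : IntervalIntegrable F volume (-a) 0 := hF.mono_set (uIcc_subset_uIcc left_mem_uIcc h0)
  have h₂ : IntervalIntegrable F volume 0 a := hF.mono_set (uIcc_subset_uIcc h0 right_mem_uIcc)
  have h₃ : IntervalIntegrable (fun t => F (-t)) volume 0 a := by
    simpa using ((IntervalIntegrable.iff_comp_neg).mp h₁).symm
  rw [← intervalIntegral.integral_add_adjacent_intervals h₁ h₂,
    intervalIntegral.integral_add h₂ h₃, intervalIntegral.integral_comp_neg, neg_zero, add_comm]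

theorem integral_neg_self_mul_eq_two_mul {f P w : ℝ → ℝ} {a : ℝ}
    (hfw : IntervalIntegrable (fun t => f t * w t) volume (-a) a)
    (hf : ∀ t, f t + f (-t) = 2 * P t) (hw : ∀ t, w (-t) = w t) :
    ∫ t in -a..a, f t * w t = 2 * ∫ t in 0..a, P t * w t := by
  rw [integral_neg_self_eq_integral_add_comp_neg hfw]
  simp_rw [hw, ← add_mul, hf, mul_assoc, intervalIntegral.integral_const_mul]

/-- Let `n` be a positive even integer, `g(t) = t^(n-1)`, and let
`f(t) = p(t^2) + t q(t^2)` be a real polynomial whose even part `t ↦ p(t^2)`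
changes sign at most two times on `[-1,1]`. If the Abel equation
`x' = f(t) x^3 + g(t) x^2` on `[-1,1]` has a center at `x = 0`, then all moments
`m_k = ∫_{-1}^1 f(t) G(t)^k dt`, `k ≥ 0`, vanish, where `G(t) = (t^n − 1)/n`. -/
theorem all_moments_vanish_of_center
    (n : ℕ) (hn : 0 < n) (hneven : Even n)
    (p q : Polynomial ℝ)
    (f : ℝ → ℝ) (hfpq : ∀ t : ℝ, f t = p.eval (t ^ 2) + t * q.eval (t ^ 2))
    (hsign : ChangesSignAtMostTwiceOn (fun t : ℝ => p.eval (t ^ 2)))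
    (hcenter : HasCenter f (fun t : ℝ => t ^ (n - 1)) (-1) 1) :
    ∀ k : ℕ, ∫ t in (-1 : ℝ)..1, f t * ((t ^ n - 1) / n) ^ k = 0 := by
  set G : ℝ → ℝ := fun t => (t ^ n - 1) / n
  have hf : Continuous f := by rw [funext hfpq]; fun_prop
  have hsym : ∀ t, f t + f (-t) = 2 * p.eval (t ^ 2) := fun t => by rw [hfpq, hfpq, neg_sq]; ring
  have hGeven : ∀ t, G (-t) = G t := fun t => by simp only [G, hneven.neg_pow]
  have hG : ∀ t, HasDerivAt G (t ^ (n - 1)) t := fun t =>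
    ((hasDerivAt_pow n t).sub_const 1).div_const (n : ℝ) |>.congr_deriv (by field_simp)
  have hGc : Continuous G := continuous_iff_continuousAt.2 fun t => (hG t).continuousAt
  obtain ⟨hm₀, hm₁⟩ := hcenter.integral_eq_zero_and_integral_mul_eq_zero hf.continuousOn
    (by fun_prop) (fun t _ => (hG t).hasDerivWithinAt) (by simp [G, hneven.neg_one_pow])
    (by simp [G])
  have hP₀ : ∫ t in 0..1, p.eval (t ^ 2) = 0 := by
    have := integral_neg_self_mul_eq_two_mul (a := 1) (w := fun _ => 1)
      ((hf.intervalIntegrable _ _).mul_const 1) hsym fun _ => rfl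
    simp only [mul_one, hm₀] at this
    linarith
  have hP₁ : ∫ t in 0..1, p.eval (t ^ 2) * G t = 0 := by
    have := integral_neg_self_mul_eq_two_mul (a := 1) ((hf.mul hGc).intervalIntegrable _ _)
      hsym hGeven
    rw [hm₁] at this
    linarith
  have hp : p = 0 := p.eq_zero_of_integral_eval_sq_eq_zero hsign hGc.continuousOn
    (fun a ha b _ hab => div_lt_div_of_pos_right
      (by linarith [pow_lt_pow_left₀ hab ha.1 hn.ne']) (by positivity)) hP₀ hP₁
  intro k
  have hodd : ∀ t, f t + f (-t) = 2 * 0 := fun t => by simpa [hp] using hsym t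
  simpa using integral_neg_self_mul_eq_two_mul (a := 1) (w := fun t => G t ^ k)
    ((hf.mul (hGc.pow k)).intervalIntegrable _ _) hodd fun t => by rw [hGeven]
end

section
/- Let f = F' and g = G' be real polynomials satisfying the Polynomial Composition Condition on [a,b]: there exist real polynomials F̃, G̃ and W with F(t) = F̃(W(t)), G(t) = G̃(W(t)) for all t, and W(a) = W(b). Then the Abel equation x'(t) = f(t)x(t)^3 + g(t)x(t)^2 has a center on [a,b]. -/
open MeasureTheory Polynomial

/-! Write `F = F̃ ∘ W` and `G = G̃ ∘ W`. If `y` solves the reduced equation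
`y' = F̃'(u) y³ + G̃'(u) y²` on an interval containing `W([a, b])`, then `y ∘ W` solves the Abel
equation, by the chain rule. Since the reduced field is `O(y²)`, such a `y` exists on the whole
interval once `|y(W(a))|` is small. By uniqueness, a solution `x` with `|x(a)|` small is `y ∘ W`
for `y(W(a)) = x(a)`, so `x(b) = y(W(b)) = y(W(a)) = x(a)`. -/

open Set Metric
open scoped NNReal

theorem IsCompact.exists_bound_of_continuousOn₂ {α E F : Type*} [TopologicalSpace α]
    [SeminormedAddCommGroup E] [SeminormedAddCommGroup F] {s : Set α} (hs : IsCompact s)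
    {f : α → E} {g : α → F} (hf : ContinuousOn f s) (hg : ContinuousOn g s) :
    ∃ K : ℝ≥0, ∀ t ∈ s, ‖f t‖ ≤ K ∧ ‖g t‖ ≤ K := by
  obtain ⟨C, hC⟩ := hs.exists_bound_of_continuousOn (hf.prodMk hg)
  refine ⟨C.toNNReal, fun t ht => ⟨?_, ?_⟩⟩
  · exact (norm_fst_le (f t, g t)).trans ((hC t ht).trans (Real.le_coe_toNNReal C))
  · exact (norm_snd_le (f t, g t)).trans ((hC t ht).trans (Real.le_coe_toNNReal C))

section ODE

variable {E : Type*} [NormedAddCommGroup E] [NormedSpace ℝ E]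

/-- A solution on a compact interval is bounded, so Lipschitz bounds on balls suffice. -/
theorem ODE_solution_unique_of_lipschitzOnWith_closedBall {v : ℝ → E → E} {a b : ℝ}
    {x y : ℝ → E}
    (hv : ∀ R : ℝ≥0, ∃ L, ∀ t ∈ Icc a b, LipschitzOnWith L (v t) (closedBall 0 R))
    (hx : ∀ t ∈ Icc a b, HasDerivWithinAt x (v t (x t)) (Icc a b) t)
    (hy : ∀ t ∈ Icc a b, HasDerivWithinAt y (v t (y t)) (Icc a b) t)
    (ha : x a = y a) :
    EqOn x y (Icc a b) := by
  have hxc : ContinuousOn x (Icc a b) := fun t ht => (hx t ht).continuousWithinAt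
  have hyc : ContinuousOn y (Icc a b) := fun t ht => (hy t ht).continuousWithinAt
  obtain ⟨R, hR⟩ := isCompact_Icc.exists_bound_of_continuousOn₂ hxc hyc
  obtain ⟨L, hL⟩ := hv R
  have hIci {z : ℝ → E} (hz : ∀ t ∈ Icc a b, HasDerivWithinAt z (v t (z t)) (Icc a b) t) :
      ∀ t ∈ Ico a b, HasDerivWithinAt z (v t (z t)) (Ici t) t := fun t ht =>
    (hz t (Ico_subset_Icc_self ht)).mono_of_mem_nhdsWithin (Icc_mem_nhdsGE_of_mem ht)
  exact ODE_solution_unique_of_mem_Icc_right (s := fun _ => closedBall 0 R)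
    (fun t ht => hL t (Ico_subset_Icc_self ht)) hxc (hIci hx)
    (fun t ht => mem_closedBall_zero_iff.2 (hR t (Ico_subset_Icc_self ht)).1) hyc (hIci hy)
    (fun t ht => mem_closedBall_zero_iff.2 (hR t (Ico_subset_Icc_self ht)).2) ha

theorem exists_forall_hasDerivWithinAt_of_norm_le_mul_sq [CompleteSpace E] {v : ℝ → E → E}
    {tmin tmax : ℝ} (t₀ : Icc tmin tmax) {C L : ℝ≥0}
    (hlip : ∀ t ∈ Icc tmin tmax, LipschitzOnWith L (v t) (closedBall 0 1))
    (hcont : ∀ x ∈ closedBall (0 : E) 1, ContinuousOn (v · x) (Icc tmin tmax))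
    (hle : ∀ t ∈ Icc tmin tmax, ∀ x ∈ closedBall (0 : E) 1, ‖v t x‖ ≤ C * ‖x‖ ^ 2) :
    ∃ δ > 0, ∀ x₀ : E, ‖x₀‖ < δ → ∃ x : ℝ → E, x t₀ = x₀ ∧
      ∀ t ∈ Icc tmin tmax, HasDerivWithinAt x (v t (x t)) (Icc tmin tmax) t := by
  set T : ℝ := tmax - tmin
  have hT : 0 ≤ T := sub_nonneg.2 (t₀.2.1.trans t₀.2.2)
  set ρ : ℝ≥0 := ⟨min (1 / 2) (1 + 4 * C * T)⁻¹, by positivity⟩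
  have hρ : (0 : ℝ) < ρ := lt_min (by norm_num) (by positivity)
  have hρ_half : (ρ : ℝ) ≤ 1 / 2 := min_le_left _ _
  have hρT : 4 * C * T * ρ ≤ 1 := by
    have h : (ρ : ℝ) ≤ (1 + 4 * C * T)⁻¹ := min_le_right _ _
    have := mul_le_mul_of_nonneg_left h (by positivity : (0 : ℝ) ≤ 1 + 4 * C * T)
    rw [mul_inv_cancel₀ (by positivity)] at this
    linarith
  refine ⟨ρ, hρ, fun x₀ hx₀ => ?_⟩
  -- On `closedBall x₀ ρ ⊆ closedBall 0 (2ρ)` the field is `O(ρ²)`: a solution needs time `≳ 1/ρ`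
  -- to leave the ball, and `ρ` is small enough that this exceeds the length of `[tmin, tmax]`.
  have hball : closedBall x₀ ρ ⊆ closedBall 0 (2 * ρ) :=
    closedBall_subset_closedBall' (by rw [dist_zero_right]; linarith)
  have hball₁ : closedBall x₀ ρ ⊆ closedBall 0 1 :=
    hball.trans (closedBall_subset_closedBall (by linarith))
  have hpl : IsPicardLindelof v t₀ x₀ ρ 0 (4 * C * ρ ^ 2) L := by
    refine ⟨fun t ht => (hlip t ht).mono hball₁, fun x hx => hcont x (hball₁ hx),
      fun t ht x hx => ?_, ?_⟩
    · have hx2 : ‖x‖ ≤ 2 * ρ := mem_closedBall_zero_iff.1 (hball hx)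
      calc ‖v t x‖ ≤ C * ‖x‖ ^ 2 := hle t ht x (hball₁ hx)
        _ ≤ C * (2 * ρ) ^ 2 := by gcongr
        _ = (4 * C * ρ ^ 2 : ℝ≥0) := by push_cast; ring
    · have hmax : max (tmax - t₀) (t₀ - tmin) ≤ T :=
        max_le (by linarith [t₀.2.1]) (by linarith [t₀.2.2])
      push_cast
      calc 4 * C * ρ ^ 2 * max (tmax - t₀) (t₀ - tmin) ≤ 4 * C * ρ ^ 2 * T := by gcongr
        _ = 4 * C * T * ρ * ρ := by ring
        _ ≤ 1 * ρ := by gcongr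
        _ = ρ - 0 := by ring
  exact hpl.exists_eq_forall_mem_Icc_hasDerivWithinAt₀

end ODE

def abelField (f g : ℝ → ℝ) (t y : ℝ) : ℝ := f t * y ^ 3 + g t * y ^ 2

theorem lipschitzOnWith_cubic_closedBall {A B : ℝ} {K R : ℝ≥0} (hA : |A| ≤ K) (hB : |B| ≤ K) :
    LipschitzOnWith (3 * K * R ^ 2 + 2 * K * R) (fun y : ℝ => A * y ^ 3 + B * y ^ 2)
      (closedBall 0 R) := by
  refine (convex_closedBall 0 R).lipschitzOnWith_of_nnnorm_hasDerivWithin_le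
    (f' := fun y => A * (3 * y ^ 2) + B * (2 * y)) (fun y _ => ?_) (fun y hy => ?_)
  · exact (((hasDerivAt_pow 3 y).const_mul A).add ((hasDerivAt_pow 2 y).const_mul B))
      |>.hasDerivWithinAt |>.congr_deriv (by push_cast; ring)
  · have hy : |y| ≤ R := by simpa using hy
    rw [← NNReal.coe_le_coe, coe_nnnorm, Real.norm_eq_abs]
    push_cast
    calc |A * (3 * y ^ 2) + B * (2 * y)| ≤ |A| * (3 * |y| ^ 2) + |B| * (2 * |y|) := by
          refine (abs_add_le _ _).trans_eq ?_
          simp [abs_mul]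
      _ ≤ K * (3 * R ^ 2) + K * (2 * R) := by gcongr
      _ = 3 * K * R ^ 2 + 2 * K * R := by ring

theorem abs_cubic_le_mul_sq {A B y K : ℝ} (hA : |A| ≤ K) (hB : |B| ≤ K) (hy : |y| ≤ 1) :
    |A * y ^ 3 + B * y ^ 2| ≤ 2 * K * |y| ^ 2 := by
  have hy3 : |y| ^ 3 ≤ |y| ^ 2 := pow_le_pow_of_le_one (abs_nonneg y) hy (by norm_num)
  calc |A * y ^ 3 + B * y ^ 2| ≤ |A| * |y| ^ 3 + |B| * |y| ^ 2 :=
        (abs_add_le _ _).trans_eq (by rw [abs_mul, abs_mul, abs_pow, abs_pow])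
    _ ≤ K * |y| ^ 2 + K * |y| ^ 2 :=
        add_le_add (mul_le_mul hA hy3 (by positivity) ((abs_nonneg A).trans hA))
          (mul_le_mul_of_nonneg_right hB (by positivity))
    _ = 2 * K * |y| ^ 2 := by ring

section Abel

variable {f g : ℝ → ℝ} {s : Set ℝ}

theorem exists_forall_lipschitzOnWith_abelField (hs : IsCompact s) (hf : ContinuousOn f s)
    (hg : ContinuousOn g s) (R : ℝ≥0) :
    ∃ L, ∀ t ∈ s, LipschitzOnWith L (abelField f g t) (closedBall 0 R) := by
  obtain ⟨K, hK⟩ := hs.exists_bound_of_continuousOn₂ hf hg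
  exact ⟨_, fun t ht => lipschitzOnWith_cubic_closedBall (hK t ht).1 (hK t ht).2⟩

theorem exists_abelField_solution {a b : ℝ} (t₀ : Icc a b) (hf : ContinuousOn f (Icc a b))
    (hg : ContinuousOn g (Icc a b)) :
    ∃ δ > 0, ∀ x₀ : ℝ, |x₀| < δ → ∃ x : ℝ → ℝ, x t₀ = x₀ ∧
      ∀ t ∈ Icc a b, HasDerivWithinAt x (abelField f g t (x t)) (Icc a b) t := by
  obtain ⟨K, hK⟩ := isCompact_Icc.exists_bound_of_continuousOn₂ hf hg
  obtain ⟨L, hL⟩ := exists_forall_lipschitzOnWith_abelField isCompact_Icc hf hg 1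
  refine exists_forall_hasDerivWithinAt_of_norm_le_mul_sq t₀ (C := 2 * K)
    (by simpa using hL) (fun y _ => (hf.mul continuousOn_const).add (hg.mul continuousOn_const))
    (fun t ht y hy => ?_)
  push_cast
  exact abs_cubic_le_mul_sq (hK t ht).1 (hK t ht).2 (by simpa using hy)

theorem abelField_solution_unique {a b : ℝ} {x y : ℝ → ℝ} (hf : ContinuousOn f (Icc a b))
    (hg : ContinuousOn g (Icc a b))
    (hx : ∀ t ∈ Icc a b, HasDerivWithinAt x (abelField f g t (x t)) (Icc a b) t)
    (hy : ∀ t ∈ Icc a b, HasDerivWithinAt y (abelField f g t (y t)) (Icc a b) t)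
    (ha : x a = y a) :
    EqOn x y (Icc a b) :=
  ODE_solution_unique_of_lipschitzOnWith_closedBall
    (exists_forall_lipschitzOnWith_abelField isCompact_Icc hf hg) hx hy ha

theorem abelField_solution_comp {w w' y : ℝ → ℝ} {s' : Set ℝ}
    (hy : ∀ u ∈ s', HasDerivWithinAt y (abelField f g u (y u)) s' u)
    (hw : ∀ t ∈ s, HasDerivWithinAt w (w' t) s t) (hws : MapsTo w s s') :
    ∀ t ∈ s, HasDerivWithinAt (y ∘ w)
      (abelField (fun t => w' t * f (w t)) (fun t => w' t * g (w t)) t (y (w t))) s t :=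
  fun t ht => ((hy (w t) (hws ht)).comp t (hw t ht) hws).congr_deriv <| by
    simp only [abelField]; ring

end Abel

/-- If `f = F'`, `g = G'` satisfy the Polynomial Composition Condition on `[a,b]`
(`F = F̃ ∘ W`, `G = G̃ ∘ W` with `W(a) = W(b)`), then the Abel equation
`x' = f(t) x^3 + g(t) x^2` has a center on `[a,b]`. -/
theorem center_of_polynomial_composition_condition
    (a b : ℝ) (hab : a ≤ b)
    (F G Ftilde Gtilde W : Polynomial ℝ)
    (hF : F = Ftilde.comp W)
    (hG : G = Gtilde.comp W)
    (hW : W.eval a = W.eval b) :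
    HasCenter (fun t : ℝ => F.derivative.eval t) (fun t : ℝ => G.derivative.eval t) a b := by
  have hWab := (isCompact_Icc (a := a) (b := b)).image W.continuous
  obtain ⟨m, M, hWM⟩ := bddBelow_bddAbove_iff_subset_Icc.1 ⟨hWab.bddBelow, hWab.bddAbove⟩
  rw [← mapsTo_iff_image_subset] at hWM
  obtain ⟨δ, hδ, hsol⟩ := exists_abelField_solution ⟨W.eval a, hWM ⟨le_rfl, hab⟩⟩
    Ftilde.derivative.continuous.continuousOn Gtilde.derivative.continuous.continuousOn
  refine ⟨δ, hδ, fun x hx hxa => ?_⟩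
  obtain ⟨y, hya, hy⟩ := hsol (x a) hxa
  have hz := abelField_solution_comp hy (fun t _ => (W.hasDerivAt t).hasDerivWithinAt) hWM
  simp only [← eval_comp, ← eval_mul, ← derivative_comp, ← hF, ← hG] at hz
  have hxz := abelField_solution_unique (by fun_prop) (by fun_prop) hx hz hya.symm
  calc x a = y (W.eval b) := by rw [← hW, hya]
    _ = x b := (hxz ⟨hab, le_rfl⟩).symm
end

section
/- Let f, g be continuous on [a,b] and suppose there exist continuous functions f̂, ĝ and a continuously differentiable function σ on [a,b] with σ(a) = σ(b), such that f(t) = f̂(σ(t))σ'(t) and g(t) = ĝ(σ(t))σ'(t) for all t ∈ [a,b]. Then the Abel equation x'(t) = f(t)x(t)^3 + g(t)x(t)^2 has a center on [a,b]. -/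
/-!
The equation is the pull-back along `σ` of the reduced equation `y' = f̂(s) y³ + ĝ(s) y²` on an
interval `[lo, hi] ⊇ σ([a, b])`. Its right-hand side is `O(y²)`, so by Picard–Lindelöf every small
initial value `y(σ a) = x(a)` gives a solution `y` on all of `[lo, hi]`. The chain rule makes
`y ∘ σ` a solution of the Abel equation with the same initial value, hence `x = y ∘ σ` on `[a, b]`
by uniqueness, and `x(b) = y(σ b) = y(σ a) = x(a)`.
-/

open MeasureTheory

open Set Metric
open scoped NNReal

lemma IsCompact.exists_forall_abs_add_abs_le {s : Set ℝ} (hs : IsCompact s) {c d : ℝ → ℝ}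
    (hc : ContinuousOn c s) (hd : ContinuousOn d s) : ∃ C, ∀ t ∈ s, |c t| + |d t| ≤ C := by
  obtain ⟨C, hC⟩ := hs.bddAbove_image (hc.abs.add hd.abs)
  exact ⟨C, fun t ht => hC (mem_image_of_mem _ ht)⟩

lemma abs_cubic_add_sq_le {c d u : ℝ} (hu : |u| ≤ 1) :
    |c * u ^ 3 + d * u ^ 2| ≤ (|c| + |d|) * u ^ 2 := by
  have hcube : |u ^ 3| = |u| * u ^ 2 := by rw [abs_pow, ← sq_abs u]; ring
  calc |c * u ^ 3 + d * u ^ 2| ≤ |c| * |u| * u ^ 2 + |d| * u ^ 2 := by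
        refine (abs_add_le _ _).trans_eq ?_
        rw [abs_mul, abs_mul, hcube, abs_pow, sq_abs, mul_assoc]
    _ ≤ (|c| + |d|) * u ^ 2 := by
        nlinarith [mul_nonneg (mul_nonneg (abs_nonneg c) (sq_nonneg u)) (sub_nonneg.2 hu)]

lemma lipschitzOnWith_cubic_add_sq {c d M : ℝ} {K : ℝ≥0}
    (hK : 3 * |c| * M ^ 2 + 2 * |d| * M ≤ K) :
    LipschitzOnWith K (fun u => c * u ^ 3 + d * u ^ 2) (closedBall 0 M) := by
  refine LipschitzOnWith.of_dist_le_mul fun u hu v hv => ?_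
  rw [mem_closedBall, Real.dist_eq, sub_zero] at hu hv
  have hquad : |u ^ 2 + u * v + v ^ 2| ≤ 3 * M ^ 2 := by
    obtain ⟨hu₁, hu₂⟩ := abs_le.mp hu
    obtain ⟨hv₁, hv₂⟩ := abs_le.mp hv
    rw [abs_of_nonneg (by nlinarith [sq_nonneg (u + v)])]
    nlinarith [mul_nonneg (sub_nonneg.2 hu₂) (sub_nonneg.2 hv₁),
      mul_nonneg (sub_nonneg.2 hu₁) (sub_nonneg.2 hv₂)]
  have hlin : |u + v| ≤ 2 * M := by linarith [abs_add_le u v]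
  have hfactor : c * u ^ 3 + d * u ^ 2 - (c * v ^ 3 + d * v ^ 2)
      = (c * (u ^ 2 + u * v + v ^ 2) + d * (u + v)) * (u - v) := by ring
  rw [Real.dist_eq, Real.dist_eq, hfactor, abs_mul]
  refine mul_le_mul_of_nonneg_right ?_ (abs_nonneg _)
  calc |c * (u ^ 2 + u * v + v ^ 2) + d * (u + v)|
      ≤ |c| * |u ^ 2 + u * v + v ^ 2| + |d| * |u + v| :=
        (abs_add_le _ _).trans_eq (by rw [abs_mul, abs_mul])
    _ ≤ |c| * (3 * M ^ 2) + |d| * (2 * M) := by gcongr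
    _ ≤ K := by linarith

theorem exists_pos_forall_exists_abel_solution {c d : ℝ → ℝ} {lo hi s₀ : ℝ}
    (hc : ContinuousOn c (Icc lo hi)) (hd : ContinuousOn d (Icc lo hi)) (hs₀ : s₀ ∈ Icc lo hi) :
    ∃ δ > 0, ∀ y₀, |y₀| < δ → ∃ y : ℝ → ℝ, y s₀ = y₀ ∧
      ∀ s ∈ Icc lo hi, HasDerivWithinAt y (c s * y s ^ 3 + d s * y s ^ 2) (Icc lo hi) s := by
  obtain ⟨C, hC⟩ := isCompact_Icc.exists_forall_abs_add_abs_le hc hd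
  have hC₀ : 0 ≤ C := (add_nonneg (abs_nonneg _) (abs_nonneg _)).trans (hC s₀ hs₀)
  have hT : 0 ≤ hi - lo := sub_nonneg.2 (hs₀.1.trans hs₀.2)
  -- On `closedBall 0 (2ρ)` the field is bounded by `4Cρ²` and `3C`-Lipschitz; this `ρ` makes
  -- `4Cρ² (hi - lo) ≤ ρ`, so solutions starting in `closedBall 0 ρ` live on all of `[lo, hi]`.
  set ρ : ℝ := 1 / (4 * C * (hi - lo) + 2)
  have hρ : 0 < ρ := by positivity
  have hρ_eq : ρ * (4 * C * (hi - lo) + 2) = 1 := one_div_mul_cancel (by positivity)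
  have hCTρ : 0 ≤ C * (hi - lo) * ρ := by positivity
  have hρ_half : 2 * ρ ≤ 1 := by nlinarith
  have hρ_time : 4 * C * ρ * (hi - lo) ≤ 1 := by nlinarith
  have hpl : IsPicardLindelof (fun s y => c s * y ^ 3 + d s * y ^ 2) (⟨s₀, hs₀⟩ : Icc lo hi) 0
      (⟨2 * ρ, by positivity⟩ : ℝ≥0) (⟨ρ, hρ.le⟩ : ℝ≥0)
      (⟨4 * C * ρ ^ 2, by positivity⟩ : ℝ≥0) (⟨3 * C, by positivity⟩ : ℝ≥0) := by
    refine ⟨fun s hs => ?_, fun y _ => ?_, fun s hs y hy => ?_, ?_⟩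
    · apply lipschitzOnWith_cubic_add_sq
      change 3 * |c s| * (2 * ρ) ^ 2 + 2 * |d s| * (2 * ρ) ≤ 3 * C
      have hρ_sq : (2 * ρ) ^ 2 ≤ 1 := pow_le_one₀ (by positivity) hρ_half
      nlinarith [hC s hs, mul_le_mul_of_nonneg_left hρ_sq (abs_nonneg (c s)),
        mul_le_mul_of_nonneg_left hρ_half (abs_nonneg (d s)), abs_nonneg (d s)]
    · fun_prop
    · have hy' : |y| ≤ 2 * ρ := mem_closedBall_zero_iff.1 hy
      calc ‖c s * y ^ 3 + d s * y ^ 2‖ ≤ (|c s| + |d s|) * y ^ 2 :=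
            abs_cubic_add_sq_le (hy'.trans hρ_half)
        _ ≤ C * (2 * ρ) ^ 2 :=
            mul_le_mul (hC s hs) (sq_le_sq' (abs_le.1 hy').1 (abs_le.1 hy').2) (sq_nonneg y) hC₀
        _ = 4 * C * ρ ^ 2 := by ring
    · have hmax : max (hi - s₀) (s₀ - lo) ≤ hi - lo :=
        max_le (by linarith [hs₀.1]) (by linarith [hs₀.2])
      change 4 * C * ρ ^ 2 * max (hi - s₀) (s₀ - lo) ≤ 2 * ρ - ρ
      nlinarith [mul_le_mul_of_nonneg_left hmax (by positivity : 0 ≤ 4 * C * ρ ^ 2)]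
  refine ⟨ρ, hρ, fun y₀ hy₀ => ?_⟩
  exact hpl.exists_eq_forall_mem_Icc_hasDerivWithinAt (mem_closedBall_zero_iff.2 hy₀.le)

theorem eqOn_of_abel_solutions {c d x z : ℝ → ℝ} {a b : ℝ}
    (hc : ContinuousOn c (Icc a b)) (hd : ContinuousOn d (Icc a b))
    (hx : ∀ t ∈ Icc a b, HasDerivWithinAt x (c t * x t ^ 3 + d t * x t ^ 2) (Icc a b) t)
    (hz : ∀ t ∈ Icc a b, HasDerivWithinAt z (c t * z t ^ 3 + d t * z t ^ 2) (Icc a b) t)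
    (ha : x a = z a) : EqOn x z (Icc a b) := by
  have hxc : ContinuousOn x (Icc a b) := fun t ht => (hx t ht).continuousWithinAt
  have hzc : ContinuousOn z (Icc a b) := fun t ht => (hz t ht).continuousWithinAt
  obtain ⟨C, hC⟩ := isCompact_Icc.exists_forall_abs_add_abs_le hc hd
  obtain ⟨M, hM⟩ := isCompact_Icc.exists_forall_abs_add_abs_le hxc hzc
  have hxM : ∀ t ∈ Ico a b, x t ∈ closedBall 0 M := fun t ht => by
    rw [mem_closedBall_zero_iff, Real.norm_eq_abs]
    linarith [hM t (Ico_subset_Icc_self ht), abs_nonneg (z t)]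
  have hzM : ∀ t ∈ Ico a b, z t ∈ closedBall 0 M := fun t ht => by
    rw [mem_closedBall_zero_iff, Real.norm_eq_abs]
    linarith [hM t (Ico_subset_Icc_self ht), abs_nonneg (x t)]
  have hright {w : ℝ → ℝ}
      (hw : ∀ t ∈ Icc a b, HasDerivWithinAt w (c t * w t ^ 3 + d t * w t ^ 2) (Icc a b) t) :
      ∀ t ∈ Ico a b, HasDerivWithinAt w (c t * w t ^ 3 + d t * w t ^ 2) (Ici t) t :=
    fun t ht => (hw t (Ico_subset_Icc_self ht)).mono_of_mem_nhdsWithin (Icc_mem_nhdsGE_of_mem ht)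
  refine ODE_solution_unique_of_mem_Icc_right (K := (3 * C * M ^ 2 + 2 * C * M).toNNReal)
    (v := fun t u => c t * u ^ 3 + d t * u ^ 2) (fun t ht => ?_) hxc (hright hx) hxM
    hzc (hright hz) hzM ha
  have ht' := Ico_subset_Icc_self ht
  have hM₀ : 0 ≤ M := by linarith [hM t ht', abs_nonneg (x t), abs_nonneg (z t)]
  refine lipschitzOnWith_cubic_add_sq (le_trans ?_ (Real.le_coe_toNNReal _))
  have hct : |c t| ≤ C := by linarith [hC t ht', abs_nonneg (d t)]
  have hdt : |d t| ≤ C := by linarith [hC t ht', abs_nonneg (c t)]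
  gcongr

theorem hasDerivWithinAt_comp_of_abel {c d f g y σ σ' : ℝ → ℝ} {s t : Set ℝ}
    (hy : ∀ u ∈ t, HasDerivWithinAt y (c u * y u ^ 3 + d u * y u ^ 2) t u)
    (hσ : ∀ τ ∈ s, HasDerivWithinAt σ (σ' τ) s τ) (hmaps : MapsTo σ s t)
    (hf : ∀ τ ∈ s, f τ = c (σ τ) * σ' τ) (hg : ∀ τ ∈ s, g τ = d (σ τ) * σ' τ) :
    ∀ τ ∈ s, HasDerivWithinAt (y ∘ σ) (f τ * (y ∘ σ) τ ^ 3 + g τ * (y ∘ σ) τ ^ 2) s τ := by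
  intro τ hτ
  refine ((hy (σ τ) (hmaps hτ)).comp τ (hσ τ hτ) hmaps).congr_deriv ?_
  rw [hf τ hτ, hg τ hτ, Function.comp_apply]
  ring

theorem center_of_composition_condition_general
    (a b : ℝ) (hab : a ≤ b)
    (f g : ℝ → ℝ)
    (hf : ContinuousOn f (Set.Icc a b))
    (hg : ContinuousOn g (Set.Icc a b))
    (fhat ghat σ σ' : ℝ → ℝ)
    (hfhat : Continuous fhat)
    (hghat : Continuous ghat)
    (hσ : ∀ t ∈ Set.Icc a b, HasDerivWithinAt σ (σ' t) (Set.Icc a b) t)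
    (hclosed : σ a = σ b)
    (hfcomp : ∀ t ∈ Set.Icc a b, f t = fhat (σ t) * σ' t)
    (hgcomp : ∀ t ∈ Set.Icc a b, g t = ghat (σ t) * σ' t) :
    HasCenter f g a b := by
  have hσc : ContinuousOn σ (Icc a b) := fun t ht => (hσ t ht).continuousWithinAt
  have hmaps : MapsTo σ (Icc a b) (Icc (sInf (σ '' Icc a b)) (sSup (σ '' Icc a b))) := by
    rw [← hσc.image_Icc hab]
    exact mapsTo_image σ _
  obtain ⟨δ, hδ, hsolve⟩ := exists_pos_forall_exists_abel_solution hfhat.continuousOn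
    hghat.continuousOn (hmaps (left_mem_Icc.2 hab))
  refine ⟨δ, hδ, fun x hx hxa => ?_⟩
  obtain ⟨y, hya, hy⟩ := hsolve (x a) hxa
  have hxy : EqOn x (y ∘ σ) (Icc a b) :=
    eqOn_of_abel_solutions hf hg hx (hasDerivWithinAt_comp_of_abel hy hσ hmaps hfcomp hgcomp)
      hya.symm
  calc x a = y (σ b) := by rw [← hclosed, hya]
    _ = x b := (hxy (right_mem_Icc.2 hab)).symm

/-- (Alwash–Lloyd) If `f, g` are continuous on `[a,b]` and can be expressed as
`f(t) = f̂(σ(t)) σ'(t)`, `g(t) = ĝ(σ(t)) σ'(t)` with `f̂, ĝ` continuous and `σ`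
continuously differentiable on `[a,b]` and closed (`σ(a) = σ(b)`), then the Abel
equation `x' = f(t) x^3 + g(t) x^2` has a center on `[a,b]`. -/
theorem center_of_composition_condition
    (a b : ℝ) (hab : a ≤ b)
    (f g : ℝ → ℝ)
    (hf : ContinuousOn f (Set.Icc a b))
    (hg : ContinuousOn g (Set.Icc a b))
    (fhat ghat σ σ' : ℝ → ℝ)
    (hfhat : Continuous fhat)
    (hghat : Continuous ghat)
    (hσ : ∀ t ∈ Set.Icc a b, HasDerivWithinAt σ (σ' t) (Set.Icc a b) t)
    (hσ' : ContinuousOn σ' (Set.Icc a b))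
    (hclosed : σ a = σ b)
    (hfcomp : ∀ t ∈ Set.Icc a b, f t = fhat (σ t) * σ' t)
    (hgcomp : ∀ t ∈ Set.Icc a b, g t = ghat (σ t) * σ' t) :
    HasCenter f g a b :=
  center_of_composition_condition_general a b hab f g hf hg fhat ghat σ σ' hfhat hghat hσ hclosed
    hfcomp hgcomp
end

section
/- Let f, g be continuous on [-1,1] and for ρ small let x(t,ρ) denote the solution of the Abel equation x' = f(t)x^3 + g(t)x^2 with x(-1,ρ) = ρ. Then x = 0 is a center of the Abel equation if and only if ∫_{-1}^1 g(t) dt = 0 and there exists ρ_0 > 0 such that ∫_{-1}^1 f(t) x(t,ρ) dt = 0 for all |ρ| < ρ_0. -/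
/-!
Along a solution `x` without zeros, `w = -1/x` satisfies `w' = f x + g`, so
`∫ (f x + g) = 1/x(-1) - 1/x(1)`: a nonzero solution returns, `x(-1) = x(1)`, exactly when
`∫ f x + ∫ g = 0`. A fence argument keeps solutions starting near `0` of size `O(|x(-1)|)`;
there the vector field is Lipschitz, so such solutions are unique and either vanish
identically or never vanish. Finally `∫ f x(·,ρ) = O(ρ)`, which forces `∫ g = 0`.
-/

open MeasureTheory intervalIntegral

open Set Real Filter Topology NNReal

def IsAbelSolution (f g : ℝ → ℝ) (a b : ℝ) (y : ℝ → ℝ) : Prop :=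
  ∀ t ∈ Icc a b, HasDerivWithinAt y (f t * y t ^ 3 + g t * y t ^ 2) (Icc a b) t

theorem lipschitzOnWith_mul_pow_three_add_mul_sq {A B M : ℝ} (h : |A| + |B| ≤ M) :
    LipschitzOnWith (3 * M).toNNReal (fun u : ℝ => A * u ^ 3 + B * u ^ 2) (Icc (-1) 1) := by
  refine LipschitzOnWith.of_dist_le_mul fun z hz w hw => ?_
  have hz1 : |z| ≤ 1 := abs_le.2 hz
  have hw1 : |w| ≤ 1 := abs_le.2 hw
  have hq : |z ^ 2 + z * w + w ^ 2| ≤ 3 := by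
    refine abs_le.2 ⟨by nlinarith [sq_nonneg (z + w)], ?_⟩
    nlinarith [hz.1, hz.2, hw.1, hw.2]
  have hl : |z + w| ≤ 3 := by linarith [abs_add_le z w]
  rw [Real.dist_eq, Real.dist_eq, coe_toNNReal _ (by linarith [abs_nonneg A, abs_nonneg B])]
  calc |A * z ^ 3 + B * z ^ 2 - (A * w ^ 3 + B * w ^ 2)|
        = |A * (z ^ 2 + z * w + w ^ 2) + B * (z + w)| * |z - w| := by
          rw [← abs_mul]; ring_nf
    _ ≤ (|A| * 3 + |B| * 3) * |z - w| := by
          gcongr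
          calc _ ≤ |A * (z ^ 2 + z * w + w ^ 2)| + |B * (z + w)| := abs_add_le _ _
            _ ≤ |A| * 3 + |B| * 3 := by rw [abs_mul, abs_mul]; gcongr
    _ ≤ 3 * M * |z - w| := by gcongr; linarith

theorem exists_lipschitzOnWith_of_continuousOn {f g : ℝ → ℝ} {a b : ℝ}
    (hf : ContinuousOn f (Icc a b)) (hg : ContinuousOn g (Icc a b)) :
    ∃ K : ℝ≥0, ∀ t ∈ Icc a b,
      LipschitzOnWith K (fun u : ℝ => f t * u ^ 3 + g t * u ^ 2) (Icc (-1) 1) := by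
  obtain ⟨M, hM⟩ := isCompact_Icc.exists_bound_of_continuousOn (hf.abs.add hg.abs)
  refine ⟨(3 * M).toNNReal, fun t ht => lipschitzOnWith_mul_pow_three_add_mul_sq ?_⟩
  exact (le_abs_self _).trans (hM t ht)

section

variable {f g y z : ℝ → ℝ} {a b t : ℝ}

namespace IsAbelSolution

theorem continuousOn (hy : IsAbelSolution f g a b y) : ContinuousOn y (Icc a b) :=
  fun t ht => (hy t ht).continuousWithinAt

theorem mono {c d : ℝ} (hy : IsAbelSolution f g a b y) (hcd : Icc c d ⊆ Icc a b) :
    IsAbelSolution f g c d y :=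
  fun t ht => (hy t (hcd ht)).mono hcd

theorem hasDerivWithinAt_Ici (hy : IsAbelSolution f g a b y) (ht : t ∈ Ico a b) :
    HasDerivWithinAt y (f t * y t ^ 3 + g t * y t ^ 2) (Ici t) t :=
  (hy t (Ico_subset_Icc_self ht)).mono_of_mem_nhdsWithin (Icc_mem_nhdsGE_of_mem ht)

theorem hasDerivWithinAt_Iic (hy : IsAbelSolution f g a b y) (ht : t ∈ Ioc a b) :
    HasDerivWithinAt y (f t * y t ^ 3 + g t * y t ^ 2) (Iic t) t :=
  (hy t (Ioc_subset_Icc_self ht)).mono_of_mem_nhdsWithin (Icc_mem_nhdsLE_of_mem ht)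

theorem hasDerivAt (hy : IsAbelSolution f g a b y) (ht : t ∈ Ioo a b) :
    HasDerivAt y (f t * y t ^ 3 + g t * y t ^ 2) t :=
  (hy t (Ioo_subset_Icc_self ht)).hasDerivAt (Icc_mem_nhds ht.1 ht.2)

theorem zero : IsAbelSolution f g a b 0 := fun t _ =>
  (hasDerivWithinAt_const t (Icc a b) (0 : ℝ)).congr_deriv (by simp)

theorem eqOn (hf : ContinuousOn f (Icc a b)) (hg : ContinuousOn g (Icc a b))
    (hy : IsAbelSolution f g a b y) (hz : IsAbelSolution f g a b z)
    (hy1 : ∀ t ∈ Icc a b, |y t| ≤ 1) (hz1 : ∀ t ∈ Icc a b, |z t| ≤ 1)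
    {t₀ : ℝ} (ht₀ : t₀ ∈ Icc a b) (h : y t₀ = z t₀) : EqOn y z (Icc a b) := by
  obtain ⟨K, hK⟩ := exists_lipschitzOnWith_of_continuousOn hf hg
  have hleft : Icc a t₀ ⊆ Icc a b := Icc_subset_Icc_right ht₀.2
  have hright : Icc t₀ b ⊆ Icc a b := Icc_subset_Icc_left ht₀.1
  rw [← Icc_union_Icc_eq_Icc ht₀.1 ht₀.2]
  refine EqOn.union ?_ ?_
  · exact ODE_solution_unique_of_mem_Icc_left
      (fun t ht => hK t (hleft (Ioc_subset_Icc_self ht))) (hy.mono hleft).continuousOn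
      (fun t ht => (hy.mono hleft).hasDerivWithinAt_Iic ht)
      (fun t ht => abs_le.1 (hy1 t (hleft (Ioc_subset_Icc_self ht))))
      (hz.mono hleft).continuousOn (fun t ht => (hz.mono hleft).hasDerivWithinAt_Iic ht)
      (fun t ht => abs_le.1 (hz1 t (hleft (Ioc_subset_Icc_self ht)))) h
  · exact ODE_solution_unique_of_mem_Icc_right
      (fun t ht => hK t (hright (Ico_subset_Icc_self ht))) (hy.mono hright).continuousOn
      (fun t ht => (hy.mono hright).hasDerivWithinAt_Ici ht)
      (fun t ht => abs_le.1 (hy1 t (hright (Ico_subset_Icc_self ht))))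
      (hz.mono hright).continuousOn (fun t ht => (hz.mono hright).hasDerivWithinAt_Ici ht)
      (fun t ht => abs_le.1 (hz1 t (hright (Ico_subset_Icc_self ht)))) h

theorem eqOn_zero (hf : ContinuousOn f (Icc a b)) (hg : ContinuousOn g (Icc a b))
    (hy : IsAbelSolution f g a b y) (hy1 : ∀ t ∈ Icc a b, |y t| ≤ 1)
    {t₀ : ℝ} (ht₀ : t₀ ∈ Icc a b) (h : y t₀ = 0) : EqOn y 0 (Icc a b) :=
  hy.eqOn hf hg zero hy1 (fun _ _ => by simp) ht₀ h

theorem abs_le_mul_exp {K : ℝ≥0} {c : ℝ} (hy : IsAbelSolution f g a b y)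
    (hK : ∀ t ∈ Icc a b,
      LipschitzOnWith K (fun u : ℝ => f t * u ^ 3 + g t * u ^ 2) (Icc (-1) 1))
    (hc : 0 < c) (hya : |y a| ≤ c) (hcb : c * exp ((K + 1) * (b - a)) ≤ 1) :
    ∀ t ∈ Icc a b, |y t| ≤ c * exp ((K + 1) * (t - a)) := by
  -- `K + 1` rather than `K` makes the fence strict.
  refine image_norm_le_of_norm_deriv_right_lt_deriv_boundary hy.continuousOn
    (fun t ht => hy.hasDerivWithinAt_Ici ht) (by simpa using hya)
    (fun t => ((hasDerivAt_id t).sub_const a |>.const_mul (K + 1 : ℝ) |>.exp).const_mul c)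
    fun t ht hyt => ?_
  have hyt_pos : 0 < ‖y t‖ := hyt ▸ by positivity
  have hyt_le : |y t| ≤ 1 := by
    refine (norm_eq_abs (y t) ▸ hyt).le.trans (le_trans ?_ hcb)
    gcongr
    exact ht.2.le
  have hlip : ‖f t * y t ^ 3 + g t * y t ^ 2‖ ≤ K * ‖y t‖ := by
    simpa using (hK t (Ico_subset_Icc_self ht)).dist_le_mul (y t) (abs_le.1 hyt_le) 0
      (by norm_num)
  calc _ ≤ K * ‖y t‖ := hlip
    _ < (K + 1) * ‖y t‖ := by gcongr; exact lt_add_one _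
    _ = _ := by rw [hyt, id]; ring

theorem integral_mul_add_integral_eq (hab : a ≤ b) (hf : ContinuousOn f (Icc a b))
    (hg : ContinuousOn g (Icc a b)) (hy : IsAbelSolution f g a b y)
    (hy0 : ∀ t ∈ Icc a b, y t ≠ 0) :
    (∫ t in a..b, f t * y t) + ∫ t in a..b, g t = (y a)⁻¹ - (y b)⁻¹ := by
  have hfy : ContinuousOn (fun t => f t * y t) (Icc a b) := hf.mul hy.continuousOn
  rw [← intervalIntegral.integral_add (hfy.intervalIntegrable_of_Icc hab)
      (hg.intervalIntegrable_of_Icc hab),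
    intervalIntegral.integral_eq_sub_of_hasDerivAt_of_le hab (f := fun t => -(y t)⁻¹)
      (f' := fun t => f t * y t + g t)
      (hy.continuousOn.inv₀ hy0).neg (fun t ht => ?_) ((hfy.add hg).intervalIntegrable_of_Icc hab)]
  · ring
  · have hyt := hy0 t (Ioo_subset_Icc_self ht)
    refine ((hy.hasDerivAt ht).inv hyt).neg.congr_deriv ?_
    field_simp

theorem eq_iff_integral_mul_add_integral_eq_zero (hab : a ≤ b) (hf : ContinuousOn f (Icc a b))
    (hg : ContinuousOn g (Icc a b)) (hy : IsAbelSolution f g a b y)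
    (hy1 : ∀ t ∈ Icc a b, |y t| ≤ 1) (hya : y a ≠ 0) :
    y a = y b ↔ (∫ t in a..b, f t * y t) + ∫ t in a..b, g t = 0 := by
  have hy0 : ∀ t ∈ Icc a b, y t ≠ 0 := fun t ht h =>
    hya (hy.eqOn_zero hf hg hy1 ht h ⟨le_rfl, hab⟩)
  rw [hy.integral_mul_add_integral_eq hab hf hg hy0, sub_eq_zero, inv_inj]

end IsAbelSolution

theorem exists_forall_isAbelSolution_abs_le (hf : ContinuousOn f (Icc a b))
    (hg : ContinuousOn g (Icc a b)) :
    ∃ C > 0, ∀ y, IsAbelSolution f g a b y → C * |y a| < 1 →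
      ∀ t ∈ Icc a b, |y t| ≤ C * |y a| := by
  obtain ⟨K, hK⟩ := exists_lipschitzOnWith_of_continuousOn hf hg
  set C := exp ((K + 1) * (b - a))
  refine ⟨C, exp_pos _, fun y hy hsmall t ht => le_of_forall_gt_imp_ge_of_dense fun d hd => ?_⟩
  -- The fence starts at `min d 1 / C`: above `|y a|`, and it stays below `1` on `[a, b]`.
  have hd' : C * |y a| < min d 1 := lt_min hd hsmall
  have hc : 0 < min d 1 / C := div_pos ((by positivity : 0 ≤ C * |y a|).trans_lt hd') (exp_pos _)
  calc |y t| ≤ min d 1 / C * exp ((K + 1) * (t - a)) := by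
        refine hy.abs_le_mul_exp hK hc ?_ ?_ t ht
        · rw [le_div_iff₀ (exp_pos _), mul_comm]
          exact hd'.le
        · rw [div_mul_cancel₀ _ (exp_pos _).ne']
          exact min_le_right _ _
    _ ≤ min d 1 / C * C := by gcongr; exact exp_le_exp.2 (by gcongr; exact ht.2)
    _ ≤ d := by rw [div_mul_cancel₀ _ (exp_pos _).ne']; exact min_le_left _ _

theorem abs_integral_mul_le {K c : ℝ} (hab : a ≤ b) (hf : ∀ t ∈ Icc a b, |f t| ≤ K)
    (hy : ∀ t ∈ Icc a b, |y t| ≤ c) : |∫ t in a..b, f t * y t| ≤ K * c * (b - a) := by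
  have h := intervalIntegral.norm_integral_le_of_norm_le_const (a := a) (b := b) (C := K * c)
    (f := fun t => f t * y t) fun t ht => ?_
  · rwa [Real.norm_eq_abs, abs_of_nonneg (sub_nonneg.2 hab)] at h
  rw [uIoc_of_le hab] at ht
  have ht' := Ioc_subset_Icc_self ht
  rw [Real.norm_eq_abs, abs_mul]
  exact mul_le_mul (hf t ht') (hy t ht') (abs_nonneg _) ((abs_nonneg _).trans (hf t ht'))

theorem eq_zero_of_forall_abs_le_mul {A D r₀ : ℝ} (hr₀ : 0 < r₀)
    (h : ∀ r, 0 < r → r < r₀ → |A| ≤ D * r) : A = 0 := by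
  have hlim : Tendsto (fun r => D * r) (𝓝[>] 0) (𝓝 0) := by
    simpa using ((continuous_const_mul D).tendsto 0).mono_left nhdsWithin_le_nhds
  exact abs_nonpos_iff.1 <| ge_of_tendsto hlim <|
    eventually_of_mem (Ioo_mem_nhdsGT hr₀) fun r hr => h r hr.1 hr.2

theorem HasCenter.integral_eq_zero_and_integral_mul_eq_zero_s7 {ρ₁ : ℝ} {x : ℝ → ℝ → ℝ}
    (hab : a ≤ b) (hf : ContinuousOn f (Icc a b)) (hg : ContinuousOn g (Icc a b)) (hρ₁ : 0 < ρ₁)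
    (hinit : ∀ ρ, |ρ| < ρ₁ → x a ρ = ρ)
    (hsol : ∀ ρ, |ρ| < ρ₁ → IsAbelSolution f g a b (fun t => x t ρ))
    (hcen : HasCenter f g a b) :
    (∫ t in a..b, g t) = 0 ∧
      ∃ ρ₀ > 0, ρ₀ ≤ ρ₁ ∧ ∀ ρ, |ρ| < ρ₀ → (∫ t in a..b, f t * x t ρ) = 0 := by
  obtain ⟨δ, hδ, hcen⟩ := hcen
  obtain ⟨C, hC, hbound⟩ := exists_forall_isAbelSolution_abs_le hf hg
  obtain ⟨K, hK⟩ := isCompact_Icc.exists_bound_of_continuousOn hf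
  set ρ₀ := min δ (min ρ₁ C⁻¹)
  have hρ₀ : 0 < ρ₀ := lt_min hδ (lt_min hρ₁ (inv_pos.2 hC))
  have hρ₀₁ : ∀ ρ, |ρ| < ρ₀ → |ρ| < ρ₁ := fun ρ h =>
    h.trans_le ((min_le_right _ _).trans (min_le_left _ _))
  have hCρ : ∀ ρ, |ρ| < ρ₀ → C * |ρ| < 1 := fun ρ h => by
    rw [← lt_div_iff₀' hC, one_div]
    exact h.trans_le ((min_le_right _ _).trans (min_le_right _ _))
  have hxρ : ∀ ρ, |ρ| < ρ₀ → ∀ t ∈ Icc a b, |x t ρ| ≤ C * |ρ| := fun ρ h => by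
    simpa only [hinit ρ (hρ₀₁ ρ h)] using
      hbound _ (hsol ρ (hρ₀₁ ρ h)) (by rw [hinit ρ (hρ₀₁ ρ h)]; exact hCρ ρ h)
  have hint : ∀ ρ, |ρ| < ρ₀ → ρ ≠ 0 →
      (∫ t in a..b, f t * x t ρ) + ∫ t in a..b, g t = 0 := fun ρ h hρ0 => by
    have hsolρ := hsol ρ (hρ₀₁ ρ h)
    rw [← hsolρ.eq_iff_integral_mul_add_integral_eq_zero hab hf hg
      (fun t ht => (hxρ ρ h t ht).trans (hCρ ρ h).le) (by rwa [hinit ρ (hρ₀₁ ρ h)])]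
    exact hcen _ hsolρ (by rw [hinit ρ (hρ₀₁ ρ h)]; exact h.trans_le (min_le_left _ _))
  have hg0 : (∫ t in a..b, g t) = 0 := eq_zero_of_forall_abs_le_mul hρ₀ fun r hr hrρ₀ => by
    have hr' : |r| < ρ₀ := by rwa [abs_of_pos hr]
    calc |∫ t in a..b, g t| = |∫ t in a..b, f t * x t r| := by
          rw [eq_neg_of_add_eq_zero_right (hint r hr' hr.ne'), abs_neg]
      _ ≤ K * (C * |r|) * (b - a) := abs_integral_mul_le hab hK (hxρ r hr')
      _ = K * C * (b - a) * r := by rw [abs_of_pos hr]; ring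
  refine ⟨hg0, ρ₀, hρ₀, (min_le_right _ _).trans (min_le_left _ _), fun ρ hρ => ?_⟩
  rcases eq_or_ne ρ 0 with rfl | hρ0
  · refine (intervalIntegral.integral_congr (g := fun _ => 0) fun t ht => ?_).trans (by simp)
    have hx0 : x t 0 = 0 := abs_nonpos_iff.1 (by simpa using hxρ 0 hρ t (uIcc_of_le hab ▸ ht))
    simp [hx0]
  · simpa [hg0] using hint ρ hρ hρ0

theorem hasCenter_of_integral_eq_zero {ρ₀ ρ₁ : ℝ} {x : ℝ → ℝ → ℝ}
    (hab : a ≤ b) (hf : ContinuousOn f (Icc a b)) (hg : ContinuousOn g (Icc a b))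
    (hinit : ∀ ρ, |ρ| < ρ₁ → x a ρ = ρ)
    (hsol : ∀ ρ, |ρ| < ρ₁ → IsAbelSolution f g a b (fun t => x t ρ))
    (hg0 : (∫ t in a..b, g t) = 0) (hρ₀ : 0 < ρ₀) (hρ₀₁ : ρ₀ ≤ ρ₁)
    (hx : ∀ ρ, |ρ| < ρ₀ → (∫ t in a..b, f t * x t ρ) = 0) :
    HasCenter f g a b := by
  obtain ⟨C, hC, hbound⟩ := exists_forall_isAbelSolution_abs_le hf hg
  refine ⟨min ρ₀ C⁻¹, lt_min hρ₀ (inv_pos.2 hC), fun y (hy : IsAbelSolution f g a b y) hya => ?_⟩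
  have hyρ₀ : |y a| < ρ₀ := hya.trans_le (min_le_left _ _)
  have hyρ₁ : |y a| < ρ₁ := hyρ₀.trans_le hρ₀₁
  have hCy : C * |y a| < 1 := by
    rw [← lt_div_iff₀' hC, one_div]
    exact hya.trans_le (min_le_right _ _)
  rcases eq_or_ne (y a) 0 with h0 | h0
  · have hyb := hbound y hy hCy b ⟨hab, le_rfl⟩
    rw [h0, abs_zero, mul_zero, abs_nonpos_iff] at hyb
    rw [h0, hyb]
  set z := fun t => x t (y a)
  have hza : z a = y a := hinit _ hyρ₁
  have hz : IsAbelSolution f g a b z := hsol _ hyρ₁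
  have hy1 : ∀ t ∈ Icc a b, |y t| ≤ 1 := fun t ht => (hbound y hy hCy t ht).trans hCy.le
  have hz1 : ∀ t ∈ Icc a b, |z t| ≤ 1 := fun t ht =>
    (hbound z hz (hza ▸ hCy) t ht).trans (hza ▸ hCy).le
  have hyz : EqOn y z (Icc a b) := hy.eqOn hf hg hz hy1 hz1 ⟨le_rfl, hab⟩ hza.symm
  rw [hy.eq_iff_integral_mul_add_integral_eq_zero hab hf hg hy1 h0, hg0, add_zero, ← hx _ hyρ₀]
  exact intervalIntegral.integral_congr fun t ht => by rw [hyz (uIcc_of_le hab ▸ ht)]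

end

/-- (Lijun–Yun) Let `f, g` be continuous on `[-1,1]` and let `x(t,ρ)` denote, for
`|ρ| < ρ₁`, the solution of `x' = f(t) x^3 + g(t) x^2` with `x(-1,ρ) = ρ`. Then
`x = 0` is a center if and only if `∫_{-1}^1 g(t) dt = 0` and there exists
`ρ₀ > 0` with `∫_{-1}^1 f(t) x(t,ρ) dt = 0` for all `|ρ| < ρ₀`. -/
theorem center_iff_integral_conditions
    (f g : ℝ → ℝ)
    (hf : ContinuousOn f (Set.Icc (-1 : ℝ) 1))
    (hg : ContinuousOn g (Set.Icc (-1 : ℝ) 1))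
    (ρ₁ : ℝ) (hρ₁ : 0 < ρ₁)
    (x : ℝ → ℝ → ℝ)
    (hinit : ∀ ρ : ℝ, |ρ| < ρ₁ → x (-1) ρ = ρ)
    (hsol : ∀ ρ : ℝ, |ρ| < ρ₁ → ∀ t ∈ Set.Icc (-1 : ℝ) 1,
      HasDerivWithinAt (fun τ => x τ ρ) (f t * x t ρ ^ 3 + g t * x t ρ ^ 2) (Set.Icc (-1 : ℝ) 1) t) :
    HasCenter f g (-1) 1 ↔
      ((∫ t in (-1 : ℝ)..1, g t) = 0 ∧
        ∃ ρ₀ > (0 : ℝ), ρ₀ ≤ ρ₁ ∧ ∀ ρ : ℝ, |ρ| < ρ₀ →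
          (∫ t in (-1 : ℝ)..1, f t * x t ρ) = 0) := by
  have hab : (-1 : ℝ) ≤ 1 := by norm_num
  refine ⟨HasCenter.integral_eq_zero_and_integral_mul_eq_zero_s7 hab hf hg hρ₁ hinit hsol, ?_⟩
  rintro ⟨hg0, ρ₀, hρ₀, hρ₀₁, hx⟩
  exact hasCenter_of_integral_eq_zero hab hf hg hinit hsol hg0 hρ₀ hρ₀₁ hx
end

section
/- Let f, g be continuous on [-1,1], let ρ_0 > 0, and let x(t,ρ) be analytic in (t,ρ) on [-1,1] × (−ρ_0, ρ_0), with x(t,0) = 0, satisfying for each |ρ| < ρ_0 the integral equation x(t,ρ) = ρ / (1 − ρ H(t,ρ)), where H(t,ρ) = ∫_{-1}^t (f(s)x(s,ρ) + g(s)) ds. Then the second partial derivative of H(1,ρ) with respect to ρ at ρ = 0 equals 2 ∫_{-1}^1 f(t) G(t) dt, where G(t) = ∫_{-1}^t g(s) ds. -/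
open MeasureTheory intervalIntegral Filter Topology Set Metric

/-! Since `x(t,ρ) = ρ / (1 - ρ H(t,ρ))` with `H(t,·)` continuous, `x(t,ρ) = ρ + H(t,0) ρ² + o(ρ²)`;
comparing with Taylor's formula gives `∂ρ x(t,0) = 1` and `∂²ρ x(t,0) = 2 H(t,0) = 2 G(t)`
(the fixed-point equation at `ρ = 0` gives `x(t,0) = 0`). Analyticity makes `∂ρ x` and `∂²ρ x`
jointly continuous, so `H(1,·)` may be differentiated twice under the integral sign, and
`∂²ρ H(1,0) = ∫ f ∂²ρ x(·,0) = 2 ∫ f G`. -/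

section PartialSnd

variable {𝕜 : Type*} [NontriviallyNormedField 𝕜] {E : Type*} [NormedAddCommGroup E]
  [NormedSpace 𝕜 E] {F : Type*} [NormedAddCommGroup F] [NormedSpace 𝕜 F]

noncomputable def partialSnd (X : E × 𝕜 → F) (p : E × 𝕜) : F := fderiv 𝕜 X p (0, 1)

protected theorem AnalyticOnNhd.partialSnd [CompleteSpace F] {X : E × 𝕜 → F} {s : Set (E × 𝕜)}
    (h : AnalyticOnNhd 𝕜 X s) : AnalyticOnNhd 𝕜 (partialSnd X) s := fun p hp =>
  ((ContinuousLinearMap.apply 𝕜 F ((0 : E), (1 : 𝕜))).analyticAt _).comp (h p hp).fderiv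

theorem DifferentiableAt.hasDerivAt_partialSnd {X : E × 𝕜 → F} {t : E} {r : 𝕜}
    (h : DifferentiableAt 𝕜 X (t, r)) :
    HasDerivAt (fun r => X (t, r)) (partialSnd X (t, r)) r :=
  h.hasFDerivAt.comp_hasDerivAt r ((hasDerivAt_const r t).prodMk (hasDerivAt_id r))

end PartialSnd

theorem hasDerivAt_intervalIntegral_of_continuousOn {E : Type*} [NormedAddCommGroup E]
    [NormedSpace ℝ E] {F F' : ℝ → ℝ → E} {a b ρ₀ ε : ℝ} (hε : 0 < ε)
    (hF : ContinuousOn (Function.uncurry F) (uIcc a b ×ˢ closedBall ρ₀ ε))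
    (hF' : ContinuousOn (Function.uncurry F') (uIcc a b ×ˢ closedBall ρ₀ ε))
    (hderiv : ∀ t ∈ uIcc a b, ∀ ρ ∈ ball ρ₀ ε, HasDerivAt (F t) (F' t ρ) ρ) :
    HasDerivAt (fun ρ => ∫ t in a..b, F t ρ) (∫ t in a..b, F' t ρ₀) ρ₀ := by
  obtain ⟨C, hC⟩ :=
    (isCompact_uIcc.prod (isCompact_closedBall ρ₀ ε)).exists_bound_of_continuousOn hF'
  have hρ₀ : ρ₀ ∈ closedBall ρ₀ ε := mem_closedBall_self hε.le
  have hslice : ∀ ρ ∈ closedBall ρ₀ ε, ContinuousOn (fun t => F t ρ) (uIcc a b) :=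
    fun ρ hρ => hF.uncurry_right ρ hρ
  refine (hasDerivAt_integral_of_dominated_loc_of_deriv_le (F := fun ρ t => F t ρ)
    (F' := fun ρ t => F' t ρ) (bound := fun _ => C) (ball_mem_nhds ρ₀ hε) ?_
    (hslice ρ₀ hρ₀).intervalIntegrable ?_ ?_ intervalIntegrable_const ?_).2
  · filter_upwards [closedBall_mem_nhds ρ₀ hε] with ρ hρ
    exact ((hslice ρ hρ).mono uIoc_subset_uIcc).aestronglyMeasurable measurableSet_uIoc
  · exact ((hF'.uncurry_right ρ₀ hρ₀).mono uIoc_subset_uIcc).aestronglyMeasurable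
      measurableSet_uIoc
  · exact ae_of_all _ fun t ht ρ hρ =>
      hC (t, ρ) ⟨uIoc_subset_uIcc ht, ball_subset_closedBall hρ⟩
  · exact ae_of_all _ fun t ht ρ hρ => hderiv t (uIoc_subset_uIcc ht) ρ hρ

theorem tendsto_taylor_remainder_div_sq {φ φ' : ℝ → ℝ} {a c : ℝ}
    (hφ : ∀ᶠ r in 𝓝 a, HasDerivAt φ (φ' r) r) (hφ' : HasDerivAt φ' c a) :
    Tendsto (fun r => (φ r - φ a - φ' a * (r - a)) / (r - a) ^ 2) (𝓝[≠] a) (𝓝 (c / 2)) := by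
  have hslope : Tendsto (fun r => (φ' r - φ' a) / (2 * (r - a))) (𝓝[≠] a) (𝓝 (c / 2)) := by
    refine ((hasDerivAt_iff_tendsto_slope.mp hφ').div_const 2).congr fun r => ?_
    rw [slope_def_field, div_div, mul_comm]
  refine HasDerivAt.lhopital_zero_nhdsNE ?_ ?_ ?_ ?_ ?_ hslope
  · filter_upwards [eventually_nhdsWithin_of_eventually_nhds hφ] with r hr
    exact ((hr.sub_const (φ a)).sub (((hasDerivAt_id' r).sub_const a).const_mul (φ' a))).congr_deriv
      (by ring)
  · exact Eventually.of_forall fun r =>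
      (((hasDerivAt_id' r).sub_const a).pow 2).congr_deriv (by simp)
  · filter_upwards [self_mem_nhdsWithin] with r hr
    exact mul_ne_zero two_ne_zero (sub_ne_zero.mpr hr)
  · have hφa : ContinuousAt φ a := hφ.self_of_nhds.continuousAt
    have : ContinuousAt (fun r => φ r - φ a - φ' a * (r - a)) a := by fun_prop
    simpa using this.tendsto.mono_left nhdsWithin_le_nhds
  · have : ContinuousAt (fun r : ℝ => (r - a) ^ 2) a := by fun_prop
    simpa using this.tendsto.mono_left nhdsWithin_le_nhds

section FixedPoint

variable {φ h : ℝ → ℝ}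

theorem tendsto_one_sub_mul_nhds_zero (hh : ContinuousAt h 0) :
    Tendsto (fun r => 1 - r * h r) (𝓝 0) (𝓝 1) := by
  have hcont : ContinuousAt (fun r => 1 - r * h r) 0 := by fun_prop
  simpa using hcont.tendsto

theorem hasDerivAt_zero_eq_one_of_eq_div {d : ℝ} (hh : ContinuousAt h 0)
    (hfix : ∀ᶠ r in 𝓝 0, φ r = r / (1 - r * h r)) (hφ : HasDerivAt φ d 0) : d = 1 := by
  have hφ0 : φ 0 = 0 := by simpa using hfix.self_of_nhds
  have hlim : Tendsto (fun r => (1 - r * h r)⁻¹) (𝓝[≠] 0) (𝓝 1) := by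
    simpa using ((tendsto_one_sub_mul_nhds_zero hh).inv₀ one_ne_zero).mono_left nhdsWithin_le_nhds
  refine tendsto_nhds_unique (hasDerivAt_iff_tendsto_slope.mp hφ) (hlim.congr' ?_)
  filter_upwards [eventually_nhdsWithin_of_eventually_nhds hfix, self_mem_nhdsWithin]
    with r hr hr0
  rw [slope_def_field, hr, hφ0, sub_zero, sub_zero, div_div_cancel_left' hr0]

theorem secondDeriv_zero_eq_of_eq_div {φ' : ℝ → ℝ} {c : ℝ} (hh : ContinuousAt h 0)
    (hfix : ∀ᶠ r in 𝓝 0, φ r = r / (1 - r * h r))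
    (hφ : ∀ᶠ r in 𝓝 0, HasDerivAt φ (φ' r) r) (hφ' : HasDerivAt φ' c 0) : c = 2 * h 0 := by
  have hφ0 : φ 0 = 0 := by simpa using hfix.self_of_nhds
  have hφ'0 : φ' 0 = 1 := hasDerivAt_zero_eq_one_of_eq_div hh hfix hφ.self_of_nhds
  have hlim : Tendsto (fun r => h r / (1 - r * h r)) (𝓝[≠] 0) (𝓝 (h 0)) := by
    rw [← div_one (h 0)]
    exact (hh.tendsto.div (tendsto_one_sub_mul_nhds_zero hh) one_ne_zero).mono_left
      nhdsWithin_le_nhds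
  have hdenom : ∀ᶠ r in 𝓝 0, 1 - r * h r ≠ 0 :=
    (tendsto_one_sub_mul_nhds_zero hh).eventually_ne one_ne_zero
  have key := tendsto_nhds_unique (tendsto_taylor_remainder_div_sq hφ hφ') (hlim.congr' ?_)
  · linarith
  filter_upwards [eventually_nhdsWithin_of_eventually_nhds (hfix.and hdenom),
    self_mem_nhdsWithin] with r ⟨hr, hne⟩ (hr0 : r ≠ 0)
  rw [hr, hφ0, hφ'0, sub_zero, sub_zero, one_mul, div_sub' hne, div_div,
    div_eq_div_iff hne (mul_ne_zero hne (pow_ne_zero 2 hr0))]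
  ring

end FixedPoint

theorem hasDerivAt_integral_mul_add_of_analyticOnNhd {f g : ℝ → ℝ} {Y : ℝ × ℝ → ℝ} {U : Set ℝ}
    {a b ρ : ℝ} (hf : ContinuousOn f (uIcc a b)) (hg : ContinuousOn g (uIcc a b))
    (hU : IsOpen U) (hY : AnalyticOnNhd ℝ Y (uIcc a b ×ˢ U)) (hρ : ρ ∈ U) :
    HasDerivAt (fun r => ∫ t in a..b, f t * Y (t, r) + g t)
      (∫ t in a..b, f t * partialSnd Y (t, ρ)) ρ := by
  obtain ⟨ε, hε, hεU⟩ := nhds_basis_closedBall.mem_iff.1 (hU.mem_nhds hρ)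
  have hsub : uIcc a b ×ˢ closedBall ρ ε ⊆ uIcc a b ×ˢ U := prod_mono subset_rfl hεU
  have hf' : ContinuousOn (fun p : ℝ × ℝ => f p.1) (uIcc a b ×ˢ closedBall ρ ε) :=
    hf.comp continuousOn_fst fun _ hp => hp.1
  have hg' : ContinuousOn (fun p : ℝ × ℝ => g p.1) (uIcc a b ×ˢ closedBall ρ ε) :=
    hg.comp continuousOn_fst fun _ hp => hp.1
  refine hasDerivAt_intervalIntegral_of_continuousOn (F := fun t r => f t * Y (t, r) + g t)
    (F' := fun t r => f t * partialSnd Y (t, r)) hε ((hf'.mul (hY.continuousOn.mono hsub)).add hg')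
    (hf'.mul (hY.partialSnd.continuousOn.mono hsub)) fun t ht r hr => ?_
  have hY' := (hY (t, r) ⟨ht, hεU (ball_subset_closedBall hr)⟩).differentiableAt
  exact (hY'.hasDerivAt_partialSnd.const_mul (f t)).add_const (g t)

theorem partialSnd_partialSnd_eq_of_eq_div {f g : ℝ → ℝ} {ρ₀ : ℝ} {x : ℝ → ℝ → ℝ}
    (hf : ContinuousOn f (Icc (-1 : ℝ) 1)) (hg : ContinuousOn g (Icc (-1 : ℝ) 1)) (hρ₀ : 0 < ρ₀)
    (hanalytic : AnalyticOnNhd ℝ (Function.uncurry x) (Icc (-1 : ℝ) 1 ×ˢ Ioo (-ρ₀) ρ₀))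
    (hfix : ∀ ρ : ℝ, |ρ| < ρ₀ → ∀ t ∈ Icc (-1 : ℝ) 1,
      x t ρ = ρ / (1 - ρ * ∫ s in (-1 : ℝ)..t, (f s * x s ρ + g s)))
    {t : ℝ} (ht : t ∈ Icc (-1 : ℝ) 1) :
    partialSnd (partialSnd (Function.uncurry x)) (t, 0) = 2 * ∫ s in (-1 : ℝ)..t, g s := by
  have hsub : uIcc (-1) t ⊆ Icc (-1 : ℝ) 1 := uIcc_subset_Icc (left_mem_Icc.2 (by norm_num)) ht
  have hU : Ioo (-ρ₀) ρ₀ ∈ 𝓝 (0 : ℝ) := Ioo_mem_nhds (neg_neg_of_pos hρ₀) hρ₀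
  have hH : ContinuousAt (fun r => ∫ s in (-1 : ℝ)..t, (f s * x s r + g s)) 0 :=
    (hasDerivAt_integral_mul_add_of_analyticOnNhd (hf.mono hsub) (hg.mono hsub) isOpen_Ioo
      (hanalytic.mono (prod_mono hsub subset_rfl)) (mem_of_mem_nhds hU)).continuousAt
  have hx0 : ∀ s ∈ uIcc (-1) t, x s 0 = 0 := fun s hs => by
    simpa using hfix 0 (by simpa using hρ₀) s (hsub hs)
  rw [secondDeriv_zero_eq_of_eq_div (φ := x t) hH ?_ ?_
    (hanalytic.partialSnd (t, 0) ⟨ht, mem_of_mem_nhds hU⟩).differentiableAt.hasDerivAt_partialSnd]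
  · congr 1
    exact integral_congr fun s hs => by simp [hx0 s hs]
  · filter_upwards [hU] with r hr
    exact hfix r (abs_lt.mpr hr) t ht
  · filter_upwards [hU] with r hr
    exact (hanalytic (t, r) ⟨ht, hr⟩).differentiableAt.hasDerivAt_partialSnd

theorem second_deriv_H_at_zero_general
    (f g : ℝ → ℝ)
    (hf : ContinuousOn f (Set.Icc (-1 : ℝ) 1))
    (hg : ContinuousOn g (Set.Icc (-1 : ℝ) 1))
    (ρ₀ : ℝ) (hρ₀ : 0 < ρ₀)
    (x : ℝ → ℝ → ℝ)
    (hanalytic : AnalyticOnNhd ℝ (fun p : ℝ × ℝ => x p.1 p.2)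
      (Set.Icc (-1 : ℝ) 1 ×ˢ Set.Ioo (-ρ₀) ρ₀))
    (hfix : ∀ ρ : ℝ, |ρ| < ρ₀ → ∀ t ∈ Set.Icc (-1 : ℝ) 1,
      x t ρ = ρ / (1 - ρ * ∫ s in (-1 : ℝ)..t, (f s * x s ρ + g s))) :
    iteratedDeriv 2 (fun ρ : ℝ => ∫ t in (-1 : ℝ)..1, (f t * x t ρ + g t)) 0 =
      2 * ∫ t in (-1 : ℝ)..1, f t * ∫ s in (-1 : ℝ)..t, g s := by
  change AnalyticOnNhd ℝ (Function.uncurry x) _ at hanalytic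
  have hsub : uIcc (-1 : ℝ) 1 ⊆ Icc (-1) 1 := uIcc_subset_Icc (by norm_num) (by norm_num)
  have hU : Ioo (-ρ₀) ρ₀ ∈ 𝓝 (0 : ℝ) := Ioo_mem_nhds (neg_neg_of_pos hρ₀) hρ₀
  have hX : AnalyticOnNhd ℝ (Function.uncurry x) (uIcc (-1) 1 ×ˢ Ioo (-ρ₀) ρ₀) :=
    hanalytic.mono (prod_mono hsub subset_rfl)
  have hderiv : deriv (fun ρ => ∫ t in (-1 : ℝ)..1, (f t * x t ρ + g t)) =ᶠ[𝓝 0]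
      fun ρ => ∫ t in (-1 : ℝ)..1, f t * partialSnd (Function.uncurry x) (t, ρ) := by
    filter_upwards [hU] with ρ hρ
    exact (hasDerivAt_integral_mul_add_of_analyticOnNhd (hf.mono hsub) (hg.mono hsub) isOpen_Ioo
      hX hρ).deriv
  have hderiv2 := hasDerivAt_integral_mul_add_of_analyticOnNhd (hf.mono hsub) (g := 0)
    continuousOn_const isOpen_Ioo hX.partialSnd (mem_of_mem_nhds hU)
  simp only [Pi.zero_apply, add_zero] at hderiv2
  rw [iteratedDeriv_succ, iteratedDeriv_one, hderiv.deriv_eq, hderiv2.deriv,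
    ← intervalIntegral.integral_const_mul]
  refine integral_congr fun t ht => ?_
  rw [partialSnd_partialSnd_eq_of_eq_div hf hg hρ₀ hanalytic hfix (hsub ht)]
  ring

/-- Let `f, g` be continuous on `[-1,1]` and let `x(t,ρ)` be analytic in `(t,ρ)` on
`[-1,1] × (−ρ₀, ρ₀)`, with `x(t,0) = 0`, satisfying the fixed-point equation
`x(t,ρ) = ρ / (1 − ρ H(t,ρ))` where `H(t,ρ) = ∫_{-1}^t (f(s) x(s,ρ) + g(s)) ds`.
Then `∂²/∂ρ² H(1,ρ) |_{ρ=0} = 2 ∫_{-1}^1 f(t) G(t) dt`, where `G(t) = ∫_{-1}^t g(s) ds`. -/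
theorem second_deriv_H_at_zero
    (f g : ℝ → ℝ)
    (hf : ContinuousOn f (Set.Icc (-1 : ℝ) 1))
    (hg : ContinuousOn g (Set.Icc (-1 : ℝ) 1))
    (ρ₀ : ℝ) (hρ₀ : 0 < ρ₀)
    (x : ℝ → ℝ → ℝ)
    (hanalytic : AnalyticOnNhd ℝ (fun p : ℝ × ℝ => x p.1 p.2)
      (Set.Icc (-1 : ℝ) 1 ×ˢ Set.Ioo (-ρ₀) ρ₀))
    (hzero : ∀ t ∈ Set.Icc (-1 : ℝ) 1, x t 0 = 0)
    (hfix : ∀ ρ : ℝ, |ρ| < ρ₀ → ∀ t ∈ Set.Icc (-1 : ℝ) 1,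
      x t ρ = ρ / (1 - ρ * ∫ s in (-1 : ℝ)..t, (f s * x s ρ + g s))) :
    iteratedDeriv 2 (fun ρ : ℝ => ∫ t in (-1 : ℝ)..1, (f t * x t ρ + g t)) 0 =
      2 * ∫ t in (-1 : ℝ)..1, f t * ∫ s in (-1 : ℝ)..t, g s :=
  second_deriv_H_at_zero_general f g hf hg ρ₀ hρ₀ x hanalytic hfix
end

section
/- Let f, g be continuous on [-1,1], let ρ_0 > 0, and let x(t,ρ) be analytic in (t,ρ) on [-1,1] × (−ρ_0, ρ_0), with x(t,0) = 0, satisfying for each |ρ| < ρ_0 the integral equation x(t,ρ) = ρ / (1 − ρ H(t,ρ)), where H(t,ρ) = ∫_{-1}^t (f(s)x(s,ρ) + g(s)) ds. Then the third partial derivative of H(1,ρ) with respect to ρ at ρ = 0 equals 3! ∫_{-1}^1 f(t) G(t)^2 dt + 3! ∫_{-1}^1 f(t) F(t) dt, where G(t) = ∫_{-1}^t g(s) ds and F(t) = ∫_{-1}^t f(s) ds. -/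
/-!
At a fixed `t`, the fixed-point equation reads `x = ρ + ρ x H` near `ρ = 0`, and Leibniz's rule at
`ρ = 0` gives `∂ρx = 1`, `∂ρ²x = 2H = 2G` and `∂ρ³x = 6H² + 6∂ρH`. Joint analyticity of `x` makes
its `ρ`-derivatives jointly continuous, so `H` can be differentiated under the integral sign,
`∂ρᵏH(t,ρ) = ∫ f ∂ρᵏx`. Hence `∂ρH(t,0) = F(t)`, so `∂ρ³x(t,0) = 6G(t)² + 6F(t)`, and
`∂ρ³H(1,0) = ∫ f ∂ρ³x(·,0)`.
-/

open Filter Topology Set MeasureTheory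

section DerivSeq
variable {𝕜 : Type*} [NontriviallyNormedField 𝕜] {F : Type*} [NormedAddCommGroup F]
  [NormedSpace 𝕜 F] {f : 𝕜 → F} {Φ : ℕ → 𝕜 → F} {s : Set 𝕜}

theorem eqOn_iteratedDeriv_succ_of_forall_hasDerivAt (hs : IsOpen s)
    (hf : ∀ r ∈ s, HasDerivAt f (Φ 0 r) r)
    (hΦ : ∀ k, ∀ r ∈ s, HasDerivAt (Φ k) (Φ (k + 1) r) r) (n : ℕ) :
    EqOn (iteratedDeriv (n + 1) f) (Φ n) s := by
  induction n generalizing f Φ with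
  | zero => exact fun r hr => by simpa using (hf r hr).deriv
  | succ n ih =>
    have hderiv : EqOn (deriv f) (Φ 0) s := fun r hr => (hf r hr).deriv
    intro r hr
    rw [iteratedDeriv_succ', hderiv.iteratedDeriv_of_isOpen hs (n + 1) hr]
    exact ih (hΦ 0) (fun k => hΦ (k + 1)) hr

theorem contDiffOn_of_forall_hasDerivAt (hs : IsOpen s)
    (hf : ∀ r ∈ s, HasDerivAt f (Φ 0 r) r)
    (hΦ : ∀ k, ∀ r ∈ s, HasDerivAt (Φ k) (Φ (k + 1) r) r) (n : ℕ) :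
    ContDiffOn 𝕜 n f s := by
  induction n generalizing f Φ with
  | zero => exact contDiffOn_zero.mpr fun r hr => (hf r hr).continuousAt.continuousWithinAt
  | succ n ih =>
    rw [Nat.cast_succ, contDiffOn_succ_iff_deriv_of_isOpen hs]
    refine ⟨fun r hr => (hf r hr).differentiableAt.differentiableWithinAt, by simp, ?_⟩
    exact (ih (hΦ 0) (fun k => hΦ (k + 1))).congr fun r hr => (hf r hr).deriv

theorem AnalyticAt.hasDerivAt_iteratedDeriv [CompleteSpace F] {r : 𝕜} (hf : AnalyticAt 𝕜 f r)
    (n : ℕ) : HasDerivAt (iteratedDeriv n f) (iteratedDeriv (n + 1) f r) r := by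
  rw [iteratedDeriv_succ, iteratedDeriv_eq_iterate]
  exact (hf.iterated_deriv n).differentiableAt.hasDerivAt

end DerivSeq

section FixedPoint
variable {𝕜 : Type*} [NontriviallyNormedField 𝕜] {y h : 𝕜 → 𝕜}

theorem iteratedDeriv_succ_id_mul_zero {P : 𝕜 → 𝕜} {n : ℕ} (hP : ContDiffAt 𝕜 (n + 1 : ℕ) P 0) :
    iteratedDeriv (n + 1) (fun r => r * P r) 0 = (n + 1) * iteratedDeriv n P 0 := by
  rw [iteratedDeriv_fun_mul (f := fun r => r) contDiffAt_fun_id hP, Finset.sum_range_succ',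
    Finset.sum_range_succ']
  simp [iteratedDeriv_fun_id_zero]

theorem iteratedDeriv_succ_zero_of_eventuallyEq_add_mul {n : ℕ}
    (hy : ContDiffAt 𝕜 (n + 1 : ℕ) y 0) (hh : ContDiffAt 𝕜 (n + 1 : ℕ) h 0)
    (heq : y =ᶠ[𝓝 0] fun r => r + r * (y r * h r)) :
    iteratedDeriv (n + 1) y 0 =
      (if n = 0 then 1 else 0) + (n + 1) * iteratedDeriv n (fun r => y r * h r) 0 := by
  rw [heq.iteratedDeriv_eq, iteratedDeriv_fun_add (f := fun r => r) contDiffAt_fun_id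
    (contDiffAt_fun_id.mul (hy.mul hh)), iteratedDeriv_succ_id_mul_zero (hy.mul hh),
    iteratedDeriv_fun_id_zero]
  simp

theorem deriv_zero_of_eventuallyEq_add_mul (hy : ContDiffAt 𝕜 1 y 0)
    (hh : ContDiffAt 𝕜 1 h 0) (heq : y =ᶠ[𝓝 0] fun r => r + r * (y r * h r)) :
    deriv y 0 = 1 := by
  have hy0 : y 0 = 0 := by simpa using heq.eq_of_nhds
  simpa [hy0] using iteratedDeriv_succ_zero_of_eventuallyEq_add_mul (n := 0) hy hh heq

theorem iteratedDeriv_three_zero_of_eventuallyEq_add_mul (hy : ContDiffAt 𝕜 3 y 0)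
    (hh : ContDiffAt 𝕜 3 h 0) (heq : y =ᶠ[𝓝 0] fun r => r + r * (y r * h r)) :
    iteratedDeriv 3 y 0 = 6 * h 0 ^ 2 + 6 * deriv h 0 := by
  have hy0 : y 0 = 0 := by simpa using heq.eq_of_nhds
  have hy1 : deriv y 0 = 1 :=
    deriv_zero_of_eventuallyEq_add_mul (hy.of_le (by norm_num)) (hh.of_le (by norm_num)) heq
  have hy2 : iteratedDeriv 2 y 0 = 2 * h 0 := by
    rw [iteratedDeriv_succ_zero_of_eventuallyEq_add_mul (n := 1) (hy.of_le (by norm_num))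
      (hh.of_le (by norm_num)) heq, iteratedDeriv_fun_mul (hy.of_le (by norm_num))
      (hh.of_le (by norm_num))]
    norm_num [Finset.sum_range_succ, hy0, hy1]
  rw [iteratedDeriv_succ_zero_of_eventuallyEq_add_mul (n := 2) hy hh heq, iteratedDeriv_fun_mul
    (hy.of_le (by norm_num)) (hh.of_le (by norm_num))]
  norm_num [Finset.sum_range_succ, hy0, hy1, hy2]
  ring

theorem eventuallyEq_add_mul_of_eq_div (hh : ContinuousAt h 0)
    (hy : ∀ᶠ r in 𝓝 0, y r = r / (1 - r * h r)) :
    y =ᶠ[𝓝 0] fun r => r + r * (y r * h r) := by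
  have hne : ∀ᶠ r in 𝓝 0, 1 - r * h r ≠ 0 :=
    (continuousAt_const.sub (continuousAt_id.mul hh)).eventually_ne (by simp)
  filter_upwards [hy, hne] with r hr hr'
  rw [hr]
  field_simp
  ring

end FixedPoint

section PartialDeriv
variable {𝕜 : Type*} [NontriviallyNormedField 𝕜] {E : Type*} [NormedAddCommGroup E]
  [NormedSpace 𝕜 E] {G : Type*} [NormedAddCommGroup G] [NormedSpace 𝕜 G] [CompleteSpace G]

/-- Defined through `fderiv` rather than through the slices `r ↦ F (e, r)`, so that it inherits
the joint analyticity of `F`. -/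
noncomputable def iteratedDerivSnd (F : E × 𝕜 → G) : ℕ → E × 𝕜 → G
  | 0 => F
  | n + 1 => fun p => fderiv 𝕜 (iteratedDerivSnd F n) p (0, 1)

variable {F : E × 𝕜 → G} {s : Set (E × 𝕜)}

protected theorem AnalyticOnNhd.iteratedDerivSnd (hF : AnalyticOnNhd 𝕜 F s) (n : ℕ) :
    AnalyticOnNhd 𝕜 (iteratedDerivSnd F n) s := by
  induction n with
  | zero => exact hF
  | succ n ih =>
    exact fun p hp => ((ContinuousLinearMap.apply 𝕜 G ((0, 1) : E × 𝕜)).analyticAt _).comp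
      (ih.fderiv p hp)

theorem AnalyticOnNhd.hasDerivAt_iteratedDerivSnd (hF : AnalyticOnNhd 𝕜 F s) (n : ℕ)
    {p : E × 𝕜} (hp : p ∈ s) :
    HasDerivAt (fun r => iteratedDerivSnd F n (p.1, r)) (iteratedDerivSnd F (n + 1) p) p.2 :=
  (hF.iteratedDerivSnd n p hp).differentiableAt.hasFDerivAt.comp_hasDerivAt p.2
    ((hasDerivAt_const p.2 p.1).prodMk (hasDerivAt_id p.2))

theorem AnalyticOnNhd.iteratedDeriv_slice_eq (hF : AnalyticOnNhd 𝕜 F s) (hs : IsOpen s)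
    (n : ℕ) {p : E × 𝕜} (hp : p ∈ s) :
    iteratedDeriv n (fun r => F (p.1, r)) p.2 = iteratedDerivSnd F n p := by
  induction n generalizing p with
  | zero => simp [iteratedDerivSnd]
  | succ n ih =>
    have hnear : ∀ᶠ r in 𝓝 p.2, (p.1, r) ∈ s :=
      (continuous_const.prodMk continuous_id).continuousAt.preimage_mem_nhds (hs.mem_nhds hp)
    rw [iteratedDeriv_succ, EventuallyEq.deriv_eq (hnear.mono fun r hr => ih hr)]
    exact (hF.hasDerivAt_iteratedDerivSnd n hp).deriv

theorem AnalyticOnNhd.continuousOn_iteratedDeriv_slice (hF : AnalyticOnNhd 𝕜 F s) (n : ℕ) :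
    ContinuousOn (fun p => iteratedDeriv n (fun r => F (p.1, r)) p.2) s := by
  have hFU : AnalyticOnNhd 𝕜 F {p | AnalyticAt 𝕜 F p} := fun p hp => hp
  refine ((hFU.iteratedDerivSnd n).continuousOn.congr fun p hp => ?_).mono hF
  exact hFU.iteratedDeriv_slice_eq (isOpen_analyticAt 𝕜 F) n hp

end PartialDeriv

theorem hasDerivAt_intervalIntegral_of_continuousOn_s10 {E : Type*} [NormedAddCommGroup E]
    [NormedSpace ℝ E] {G G' : ℝ × ℝ → E} {a b : ℝ} {U : Set ℝ} (hU : IsOpen U)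
    (hG : ContinuousOn G (uIcc a b ×ˢ U)) (hG' : ContinuousOn G' (uIcc a b ×ˢ U))
    (hderiv : ∀ s ∈ uIcc a b, ∀ r ∈ U, HasDerivAt (fun r => G (s, r)) (G' (s, r)) r)
    {ρ : ℝ} (hρ : ρ ∈ U) :
    HasDerivAt (fun r => ∫ s in a..b, G (s, r)) (∫ s in a..b, G' (s, ρ)) ρ := by
  obtain ⟨ε, hε, hball⟩ : ∃ ε > 0, Metric.closedBall ρ ε ⊆ U :=
    Metric.nhds_basis_closedBall.mem_iff.mp (hU.mem_nhds hρ)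
  obtain ⟨C, hC⟩ := (isCompact_uIcc.prod (isCompact_closedBall ρ ε)).exists_bound_of_continuousOn
    (hG'.mono (prod_mono subset_rfl hball))
  have hslice : ∀ {K : ℝ × ℝ → E}, ContinuousOn K (uIcc a b ×ˢ U) → ∀ r ∈ U,
      IntervalIntegrable (fun s => K (s, r)) volume a b := fun hK r hr =>
    (hK.comp (continuous_id.prodMk continuous_const).continuousOn
      fun s hs => ⟨hs, hr⟩).intervalIntegrable
  refine (intervalIntegral.hasDerivAt_integral_of_dominated_loc_of_deriv_le
    (F := fun r s => G (s, r)) (F' := fun r s => G' (s, r)) (bound := fun _ => C)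
    (Metric.ball_mem_nhds ρ hε) ?_ (hslice hG ρ hρ) (hslice hG' ρ hρ).def'.aestronglyMeasurable ?_
    intervalIntegrable_const ?_).2
  · filter_upwards [hU.mem_nhds hρ] with r hr
    exact (hslice hG r hr).def'.aestronglyMeasurable
  · refine ae_of_all _ fun s hs r hr => hC (s, r) ⟨uIoc_subset_uIcc hs, ?_⟩
    exact Metric.ball_subset_closedBall hr
  · exact ae_of_all _ fun s hs r hr =>
      hderiv s (uIoc_subset_uIcc hs) r (hball (Metric.ball_subset_closedBall hr))

section AbelIntegral
variable {f g : ℝ → ℝ} {x : ℝ → ℝ → ℝ} {a b : ℝ} {U : Set ℝ}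

theorem analyticAt_slice (hx : AnalyticOnNhd ℝ (fun p : ℝ × ℝ => x p.1 p.2) (Icc a b ×ˢ U))
    {t r : ℝ} (ht : t ∈ Icc a b) (hr : r ∈ U) : AnalyticAt ℝ (x t) r :=
  (hx (t, r) ⟨ht, hr⟩).comp₂ analyticAt_const analyticAt_id

theorem hasDerivAt_integral_mul_iteratedDeriv_add (hU : IsOpen U)
    (hx : AnalyticOnNhd ℝ (fun p : ℝ × ℝ => x p.1 p.2) (Icc a b ×ˢ U))
    (hf : ContinuousOn f (Icc a b)) {c : ℝ → ℝ} (hc : ContinuousOn c (Icc a b)) (n : ℕ)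
    {t : ℝ} (ht : t ∈ Icc a b) {ρ : ℝ} (hρ : ρ ∈ U) :
    HasDerivAt (fun r => ∫ s in a..t, (f s * iteratedDeriv n (x s) r + c s))
      (∫ s in a..t, f s * iteratedDeriv (n + 1) (x s) ρ) ρ := by
  have hsub : uIcc a t ×ˢ U ⊆ Icc a b ×ˢ U :=
    prod_mono (by rw [uIcc_of_le ht.1]; exact Icc_subset_Icc_right ht.2) subset_rfl
  have hfst : ∀ {k : ℝ → ℝ}, ContinuousOn k (Icc a b) →
      ContinuousOn (fun p : ℝ × ℝ => k p.1) (uIcc a t ×ˢ U) := fun hk =>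
    hk.comp continuous_fst.continuousOn fun p hp => (hsub hp).1
  refine hasDerivAt_intervalIntegral_of_continuousOn_s10
    (G := fun p => f p.1 * iteratedDeriv n (x p.1) p.2 + c p.1)
    (G' := fun p => f p.1 * iteratedDeriv (n + 1) (x p.1) p.2) hU
    (((hfst hf).mul ((hx.continuousOn_iteratedDeriv_slice n).mono hsub)).add (hfst hc))
    ((hfst hf).mul ((hx.continuousOn_iteratedDeriv_slice (n + 1)).mono hsub))
    (fun s hs r hr => ?_) hρ
  have hxs := analyticAt_slice hx (hsub (mk_mem_prod hs hr)).1 hr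
  exact ((hxs.hasDerivAt_iteratedDeriv n).const_mul (f s)).add_const (c s)

theorem contDiffOn_integral_and_eqOn_iteratedDeriv (hU : IsOpen U)
    (hx : AnalyticOnNhd ℝ (fun p : ℝ × ℝ => x p.1 p.2) (Icc a b ×ˢ U))
    (hf : ContinuousOn f (Icc a b)) (hg : ContinuousOn g (Icc a b)) {t : ℝ} (ht : t ∈ Icc a b)
    (n : ℕ) :
    ContDiffOn ℝ n (fun r => ∫ s in a..t, (f s * x s r + g s)) U ∧
      EqOn (iteratedDeriv (n + 1) fun r => ∫ s in a..t, (f s * x s r + g s))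
        (fun r => ∫ s in a..t, f s * iteratedDeriv (n + 1) (x s) r) U := by
  have hH : ∀ r ∈ U, HasDerivAt (fun r => ∫ s in a..t, (f s * x s r + g s))
      (∫ s in a..t, f s * iteratedDeriv 1 (x s) r) r := fun r hr => by
    simpa only [iteratedDeriv_zero] using
      hasDerivAt_integral_mul_iteratedDeriv_add hU hx hf hg 0 ht hr
  have hΦ : ∀ k, ∀ r ∈ U, HasDerivAt (fun r => ∫ s in a..t, f s * iteratedDeriv (k + 1) (x s) r)
      (∫ s in a..t, f s * iteratedDeriv (k + 1 + 1) (x s) r) r := fun k r hr => by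
    simpa only [add_zero] using
      hasDerivAt_integral_mul_iteratedDeriv_add hU hx hf (c := fun _ => 0) continuousOn_const
        (k + 1) ht hr
  exact ⟨contDiffOn_of_forall_hasDerivAt hU hH hΦ n,
    eqOn_iteratedDeriv_succ_of_forall_hasDerivAt hU hH hΦ n⟩

theorem iteratedDeriv_three_slice_zero (hU : IsOpen U) (hU0 : 0 ∈ U)
    (hx : AnalyticOnNhd ℝ (fun p : ℝ × ℝ => x p.1 p.2) (Icc a b ×ˢ U))
    (hf : ContinuousOn f (Icc a b)) (hg : ContinuousOn g (Icc a b))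
    (hfix : ∀ ρ ∈ U, ∀ t ∈ Icc a b, x t ρ = ρ / (1 - ρ * ∫ s in a..t, (f s * x s ρ + g s)))
    {t : ℝ} (ht : t ∈ Icc a b) :
    iteratedDeriv 3 (x t) 0 = 6 * (∫ s in a..t, g s) ^ 2 + 6 * ∫ s in a..t, f s := by
  have hxC : ∀ s ∈ Icc a b, ContDiffAt ℝ 3 (x s) 0 := fun s hs =>
    (analyticAt_slice hx hs hU0).contDiffAt
  have hHC : ∀ s ∈ Icc a b, ContDiffAt ℝ 3 (fun r => ∫ s' in a..s, (f s' * x s' r + g s')) 0 :=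
    fun s hs => (contDiffOn_integral_and_eqOn_iteratedDeriv hU hx hf hg hs 3).1.contDiffAt
      (hU.mem_nhds hU0)
  have heq : ∀ s ∈ Icc a b,
      x s =ᶠ[𝓝 0] fun r => r + r * (x s r * ∫ s' in a..s, (f s' * x s' r + g s')) := fun s hs =>
    eventuallyEq_add_mul_of_eq_div (hHC s hs).continuousAt
      (eventually_of_mem (hU.mem_nhds hU0) fun r hr => hfix r hr s hs)
  have hx0 : ∀ s ∈ Icc a b, x s 0 = 0 := fun s hs => by simpa using hfix 0 hU0 s hs
  have hx1 : ∀ s ∈ Icc a b, iteratedDeriv 1 (x s) 0 = 1 := fun s hs => by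
    rw [iteratedDeriv_one]
    exact deriv_zero_of_eventuallyEq_add_mul ((hxC s hs).of_le (by norm_num))
      ((hHC s hs).of_le (by norm_num)) (heq s hs)
  have hsub : uIcc a t ⊆ Icc a b := by rw [uIcc_of_le ht.1]; exact Icc_subset_Icc_right ht.2
  have hH0 : ∫ s in a..t, (f s * x s 0 + g s) = ∫ s in a..t, g s :=
    intervalIntegral.integral_congr fun s hs => by simp [hx0 s (hsub hs)]
  have hH1 : deriv (fun r => ∫ s in a..t, (f s * x s r + g s)) 0 = ∫ s in a..t, f s := by
    rw [← iteratedDeriv_one, (contDiffOn_integral_and_eqOn_iteratedDeriv hU hx hf hg ht 0).2 hU0]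
    exact intervalIntegral.integral_congr fun s hs => by simp [hx1 s (hsub hs)]
  rw [iteratedDeriv_three_zero_of_eventuallyEq_add_mul (hxC t ht) (hHC t ht) (heq t ht), hH0, hH1]

end AbelIntegral

theorem third_deriv_H_at_zero_general
    (f g : ℝ → ℝ)
    (hf : ContinuousOn f (Set.Icc (-1 : ℝ) 1))
    (hg : ContinuousOn g (Set.Icc (-1 : ℝ) 1))
    (ρ₀ : ℝ) (hρ₀ : 0 < ρ₀)
    (x : ℝ → ℝ → ℝ)
    (hanalytic : AnalyticOnNhd ℝ (fun p : ℝ × ℝ => x p.1 p.2)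
      (Set.Icc (-1 : ℝ) 1 ×ˢ Set.Ioo (-ρ₀) ρ₀))
    (hfix : ∀ ρ : ℝ, |ρ| < ρ₀ → ∀ t ∈ Set.Icc (-1 : ℝ) 1,
      x t ρ = ρ / (1 - ρ * ∫ s in (-1 : ℝ)..t, (f s * x s ρ + g s))) :
    iteratedDeriv 3 (fun ρ : ℝ => ∫ t in (-1 : ℝ)..1, (f t * x t ρ + g t)) 0 =
      (Nat.factorial 3 : ℝ) * (∫ t in (-1 : ℝ)..1, f t * (∫ s in (-1 : ℝ)..t, g s) ^ 2) +
      (Nat.factorial 3 : ℝ) * (∫ t in (-1 : ℝ)..1, f t * ∫ s in (-1 : ℝ)..t, f s) := by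
  have h0 : (0 : ℝ) ∈ Ioo (-ρ₀) ρ₀ := ⟨neg_lt_zero.mpr hρ₀, hρ₀⟩
  have hfix' : ∀ ρ ∈ Ioo (-ρ₀) ρ₀, ∀ t ∈ Icc (-1 : ℝ) 1,
      x t ρ = ρ / (1 - ρ * ∫ s in (-1 : ℝ)..t, (f s * x s ρ + g s)) :=
    fun ρ hρ => hfix ρ (abs_lt.mpr hρ)
  have hIcc : uIcc (-1 : ℝ) 1 = Icc (-1) 1 := uIcc_of_le (by norm_num)
  have hprimitive : ∀ {k : ℝ → ℝ}, ContinuousOn k (Icc (-1) 1) →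
      ContinuousOn (fun t => ∫ s in (-1 : ℝ)..t, k s) (Icc (-1) 1) := fun hk => by
    rw [← hIcc]
    exact intervalIntegral.continuousOn_primitive_interval (hIcc ▸ hk.integrableOn_Icc)
  rw [(contDiffOn_integral_and_eqOn_iteratedDeriv isOpen_Ioo hanalytic hf hg
    (right_mem_Icc.mpr (by norm_num)) 2).2 h0]
  calc ∫ t in (-1 : ℝ)..1, f t * iteratedDeriv 3 (x t) 0
      = ∫ t in (-1 : ℝ)..1, ((Nat.factorial 3 : ℝ) * (f t * (∫ s in (-1 : ℝ)..t, g s) ^ 2) +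
          (Nat.factorial 3 : ℝ) * (f t * ∫ s in (-1 : ℝ)..t, f s)) :=
        intervalIntegral.integral_congr fun t ht => by
          rw [iteratedDeriv_three_slice_zero isOpen_Ioo h0 hanalytic hf hg hfix' (hIcc ▸ ht)]
          simp only [Nat.factorial]
          ring
    _ = _ := by
      rw [intervalIntegral.integral_add, intervalIntegral.integral_const_mul,
        intervalIntegral.integral_const_mul] <;>
      refine ContinuousOn.intervalIntegrable (hIcc ▸ continuousOn_const.mul (hf.mul ?_))
      exacts [(hprimitive hg).pow 2, hprimitive hf]

/-- Let `f, g` be continuous on `[-1,1]` and let `x(t,ρ)` be analytic in `(t,ρ)` on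
`[-1,1] × (−ρ₀, ρ₀)`, with `x(t,0) = 0`, satisfying the fixed-point equation
`x(t,ρ) = ρ / (1 − ρ H(t,ρ))` where `H(t,ρ) = ∫_{-1}^t (f(s) x(s,ρ) + g(s)) ds`.
Then `∂³/∂ρ³ H(1,ρ) |_{ρ=0} = 3! ∫_{-1}^1 f(t) G(t)² dt + 3! ∫_{-1}^1 f(t) F(t) dt`,
where `G(t) = ∫_{-1}^t g(s) ds` and `F(t) = ∫_{-1}^t f(s) ds`. -/
theorem third_deriv_H_at_zero
    (f g : ℝ → ℝ)
    (hf : ContinuousOn f (Set.Icc (-1 : ℝ) 1))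
    (hg : ContinuousOn g (Set.Icc (-1 : ℝ) 1))
    (ρ₀ : ℝ) (hρ₀ : 0 < ρ₀)
    (x : ℝ → ℝ → ℝ)
    (hanalytic : AnalyticOnNhd ℝ (fun p : ℝ × ℝ => x p.1 p.2)
      (Set.Icc (-1 : ℝ) 1 ×ˢ Set.Ioo (-ρ₀) ρ₀))
    (hzero : ∀ t ∈ Set.Icc (-1 : ℝ) 1, x t 0 = 0)
    (hfix : ∀ ρ : ℝ, |ρ| < ρ₀ → ∀ t ∈ Set.Icc (-1 : ℝ) 1,
      x t ρ = ρ / (1 - ρ * ∫ s in (-1 : ℝ)..t, (f s * x s ρ + g s))) :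
    iteratedDeriv 3 (fun ρ : ℝ => ∫ t in (-1 : ℝ)..1, (f t * x t ρ + g t)) 0 =
      (Nat.factorial 3 : ℝ) * (∫ t in (-1 : ℝ)..1, f t * (∫ s in (-1 : ℝ)..t, g s) ^ 2) +
      (Nat.factorial 3 : ℝ) * (∫ t in (-1 : ℝ)..1, f t * ∫ s in (-1 : ℝ)..t, f s) :=
  third_deriv_H_at_zero_general f g hf hg ρ₀ hρ₀ x hanalytic hfix
end

section
/- For every positive integer n, the determinant of the 3×3 matrix M with rows (1, 1/3, 1/5), (1/(1+n), 1/(3(3+n)), 1/(5(5+n))), and (1/((1+2n)(1+n)), 1/(3(3+2n)(3+n)), 1/(5(5+2n)(5+n))) equals −16 / (15(n+1)(n+3)(n+5)(1+2n)(3+2n)(5+2n)); in particular M is nonsingular. -/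
/-!
Column `t ∈ {1, 3, 5}` of the matrix is `(1/t, 1/(t(t+n)), 1/(t(t+n)(t+2n)))`. Pulling the factor
`1/(t(t+n)(t+2n))` out of each column leaves the matrix with columns `((t+n)(t+2n), t+2n, 1)`, which
row operations turn into a Vandermonde matrix in `1, 3, 5`; its determinant `-(2·4·2) = -16` does not
depend on `n`.
-/

open Matrix

section
variable {K : Type*} [Field K]

/- The row operations `R₁ ↦ R₁ - (x + y) R₂ + y² R₃` and `R₂ ↦ R₂ - y R₃` give the rows
`(t²)`, `(t)`, `(1)` over `t = a, b, c`: a Vandermonde matrix with its rows reversed. -/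
theorem det_shifted_vandermonde (a b c x y : K) :
    !![(a + x) * (a + y), (b + x) * (b + y), (c + x) * (c + y);
      a + y, b + y, c + y;
      1, 1, 1].det = -((b - a) * (c - a) * (c - b)) := by
  rw [det_fin_three]
  simp only [of_apply, cons_val', cons_val_zero, cons_val_one, cons_val_two, empty_val',
    cons_val_fin_one, tail_cons, vecHead]
  ring

theorem det_inv_shifted_products (a b c x y : K) (ha : a * (a + x) * (a + y) ≠ 0)
    (hb : b * (b + x) * (b + y) ≠ 0) (hc : c * (c + x) * (c + y) ≠ 0) :
    !![a⁻¹, b⁻¹, c⁻¹;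
      (a * (a + x))⁻¹, (b * (b + x))⁻¹, (c * (c + x))⁻¹;
      (a * (a + x) * (a + y))⁻¹, (b * (b + x) * (b + y))⁻¹, (c * (c + x) * (c + y))⁻¹].det =
      -((b - a) * (c - a) * (c - b)) /
        (a * (a + x) * (a + y) * (b * (b + x) * (b + y)) * (c * (c + x) * (c + y))) := by
  have hfactor : !![a⁻¹, b⁻¹, c⁻¹;
      (a * (a + x))⁻¹, (b * (b + x))⁻¹, (c * (c + x))⁻¹;
      (a * (a + x) * (a + y))⁻¹, (b * (b + x) * (b + y))⁻¹, (c * (c + x) * (c + y))⁻¹] =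
      !![(a + x) * (a + y), (b + x) * (b + y), (c + x) * (c + y);
        a + y, b + y, c + y;
        1, 1, 1] *
      diagonal ![(a * (a + x) * (a + y))⁻¹, (b * (b + x) * (b + y))⁻¹,
        (c * (c + x) * (c + y))⁻¹] := by
    simp only [mul_ne_zero_iff] at ha hb hc
    obtain ⟨⟨_, _⟩, _⟩ := ha
    obtain ⟨⟨_, _⟩, _⟩ := hb
    obtain ⟨⟨_, _⟩, _⟩ := hc
    ext i j
    fin_cases i <;> fin_cases j <;>
      simp only [mul_diagonal, of_apply, cons_val', cons_val_zero, cons_val_one, cons_val_two,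
        empty_val', cons_val_fin_one, Fin.zero_eta, Fin.mk_one, Fin.reduceFinMk, Fin.isValue,
        tail_cons, vecHead] <;>
      field_simp
  rw [hfactor, det_mul, det_shifted_vandermonde, det_diagonal, Fin.prod_univ_three]
  simp only [cons_val_zero, cons_val_one, cons_val_two, tail_cons, head_cons, div_eq_mul_inv,
    mul_inv]

end

theorem det_moment_matrix_general (n : ℕ) :
    (!![(1 : ℝ), 1 / 3, 1 / 5;
        1 / (1 + (n : ℝ)), 1 / (3 * (3 + (n : ℝ))), 1 / (5 * (5 + (n : ℝ)));
        1 / ((1 + 2 * (n : ℝ)) * (1 + (n : ℝ))), 1 / (3 * (3 + 2 * (n : ℝ)) * (3 + (n : ℝ))),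
          1 / (5 * (5 + 2 * (n : ℝ)) * (5 + (n : ℝ)))]).det =
      -16 / (15 * ((n : ℝ) + 1) * ((n : ℝ) + 3) * ((n : ℝ) + 5) *
        (1 + 2 * (n : ℝ)) * (3 + 2 * (n : ℝ)) * (5 + 2 * (n : ℝ))) ∧
    (!![(1 : ℝ), 1 / 3, 1 / 5;
        1 / (1 + (n : ℝ)), 1 / (3 * (3 + (n : ℝ))), 1 / (5 * (5 + (n : ℝ)));
        1 / ((1 + 2 * (n : ℝ)) * (1 + (n : ℝ))), 1 / (3 * (3 + 2 * (n : ℝ)) * (3 + (n : ℝ))),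
          1 / (5 * (5 + 2 * (n : ℝ)) * (5 + (n : ℝ)))]).det ≠ 0 := by
  refine (fun h : _ = _ => ⟨h, h ▸ div_ne_zero (by norm_num) (by positivity)⟩) ?_
  convert det_inv_shifted_products (1 : ℝ) 3 5 n (2 * n) (by positivity) (by positivity)
    (by positivity) using 1
  · congr 1
    congr <;> ring
  · ring

/-- For every positive integer `n`, the determinant of the `3×3` matrix `M` with rows
`(1, 1/3, 1/5)`, `(1/(1+n), 1/(3(3+n)), 1/(5(5+n)))` and
`(1/((1+2n)(1+n)), 1/(3(3+2n)(3+n)), 1/(5(5+2n)(5+n)))` equals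
`−16/(15(n+1)(n+3)(n+5)(1+2n)(3+2n)(5+2n))`; in particular `M` is nonsingular. -/
theorem det_moment_matrix (n : ℕ) (hn : 0 < n) :
    (!![(1 : ℝ), 1 / 3, 1 / 5;
        1 / (1 + (n : ℝ)), 1 / (3 * (3 + (n : ℝ))), 1 / (5 * (5 + (n : ℝ)));
        1 / ((1 + 2 * (n : ℝ)) * (1 + (n : ℝ))), 1 / (3 * (3 + 2 * (n : ℝ)) * (3 + (n : ℝ))),
          1 / (5 * (5 + 2 * (n : ℝ)) * (5 + (n : ℝ)))]).det =
      -16 / (15 * ((n : ℝ) + 1) * ((n : ℝ) + 3) * ((n : ℝ) + 5) *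
        (1 + 2 * (n : ℝ)) * (3 + 2 * (n : ℝ)) * (5 + 2 * (n : ℝ))) ∧
    (!![(1 : ℝ), 1 / 3, 1 / 5;
        1 / (1 + (n : ℝ)), 1 / (3 * (3 + (n : ℝ))), 1 / (5 * (5 + (n : ℝ)));
        1 / ((1 + 2 * (n : ℝ)) * (1 + (n : ℝ))), 1 / (3 * (3 + 2 * (n : ℝ)) * (3 + (n : ℝ))),
          1 / (5 * (5 + 2 * (n : ℝ)) * (5 + (n : ℝ)))]).det ≠ 0 :=
  det_moment_matrix_general n
end

section
/- Let f, g be continuous on [-1,1]. Then there exists ρ_0 > 0 such that for every ρ with |ρ| ≤ ρ_0 there is a unique continuous function x : [-1,1] → ℝ with sup_{t ∈ [-1,1]} |x(t)| ≤ 1 satisfying the integral equation x(t) = ρ / (1 − ρ ∫_{-1}^t (f(s)x(s) + g(s)) ds) for all t ∈ [-1,1]; moreover this x solves the Abel equation x'(t) = f(t)x(t)^3 + g(t)x(t)^2 with x(-1) = ρ. -/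
open MeasureTheory intervalIntegral

/-- `x` satisfies, on `[-1,1]`, the integral equation
`x(t) = ρ / (1 − ρ ∫_{-1}^t (f(s) x(s) + g(s)) ds)`, is continuous on `[-1,1]`
and bounded there by `1` in absolute value. -/
def IsIntegralSolution (f g : ℝ → ℝ) (ρ : ℝ) (x : ℝ → ℝ) : Prop :=
  ContinuousOn x (Set.Icc (-1 : ℝ) 1) ∧
  (∀ t ∈ Set.Icc (-1 : ℝ) 1, |x t| ≤ 1) ∧
  ∀ t ∈ Set.Icc (-1 : ℝ) 1,
    x t = ρ / (1 - ρ * ∫ s in (-1 : ℝ)..t, (f s * x s + g s))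

section AbelAux

lemma abel_den_ge (C ρ t : ℝ) (φ : ℝ → ℝ) (hC : 1 ≤ C)
    (hρ : |ρ| ≤ 1 / (4 * C)) (ht : t ∈ Set.Icc (-1:ℝ) 1)
    (hb : ∀ s ∈ Set.Icc (-1:ℝ) 1, |φ s| ≤ C) :
    1/2 ≤ 1 - ρ * ∫ s in (-1:ℝ)..t, φ s := by
  have hC0 : (0:ℝ) < C := lt_of_lt_of_le one_pos hC
  have hint : |∫ s in (-1:ℝ)..t, φ s| ≤ 2 * C := by
    have h1 : ∀ s ∈ Set.uIoc (-1:ℝ) t, ‖φ s‖ ≤ C := by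
      intro s hs
      rw [Set.uIoc_of_le ht.1] at hs
      exact hb s ⟨le_of_lt hs.1, hs.2.trans ht.2⟩
    have h2 := intervalIntegral.norm_integral_le_of_norm_le_const h1
    have habs : |t - (-1)| ≤ 2 := by
      rw [abs_le]; constructor <;> nlinarith [ht.1, ht.2]
    calc |∫ s in (-1:ℝ)..t, φ s| ≤ C * |t - (-1)| := h2
      _ ≤ C * 2 := by nlinarith
      _ = 2 * C := by ring
  have h3 : |ρ * ∫ s in (-1:ℝ)..t, φ s| ≤ 1/2 := by
    rw [abs_mul]
    calc |ρ| * |∫ s in (-1:ℝ)..t, φ s| ≤ (1/(4*C)) * (2*C) :=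
          mul_le_mul hρ hint (abs_nonneg _) (by positivity)
      _ = 1/2 := by field_simp; ring
  have h2 := le_abs_self (ρ * ∫ s in (-1:ℝ)..t, φ s)
  linarith

/-- Pointwise contraction estimate for the Abel operator. -/
lemma abel_diff_est (f g : ℝ → ℝ) (C ρ t d : ℝ) (x y : ℝ → ℝ)
    (hC : 1 ≤ C) (hρ : |ρ| ≤ 1/(4*C)) (ht : t ∈ Set.Icc (-1:ℝ) 1)
    (hfC : ∀ s ∈ Set.Icc (-1:ℝ) 1, |f s| ≤ C)
    (hbx : ∀ s ∈ Set.Icc (-1:ℝ) 1, |f s * x s + g s| ≤ C)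
    (hby : ∀ s ∈ Set.Icc (-1:ℝ) 1, |f s * y s + g s| ≤ C)
    (hxi : IntervalIntegrable (fun s => f s * x s + g s) volume (-1) t)
    (hyi : IntervalIntegrable (fun s => f s * y s + g s) volume (-1) t)
    (hd : 0 ≤ d) (hxy : ∀ s ∈ Set.Icc (-1:ℝ) 1, |x s - y s| ≤ d) :
    |ρ / (1 - ρ * ∫ s in (-1:ℝ)..t, (f s * x s + g s))
      - ρ / (1 - ρ * ∫ s in (-1:ℝ)..t, (f s * y s + g s))| ≤ 1/2 * d := by
  have hC0 : (0:ℝ) < C := lt_of_lt_of_le one_pos hC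
  set Ix := ∫ s in (-1:ℝ)..t, (f s * x s + g s) with hIx
  set Iy := ∫ s in (-1:ℝ)..t, (f s * y s + g s) with hIy
  have ha : (1:ℝ)/2 ≤ 1 - ρ * Ix := abel_den_ge C ρ t _ hC hρ ht hbx
  have hb : (1:ℝ)/2 ≤ 1 - ρ * Iy := abel_den_ge C ρ t _ hC hρ ht hby
  set a := 1 - ρ * Ix with hadef
  set b := 1 - ρ * Iy with hbdef
  have ha0 : a ≠ 0 := by intro h; rw [h] at ha; linarith
  have hb0 : b ≠ 0 := by intro h; rw [h] at hb; linarith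
  have hJ : |Ix - Iy| ≤ 2 * C * d := by
    have hsub : Ix - Iy = ∫ s in (-1:ℝ)..t, ((f s * x s + g s) - (f s * y s + g s)) :=
      (intervalIntegral.integral_sub hxi hyi).symm
    rw [hsub]
    have h1 : ∀ s ∈ Set.uIoc (-1:ℝ) t, ‖(f s * x s + g s) - (f s * y s + g s)‖ ≤ C * d := by
      intro s hs
      rw [Set.uIoc_of_le ht.1] at hs
      have hsI : s ∈ Set.Icc (-1:ℝ) 1 := ⟨le_of_lt hs.1, hs.2.trans ht.2⟩
      have heq2 : (f s * x s + g s) - (f s * y s + g s) = f s * (x s - y s) := by ring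
      rw [Real.norm_eq_abs, heq2, abs_mul]
      exact mul_le_mul (hfC s hsI) (hxy s hsI) (abs_nonneg _)
        (le_trans (abs_nonneg _) (hfC s hsI))
    have habs : |t - (-1)| ≤ 2 := by
      rw [abs_le]; constructor <;> nlinarith [ht.1, ht.2]
    calc ‖∫ s in (-1:ℝ)..t, ((f s * x s + g s) - (f s * y s + g s))‖
        ≤ C * d * |t - (-1)| := intervalIntegral.norm_integral_le_of_norm_le_const h1
      _ ≤ C * d * 2 := by nlinarith [mul_nonneg hC0.le hd]
      _ = 2 * C * d := by ring
  have hba : b - a = ρ * (Ix - Iy) := by rw [hadef, hbdef]; ring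
  have heq : ρ / a - ρ / b = ρ * (ρ * (Ix - Iy)) / (a * b) := by
    have h5 : ρ / a - ρ / b = ρ * (b - a) / (a * b) := by field_simp
    rw [h5, hba]
  rw [heq]
  have hX : |ρ| * (|ρ| * |Ix - Iy|) ≤ d / 8 := by
    have h2 : |ρ| * |Ix - Iy| ≤ (1/(4*C)) * (2*C*d) :=
      mul_le_mul hρ hJ (abs_nonneg _) (by positivity)
    have h1 : |ρ| * (|ρ| * |Ix - Iy|) ≤ (1/(4*C)) * ((1/(4*C)) * (2*C*d)) :=
      mul_le_mul hρ h2 (by positivity) (by positivity)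
    have h3 : (1/(4*C)) * ((1/(4*C)) * (2*C*d)) = d / (8*C) := by field_simp; ring
    have h4 : d / (8*C) ≤ d / 8 :=
      div_le_div_of_nonneg_left hd (by norm_num) (by linarith)
    linarith [h3 ▸ h1]
  have hab4 : (1:ℝ)/4 ≤ a * b := by nlinarith
  have hab0 : (0:ℝ) < a * b := by nlinarith
  rw [abs_div, abs_of_pos hab0, abs_mul, abs_mul]
  calc |ρ| * (|ρ| * |Ix - Iy|) / (a * b) ≤ (d/8) / (a*b) :=
        (div_le_div_iff_of_pos_right hab0).mpr hX
    _ ≤ (d/8) / (1/4) := div_le_div_of_nonneg_left (by positivity) (by norm_num) hab4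
    _ = 1/2 * d := by ring

noncomputable def abelProj : ℝ → ↑(Set.Icc (-1:ℝ) 1) := Set.projIcc (-1) 1 (by norm_num)

noncomputable def abelExt (f : ℝ → ℝ) : ℝ → ℝ := fun s => f ↑(abelProj s)

lemma abelProj_mem (s : ℝ) : ↑(abelProj s) ∈ Set.Icc (-1:ℝ) 1 := (abelProj s).2

lemma abelProj_of_mem {s : ℝ} (hs : s ∈ Set.Icc (-1:ℝ) 1) : (↑(abelProj s) : ℝ) = s := by
  rw [abelProj, Set.projIcc_of_mem _ hs]

lemma abelExt_eq {f : ℝ → ℝ} {s : ℝ} (hs : s ∈ Set.Icc (-1:ℝ) 1) : abelExt f s = f s := by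
  rw [abelExt, abelProj_of_mem hs]

lemma abelExt_cont {f : ℝ → ℝ} (hf : ContinuousOn f (Set.Icc (-1:ℝ) 1)) :
    Continuous (abelExt f) :=
  hf.restrict.comp continuous_projIcc

noncomputable def abelLift (z : C(↑(Set.Icc (-1:ℝ) 1), ℝ)) : ℝ → ℝ := fun s => z (abelProj s)

lemma abelLift_cont (z : C(↑(Set.Icc (-1:ℝ) 1), ℝ)) : Continuous (abelLift z) :=
  z.continuous.comp continuous_projIcc

end AbelAux

/-- For `f, g` continuous on `[-1,1]` there is `ρ₀ > 0` such that for every `|ρ| ≤ ρ₀`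
the integral equation `x(t) = ρ / (1 − ρ ∫_{-1}^t (f(s)x(s) + g(s)) ds)` has a unique
continuous solution with `sup |x| ≤ 1` on `[-1,1]`; moreover this solution solves the
Abel equation `x' = f(t) x^3 + g(t) x^2` with `x(-1) = ρ`. -/
theorem existence_uniqueness_integral_equation
    (f g : ℝ → ℝ)
    (hf : ContinuousOn f (Set.Icc (-1 : ℝ) 1))
    (hg : ContinuousOn g (Set.Icc (-1 : ℝ) 1)) :
    ∃ ρ₀ > (0 : ℝ), ∀ ρ : ℝ, |ρ| ≤ ρ₀ →
      (∃ x : ℝ → ℝ, IsIntegralSolution f g ρ x) ∧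
      (∀ x y : ℝ → ℝ, IsIntegralSolution f g ρ x → IsIntegralSolution f g ρ y →
        Set.EqOn x y (Set.Icc (-1 : ℝ) 1)) ∧
      (∀ x : ℝ → ℝ, IsIntegralSolution f g ρ x →
        x (-1) = ρ ∧ ∀ t ∈ Set.Icc (-1 : ℝ) 1,
          HasDerivWithinAt x (f t * x t ^ 3 + g t * x t ^ 2) (Set.Icc (-1 : ℝ) 1) t) := by
  obtain ⟨Cf, hCf⟩ := isCompact_Icc.exists_bound_of_continuousOn hf
  obtain ⟨Cg, hCg⟩ := isCompact_Icc.exists_bound_of_continuousOn hg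
  simp only [Real.norm_eq_abs] at hCf hCg
  set C : ℝ := max (Cf + Cg) 1 with hCdef
  have hC : 1 ≤ C := le_max_right _ _
  have hC0 : (0:ℝ) < C := lt_of_lt_of_le one_pos hC
  have h0mem : (0:ℝ) ∈ Set.Icc (-1:ℝ) 1 := by norm_num
  have hCf0 : 0 ≤ Cf := le_trans (abs_nonneg (f 0)) (hCf 0 h0mem)
  have hCg0 : 0 ≤ Cg := le_trans (abs_nonneg (g 0)) (hCg 0 h0mem)
  have hCfg : Cf + Cg ≤ C := le_max_left _ _
  have hfC : ∀ s ∈ Set.Icc (-1:ℝ) 1, |f s| ≤ C := fun s hs => by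
    have := hCf s hs; linarith
  have hComb : ∀ x : ℝ → ℝ, (∀ s ∈ Set.Icc (-1:ℝ) 1, |x s| ≤ 1) →
      ∀ s ∈ Set.Icc (-1:ℝ) 1, |f s * x s + g s| ≤ C := by
    intro x hx s hs
    calc |f s * x s + g s| ≤ |f s| * |x s| + |g s| := by
          rw [← abs_mul]; exact abs_add_le _ _
      _ ≤ Cf * 1 + Cg := by
          have h1 := hCf s hs
          have h2 := hCg s hs
          have h3 := hx s hs
          have h4 := abs_nonneg (x s)
          nlinarith
      _ ≤ C := by linarith
  refine ⟨1/(4*C), by positivity, fun ρ hρ => ?_⟩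
  -- UNIQUENESS (proved first, reused nowhere but stated second)
  have key_uniq : ∀ x y : ℝ → ℝ, IsIntegralSolution f g ρ x → IsIntegralSolution f g ρ y →
      Set.EqOn x y (Set.Icc (-1 : ℝ) 1) := by
    rintro x y ⟨hxc, hxb, hxe⟩ ⟨hyc, hyb, hye⟩
    have hcont : ContinuousOn (fun t => |x t - y t|) (Set.Icc (-1:ℝ) 1) := (hxc.sub hyc).abs
    obtain ⟨t₀, ht₀, hmax⟩ := isCompact_Icc.exists_isMaxOn
      (Set.nonempty_Icc.2 (by norm_num)) hcont
    have hint : ∀ (w : ℝ → ℝ), ContinuousOn w (Set.Icc (-1:ℝ) 1) → ∀ t ∈ Set.Icc (-1:ℝ) 1,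
        IntervalIntegrable (fun s => f s * w s + g s) volume (-1) t := by
      intro w hw t ht
      apply ContinuousOn.intervalIntegrable
      rw [Set.uIcc_of_le ht.1]
      have hsub : Set.Icc (-1:ℝ) t ⊆ Set.Icc (-1:ℝ) 1 :=
        Set.Icc_subset_Icc le_rfl ht.2
      exact ((hf.mono hsub).mul (hw.mono hsub)).add (hg.mono hsub)
    have hest : ∀ t ∈ Set.Icc (-1:ℝ) 1, |x t - y t| ≤ 1/2 * |x t₀ - y t₀| := by
      intro t ht
      rw [hxe t ht, hye t ht]
      exact abel_diff_est f g C ρ t _ x y hC hρ ht hfC (hComb x hxb) (hComb y hyb)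
        (hint x hxc t ht) (hint y hyc t ht) (abs_nonneg _) (fun s hs => hmax hs)
    have h0 : |x t₀ - y t₀| = 0 := by
      have := hest t₀ ht₀
      have h1 := abs_nonneg (x t₀ - y t₀)
      linarith
    intro t ht
    have := hest t ht
    rw [h0] at this
    have h1 := abs_nonneg (x t - y t)
    have : |x t - y t| = 0 := by linarith
    rw [abs_eq_zero, sub_eq_zero] at this
    exact this
  -- DERIVATIVE
  have key_der : ∀ x : ℝ → ℝ, IsIntegralSolution f g ρ x →
      x (-1) = ρ ∧ ∀ t ∈ Set.Icc (-1 : ℝ) 1,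
        HasDerivWithinAt x (f t * x t ^ 3 + g t * x t ^ 2) (Set.Icc (-1 : ℝ) 1) t := by
    rintro x ⟨hxc, hxb, hxe⟩
    have hm1 : (-1:ℝ) ∈ Set.Icc (-1:ℝ) 1 := by norm_num
    constructor
    · have h := hxe (-1) hm1
      rw [intervalIntegral.integral_same] at h
      simpa using h
    · intro t ht
      set φ : ℝ → ℝ := fun s => abelExt f s * abelExt x s + abelExt g s with hφ
      have hφc : Continuous φ := ((abelExt_cont hf).mul (abelExt_cont hxc)).add (abelExt_cont hg)
      have hφC : ∀ s ∈ Set.Icc (-1:ℝ) 1, |φ s| ≤ C := by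
        intro s _
        have := hComb x hxb ↑(abelProj s) (abelProj_mem s)
        simpa [hφ, abelExt] using this
      set P : ℝ → ℝ := fun u => ∫ s in (-1:ℝ)..u, φ s with hP
      have hPd : HasDerivAt P (φ t) t :=
        intervalIntegral.integral_hasDerivAt_right (hφc.intervalIntegrable _ _)
          (hφc.stronglyMeasurableAtFilter _ _) hφc.continuousAt
      have hIeq : ∀ u ∈ Set.Icc (-1:ℝ) 1,
          (∫ s in (-1:ℝ)..u, (f s * x s + g s)) = P u := by
        intro u hu
        apply intervalIntegral.integral_congr
        intro s hs
        rw [Set.uIcc_of_le hu.1] at hs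
        have hsI : s ∈ Set.Icc (-1:ℝ) 1 := ⟨hs.1, hs.2.trans hu.2⟩
        simp [hφ, abelExt_eq hsI]
      have hden : (1:ℝ)/2 ≤ 1 - ρ * P t := abel_den_ge C ρ t φ hC hρ ht hφC
      have hden0 : (1 - ρ * P t) ≠ 0 := by intro h; rw [h] at hden; linarith
      have hD : HasDerivAt (fun u => ρ / (1 - ρ * P u))
          ((0 * (1 - ρ * P t) - ρ * (-(ρ * φ t))) / (1 - ρ * P t)^2) t :=
        (hasDerivAt_const t ρ).div ((hPd.const_mul ρ).const_sub 1) hden0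
      have hxt : x t = ρ / (1 - ρ * P t) := by rw [hxe t ht, hIeq t ht]
      have hφt : φ t = f t * x t + g t := by simp [hφ, abelExt_eq ht]
      have hval : (0 * (1 - ρ * P t) - ρ * (-(ρ * φ t))) / (1 - ρ * P t)^2
          = f t * x t ^ 3 + g t * x t ^ 2 := by
        rw [hφt, hxt]
        field_simp
        ring
      rw [hval] at hD
      exact hD.hasDerivWithinAt.congr
        (fun u hu => by rw [hxe u hu, hIeq u hu]) (by rw [hxe t ht, hIeq t ht])
  -- EXISTENCE
  have key_exists : ∃ x : ℝ → ℝ, IsIntegralSolution f g ρ x := by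
    set B := Metric.closedBall (0 : C(↑(Set.Icc (-1:ℝ) 1), ℝ)) 1 with hB
    haveI : CompleteSpace ↥B := Metric.isClosed_closedBall.completeSpace_coe
    have hnormB : ∀ w : C(↑(Set.Icc (-1:ℝ) 1), ℝ), w ∈ B → ‖w‖ ≤ 1 := by
      intro w hw
      rw [hB, Metric.mem_closedBall, dist_zero_right] at hw
      exact hw
    have hmemB : ∀ w : C(↑(Set.Icc (-1:ℝ) 1), ℝ), ‖w‖ ≤ 1 → w ∈ B := by
      intro w hw
      rw [hB, Metric.mem_closedBall, dist_zero_right]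
      exact hw
    haveI : Nonempty ↥B := ⟨⟨0, Metric.mem_closedBall_self (by norm_num)⟩⟩
    have hball : ∀ z : ↥B, ∀ s : ℝ, |abelLift ↑z s| ≤ 1 := by
      intro z s
      have hz := hnormB _ z.2
      calc |abelLift ↑z s| = ‖(z : C(↑(Set.Icc (-1:ℝ) 1), ℝ)) (abelProj s)‖ := rfl
        _ ≤ ‖(z : C(↑(Set.Icc (-1:ℝ) 1), ℝ))‖ := ContinuousMap.norm_coe_le_norm _ _
        _ ≤ 1 := hz
    have hΨC : ∀ z : ↥B, ∀ s ∈ Set.Icc (-1:ℝ) 1,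
        |abelExt f s * abelLift ↑z s + abelExt g s| ≤ C := by
      intro z s _
      calc |abelExt f s * abelLift ↑z s + abelExt g s|
          ≤ |abelExt f s| * |abelLift ↑z s| + |abelExt g s| := by
            rw [← abs_mul]; exact abs_add_le _ _
        _ ≤ Cf * 1 + Cg := by
            have h1 : |abelExt f s| ≤ Cf := hCf _ (abelProj_mem s)
            have h2 : |abelExt g s| ≤ Cg := hCg _ (abelProj_mem s)
            have h3 := hball z s
            have h4 := abs_nonneg (abelLift (↑z) s)
            nlinarith
        _ ≤ C := by linarith
    have hmain : ∀ z : ↥B, ∃ w : ↥B, ∀ t : ↑(Set.Icc (-1:ℝ) 1),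
        (w : C(_,ℝ)) t = ρ / (1 - ρ * ∫ s in (-1:ℝ)..(t:ℝ),
          (abelExt f s * abelLift ↑z s + abelExt g s)) := by
      intro z
      have hΨc : Continuous (fun s => abelExt f s * abelLift ↑z s + abelExt g s) :=
        ((abelExt_cont hf).mul (abelLift_cont _)).add (abelExt_cont hg)
      have hPc : Continuous (fun u : ℝ => ∫ s in (-1:ℝ)..u,
          (abelExt f s * abelLift ↑z s + abelExt g s)) :=
        intervalIntegral.continuous_primitive (fun a b => hΨc.intervalIntegrable a b) (-1)
      have hden : ∀ t : ↑(Set.Icc (-1:ℝ) 1),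
          (1:ℝ)/2 ≤ 1 - ρ * ∫ s in (-1:ℝ)..(t:ℝ),
            (abelExt f s * abelLift ↑z s + abelExt g s) :=
        fun t => abel_den_ge C ρ t _ hC hρ t.2 (hΨC z)
      have hden0 : ∀ t : ↑(Set.Icc (-1:ℝ) 1),
          (1 - ρ * ∫ s in (-1:ℝ)..(t:ℝ),
            (abelExt f s * abelLift ↑z s + abelExt g s)) ≠ 0 := by
        intro t h
        have := hden t
        rw [h] at this; linarith
      refine ⟨⟨⟨fun t => ρ / (1 - ρ * ∫ s in (-1:ℝ)..(t:ℝ),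
        (abelExt f s * abelLift ↑z s + abelExt g s)), ?_⟩, ?_⟩, fun t => rfl⟩
      · exact continuous_const.div
          (continuous_const.sub (continuous_const.mul (hPc.comp continuous_subtype_val))) hden0
      · apply hmemB
        rw [ContinuousMap.norm_le _ (by norm_num : (0:ℝ) ≤ 1)]
        intro t
        rw [Real.norm_eq_abs]
        show |ρ / (1 - ρ * ∫ s in (-1:ℝ)..(t:ℝ),
          (abelExt f s * abelLift ↑z s + abelExt g s))| ≤ 1
        set den := 1 - ρ * ∫ s in (-1:ℝ)..(t:ℝ),
          (abelExt f s * abelLift ↑z s + abelExt g s) with hdendef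
        have h1 : (1:ℝ)/2 ≤ den := hden t
        have h2 : (0:ℝ) < den := by linarith
        rw [abs_div, abs_of_pos h2]
        rw [div_le_one h2]
        calc |ρ| ≤ 1/(4*C) := hρ
          _ ≤ 1/2 := by
            apply div_le_div_of_nonneg_left (by norm_num) (by norm_num)
            linarith
          _ ≤ den := h1
    choose Tmap hTmap using hmain
    have hLip : ∀ z w : ↥B, dist (Tmap z) (Tmap w) ≤ 1/2 * dist z w := by
      intro z w
      rw [Subtype.dist_eq]
      rw [ContinuousMap.dist_le (by positivity)]
      intro t
      rw [Real.dist_eq, hTmap z t, hTmap w t]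
      have hΨcz : Continuous (fun s => abelExt f s * abelLift ↑z s + abelExt g s) :=
        ((abelExt_cont hf).mul (abelLift_cont _)).add (abelExt_cont hg)
      have hΨcw : Continuous (fun s => abelExt f s * abelLift ↑w s + abelExt g s) :=
        ((abelExt_cont hf).mul (abelLift_cont _)).add (abelExt_cont hg)
      apply abel_diff_est (abelExt f) (abelExt g) C ρ t (dist z w) (abelLift ↑z) (abelLift ↑w)
        hC hρ t.2
      · intro s hs
        rw [abelExt_eq hs]; exact hfC s hs
      · exact hΨC z
      · exact hΨC w
      · exact hΨcz.intervalIntegrable _ _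
      · exact hΨcw.intervalIntegrable _ _
      · exact dist_nonneg
      · intro s _
        calc |abelLift ↑z s - abelLift ↑w s|
            = dist ((z : C(↑(Set.Icc (-1:ℝ) 1), ℝ)) (abelProj s))
                ((w : C(↑(Set.Icc (-1:ℝ) 1), ℝ)) (abelProj s)) := by
              rw [Real.dist_eq]; rfl
          _ ≤ dist (z : C(↑(Set.Icc (-1:ℝ) 1), ℝ)) (w : C(↑(Set.Icc (-1:ℝ) 1), ℝ)) :=
              ContinuousMap.dist_apply_le_dist _
          _ = dist z w := (Subtype.dist_eq z w).symm
    have hcontr : ContractingWith (1/2 : NNReal) Tmap := by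
      constructor
      · rw [← NNReal.coe_lt_coe]; norm_num
      · apply LipschitzWith.of_dist_le_mul
        intro z w
        have h := hLip z w
        have hc : ((1/2 : NNReal) : ℝ) = 1/2 := by norm_num
        rw [hc]
        exact h
    set z₀ := hcontr.fixedPoint Tmap with hz₀
    have hfix : Tmap z₀ = z₀ := hcontr.fixedPoint_isFixedPt
    refine ⟨abelLift ↑z₀, (abelLift_cont _).continuousOn, fun t _ => hball z₀ t, ?_⟩
    intro t ht
    have h1 : abelLift ↑z₀ t = (Tmap z₀ : C(_,ℝ)) (abelProj t) := by
      rw [hfix]; rfl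
    rw [h1, hTmap z₀ (abelProj t)]
    have h2 : ((abelProj t : ↑(Set.Icc (-1:ℝ) 1)) : ℝ) = t := abelProj_of_mem ht
    rw [h2]
    have hieq : (∫ s in (-1:ℝ)..t, (abelExt f s * abelLift ↑z₀ s + abelExt g s))
        = ∫ s in (-1:ℝ)..t, (f s * abelLift ↑z₀ s + g s) := by
      apply intervalIntegral.integral_congr
      intro s hs
      rw [Set.uIcc_of_le ht.1] at hs
      have hsI : s ∈ Set.Icc (-1:ℝ) 1 := ⟨hs.1, hs.2.trans ht.2⟩
      simp only [abelExt_eq hsI]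
    rw [hieq]
  exact ⟨key_exists, key_uniq, key_der⟩
end
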